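/- arXiv:2303.14462 — 4 statements merged into one kernel-verified Lean document; each statement's English description precedes it below -/
import Mathlib

section
/- Let λ, μ be finite nonnegative Borel measures on ℝ^d with compact support and λ(ℝ^d) = μ(ℝ^d), let π be any admissible plan for (λ, μ), let R > 0, and let φ be a continuously differentiable function on the closed ball B̄_R. Then ∫_Ω ∫_σ^τ |Ẋ(t) − ∇φ(X(t))|² dt dπ = ∫_Ω ∫_σ^τ |Ẋ(t)|² dt dπ + ∫_Ω ∫_σ^τ |∇φ(X(t))|² dt dπ − 2 ∫_{B_R} φ d(μ − λ) − 2 ∫_{∂B_R} φ d(g − f). -/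
open MeasureTheory Metric Set
open scoped ENNReal RealInnerProductSpace

noncomputable section

abbrev Euc (d : ℕ) : Type := EuclideanSpace ℝ (Fin d)

/-- `π` is an admissible transport plan (coupling) between `lam` and `mu`. -/
def IsCoupling {d : ℕ} (π : Measure (Euc d × Euc d)) (lam mu : Measure (Euc d)) : Prop :=
  π.map Prod.fst = lam ∧ π.map Prod.snd = mu

/-- Squared quadratic Wasserstein distance. -/
def W2 {d : ℕ} (lam mu : Measure (Euc d)) : ℝ≥0∞ :=
  ⨅ (π : Measure (Euc d × Euc d)) (_ : IsCoupling π lam mu),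
    ∫⁻ p, ENNReal.ofReal (‖p.1 - p.2‖ ^ 2) ∂π

/-- `π` is an optimal plan for `W(lam, mu)`. -/
def IsOptimal {d : ℕ} (π : Measure (Euc d × Euc d)) (lam mu : Measure (Euc d)) : Prop :=
  IsCoupling π lam mu ∧ (∫⁻ p, ENNReal.ofReal (‖p.1 - p.2‖ ^ 2) ∂π) = W2 lam mu

/-- A measure has compact support. -/
def HasCompactSupp {d : ℕ} (ν : Measure (Euc d)) : Prop :=
  ∃ K : Set (Euc d), IsCompact K ∧ ν Kᶜ = 0

/-- The straight trajectory `X(t) = t y + (1-t) x`. -/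
def traj {d : ℕ} (x y : Euc d) (t : ℝ) : Euc d := t • y + (1 - t) • x

/-- Trajectories spending some time in the closed ball of radius `R`. -/
def OmegaAll {d : ℕ} (R : ℝ) : Set (Euc d × Euc d) :=
  {p | ∃ t ∈ Icc (0:ℝ) 1, traj p.1 p.2 t ∈ closedBall (0 : Euc d) R}

/-- Trajectories starting or ending in `B_4` and spending some time in the closed
ball of radius `R`. -/
def Omega4 {d : ℕ} (R : ℝ) : Set (Euc d × Euc d) :=
  ((ball (0 : Euc d) 4 ×ˢ (univ : Set (Euc d))) ∪ ((univ : Set (Euc d)) ×ˢ ball (0 : Euc d) 4)) ∩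
    OmegaAll R

/-- Entering time `σ`. -/
def entryTime {d : ℕ} (R : ℝ) (p : Euc d × Euc d) : ℝ :=
  sInf {t ∈ Icc (0:ℝ) 1 | traj p.1 p.2 t ∈ closedBall (0 : Euc d) R}

/-- Exiting time `τ`. -/
def exitTime {d : ℕ} (R : ℝ) (p : Euc d × Euc d) : ℝ :=
  sSup {t ∈ Icc (0:ℝ) 1 | traj p.1 p.2 t ∈ closedBall (0 : Euc d) R}

/-- The measure `f` of entering points on `∂B_R`. -/
def enterMeasure {d : ℕ} (Ω : Set (Euc d × Euc d)) (π : Measure (Euc d × Euc d)) (R : ℝ) :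
    Measure (Euc d) :=
  Measure.map (fun p => traj p.1 p.2 (entryTime R p))
    (π.restrict (Ω ∩ {p | traj p.1 p.2 (entryTime R p) ∈ sphere (0 : Euc d) R}))

/-- The measure `g` of exiting points on `∂B_R`. -/
def exitMeasure {d : ℕ} (Ω : Set (Euc d × Euc d)) (π : Measure (Euc d × Euc d)) (R : ℝ) :
    Measure (Euc d) :=
  Measure.map (fun p => traj p.1 p.2 (exitTime R p))
    (π.restrict (Ω ∩ {p | traj p.1 p.2 (exitTime R p) ∈ sphere (0 : Euc d) R}))

/-- Surface measure on the sphere `∂B_R`: the `(d-1)`-dimensional Hausdorff measure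
restricted to the sphere. -/
def sMeas (d : ℕ) (R : ℝ) : Measure (Euc d) :=
  (μH[(d : ℝ) - 1]).restrict (sphere (0 : Euc d) R)

/-- The Laplacian, as the divergence of the gradient. -/
def lap {d : ℕ} (φ : Euc d → ℝ) (x : Euc d) : ℝ :=
  ∑ i : Fin d, fderiv ℝ (fun y => gradient φ y i) x (EuclideanSpace.single i 1)

/-- Density of a measure on `B_5` relative to Lebesgue: `κ_λ = λ(B_5)/|B_5|`. -/
def kappa5 {d : ℕ} (lam : Measure (Euc d)) : ℝ :=
  (lam (ball 0 5)).toReal / (volume (ball (0 : Euc d) 5)).toReal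

/-- The local data term `D`. -/
def dataTerm {d : ℕ} (lam mu : Measure (Euc d)) : ℝ≥0∞ :=
  W2 (lam.restrict (ball 0 5)) (ENNReal.ofReal (kappa5 lam) • volume.restrict (ball 0 5)) +
    ENNReal.ofReal ((kappa5 lam - 1) ^ 2) +
  W2 (mu.restrict (ball 0 5)) (ENNReal.ofReal (kappa5 mu) • volume.restrict (ball 0 5)) +
    ENNReal.ofReal ((kappa5 mu - 1) ^ 2)

/-- The local energy `E`. -/
def energy {d : ℕ} (π : Measure (Euc d × Euc d)) : ℝ≥0∞ :=
  ∫⁻ p in (ball (0 : Euc d) 5 ×ˢ (univ : Set (Euc d))) ∪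
      ((univ : Set (Euc d)) ×ˢ ball (0 : Euc d) 5),
    ENNReal.ofReal (‖p.1 - p.2‖ ^ 2) ∂π

/-- Topological support of a measure. -/
def msupp {α : Type*} [TopologicalSpace α] [MeasurableSpace α] (ν : Measure α) : Set α :=
  {x | ∀ U : Set α, IsOpen U → x ∈ U → 0 < ν U}

namespace OrthAux

variable {d : ℕ} {R : ℝ}

def Tset (R : ℝ) (p : Euc d × Euc d) : Set ℝ :=
  {t ∈ Icc (0:ℝ) 1 | traj p.1 p.2 t ∈ closedBall (0 : Euc d) R}

lemma traj_eq (x y : Euc d) (t : ℝ) : traj x y t = x + t • (y - x) := by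
  simp only [traj, smul_sub, sub_smul, one_smul]; abel

lemma traj_zero (x y : Euc d) : traj x y 0 = x := by simp [traj_eq]

lemma traj_one (x y : Euc d) : traj x y 1 = y := by simp [traj]

lemma traj_self (x : Euc d) (t : ℝ) : traj x x t = x := by simp [traj_eq]

lemma cont_traj : Continuous fun q : (Euc d × Euc d) × ℝ => traj q.1.1 q.1.2 q.2 := by
  simp only [traj]; fun_prop

lemma cont_traj_t (x y : Euc d) : Continuous fun t : ℝ => traj x y t := by
  simp only [traj]; fun_prop

lemma hasDerivAt_traj (x y : Euc d) (t : ℝ) :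
    HasDerivAt (fun s => traj x y s) (y - x) t := by
  have h : HasDerivAt (fun s : ℝ => x + s • (y - x)) ((1:ℝ) • (y - x)) t :=
    ((hasDerivAt_id t).smul_const (y - x)).const_add x
  rw [one_smul] at h
  simpa only [← traj_eq] using h

lemma Tset_subset (p : Euc d × Euc d) : Tset R p ⊆ Icc (0:ℝ) 1 := fun _ ht => ht.1

lemma Tset_bddAbove (p : Euc d × Euc d) : BddAbove (Tset R p) := ⟨1, fun _ ht => ht.1.2⟩

lemma Tset_bddBelow (p : Euc d × Euc d) : BddBelow (Tset R p) := ⟨0, fun _ ht => ht.1.1⟩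

lemma Tset_isClosed (p : Euc d × Euc d) : IsClosed (Tset R p) := by
  have : Tset R p = Icc (0:ℝ) 1 ∩ (fun t => traj p.1 p.2 t) ⁻¹' closedBall (0:Euc d) R := rfl
  rw [this]
  exact isClosed_Icc.inter (IsClosed.preimage (cont_traj_t _ _) isClosed_closedBall)

lemma Tset_isCompact (p : Euc d × Euc d) : IsCompact (Tset R p) :=
  isCompact_Icc.of_isClosed_subset (Tset_isClosed p) (Tset_subset p)

lemma mem_omega_iff {p : Euc d × Euc d} : p ∈ OmegaAll (d := d) R ↔ (Tset R p).Nonempty := by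
  constructor
  · rintro ⟨t, ht, htb⟩; exact ⟨t, ht, htb⟩
  · rintro ⟨t, ht, htb⟩; exact ⟨t, ht, htb⟩

lemma Tset_empty {p : Euc d × Euc d} (hp : p ∉ OmegaAll (d := d) R) : Tset R p = ∅ := by
  rw [← not_nonempty_iff_eq_empty]
  exact fun h => hp (mem_omega_iff.2 h)

lemma entry_mem {p : Euc d × Euc d} (hp : p ∈ OmegaAll (d := d) R) :
    entryTime R p ∈ Tset R p :=
  (Tset_isCompact p).sInf_mem (mem_omega_iff.1 hp)

lemma exit_mem {p : Euc d × Euc d} (hp : p ∈ OmegaAll (d := d) R) :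
    exitTime R p ∈ Tset R p :=
  (Tset_isCompact p).sSup_mem (mem_omega_iff.1 hp)

lemma entry_le {p : Euc d × Euc d} {t : ℝ} (ht : t ∈ Tset R p) : entryTime R p ≤ t :=
  csInf_le (Tset_bddBelow p) ht

lemma le_exit {p : Euc d × Euc d} {t : ℝ} (ht : t ∈ Tset R p) : t ≤ exitTime R p :=
  le_csSup (Tset_bddAbove p) ht

lemma entry_nonneg (p : Euc d × Euc d) : 0 ≤ entryTime R p :=
  Real.sInf_nonneg fun _ ht => ht.1.1

lemma exit_nonneg (p : Euc d × Euc d) : 0 ≤ exitTime R p :=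
  Real.sSup_nonneg fun _ ht => ht.1.1

lemma exit_le_one (p : Euc d × Euc d) : exitTime R p ≤ 1 :=
  Real.sSup_le (fun _ ht => ht.1.2) zero_le_one

lemma entry_le_exit (p : Euc d × Euc d) : entryTime R p ≤ exitTime R p := by
  by_cases hp : p ∈ OmegaAll (d := d) R
  · exact entry_le (exit_mem hp)
  · have h := Tset_empty hp
    show sInf (Tset R p) ≤ sSup (Tset R p)
    rw [h, Real.sInf_empty, Real.sSup_empty]

end OrthAux

namespace OrthAux

variable {d : ℕ} {R : ℝ}

lemma isClosed_exists_mem {s : Set ℝ} (hs : IsCompact s) :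
    IsClosed {p : Euc d × Euc d | ∃ t ∈ s, traj p.1 p.2 t ∈ closedBall (0:Euc d) R} := by
  have hcs : CompactSpace s := isCompact_iff_compactSpace.mp hs
  have hmap : IsClosedMap (Prod.fst : (Euc d × Euc d) × s → Euc d × Euc d) :=
    isClosedMap_fst_of_compactSpace
  have hC : IsClosed {q : (Euc d × Euc d) × s | traj q.1.1 q.1.2 (q.2 : ℝ) ∈ closedBall (0:Euc d) R} := by
    have hcont : Continuous fun q : (Euc d × Euc d) × s => traj q.1.1 q.1.2 (q.2 : ℝ) :=
      cont_traj.comp (continuous_fst.prodMk (continuous_subtype_val.comp continuous_snd))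
    exact IsClosed.preimage hcont isClosed_closedBall
  have himg := hmap _ hC
  have heq : Prod.fst '' {q : (Euc d × Euc d) × s | traj q.1.1 q.1.2 (q.2 : ℝ) ∈ closedBall (0:Euc d) R}
      = {p : Euc d × Euc d | ∃ t ∈ s, traj p.1 p.2 t ∈ closedBall (0:Euc d) R} := by
    ext p
    constructor
    · rintro ⟨⟨p', t⟩, hq, rfl⟩; exact ⟨t, t.2, hq⟩
    · rintro ⟨t, hts, htb⟩; exact ⟨⟨p, ⟨t, hts⟩⟩, htb, rfl⟩
  rwa [heq] at himg

lemma isClosed_omega : IsClosed (OmegaAll (d := d) R) :=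
  isClosed_exists_mem isCompact_Icc

lemma measurable_entryTime : Measurable (entryTime R : Euc d × Euc d → ℝ) := by
  apply measurable_of_Iic
  intro a
  rcases lt_or_ge a 0 with ha | ha
  · have : (entryTime R : Euc d × Euc d → ℝ) ⁻¹' Iic a = ∅ := by
      ext p
      simp only [mem_preimage, mem_Iic, mem_empty_iff_false, iff_false, not_le]
      exact lt_of_lt_of_le ha (entry_nonneg p)
    rw [this]; exact MeasurableSet.empty
  · have : (entryTime R : Euc d × Euc d → ℝ) ⁻¹' Iic a =
        {p : Euc d × Euc d | ∃ t ∈ Icc (0:ℝ) (min a 1), traj p.1 p.2 t ∈ closedBall (0:Euc d) R}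
          ∪ (OmegaAll (d := d) R)ᶜ := by
      ext p
      simp only [mem_preimage, mem_Iic, mem_union, mem_setOf_eq, mem_compl_iff]
      constructor
      · intro h
        by_cases hp : p ∈ OmegaAll (d := d) R
        · left
          exact ⟨entryTime R p, ⟨entry_nonneg p, le_min h (entry_mem hp).1.2⟩, (entry_mem hp).2⟩
        · right; exact hp
      · rintro (⟨t, ⟨ht0, hta⟩, htb⟩ | hp)
        · have htT : t ∈ Tset R p := ⟨⟨ht0, hta.trans (min_le_right _ _)⟩, htb⟩
          exact (entry_le htT).trans (hta.trans (min_le_left _ _))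
        · have : Tset R p = ∅ := Tset_empty hp
          show sInf (Tset R p) ≤ a
          rw [this, Real.sInf_empty]; exact ha
    rw [this]
    exact ((isClosed_exists_mem isCompact_Icc).measurableSet).union
      isClosed_omega.measurableSet.compl

lemma measurable_exitTime : Measurable (exitTime R : Euc d × Euc d → ℝ) := by
  apply measurable_of_Ici
  intro a
  rcases le_or_gt a 0 with ha | ha
  · have : (exitTime R : Euc d × Euc d → ℝ) ⁻¹' Ici a = univ := by
      ext p
      simp only [mem_preimage, mem_Ici, mem_univ, iff_true]
      exact ha.trans (exit_nonneg p)
    rw [this]; exact MeasurableSet.univ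
  · have : (exitTime R : Euc d × Euc d → ℝ) ⁻¹' Ici a =
        {p : Euc d × Euc d | ∃ t ∈ Icc a 1, traj p.1 p.2 t ∈ closedBall (0:Euc d) R} := by
      ext p
      simp only [mem_preimage, mem_Ici, mem_setOf_eq]
      constructor
      · intro h
        have hp : p ∈ OmegaAll (d := d) R := by
          by_contra hp
          have : exitTime R p = 0 := by
            show sSup (Tset R p) = 0
            rw [Tset_empty hp, Real.sSup_empty]
          rw [this] at h
          exact absurd h (not_le.mpr ha)
        exact ⟨exitTime R p, ⟨h, (exit_mem hp).1.2⟩, (exit_mem hp).2⟩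
      · rintro ⟨t, ⟨hta, ht1⟩, htb⟩
        have htT : t ∈ Tset R p := ⟨⟨ha.le.trans hta, ht1⟩, htb⟩
        exact hta.trans (le_exit htT)
    rw [this]
    exact (isClosed_exists_mem isCompact_Icc).measurableSet

end OrthAux

namespace OrthAux

variable {d : ℕ} {R : ℝ}

open Filter Topology

lemma interior_cb (hR : 0 < R) : interior (closedBall (0:Euc d) R) = ball 0 R :=
  interior_closedBall (0:Euc d) hR.ne'

lemma traj_combo {x y : Euc d} {σ τ t : ℝ} (hlt : σ < τ) :
    traj x y t = ((t - σ)/(τ - σ)) • traj x y τ + (1 - (t - σ)/(τ - σ)) • traj x y σ := by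
  set a := (t - σ)/(τ - σ) with ha_def
  have hne : τ - σ ≠ 0 := sub_ne_zero.mpr hlt.ne'
  have ha : a * (τ - σ) = t - σ := div_mul_cancel₀ _ hne
  have hs : a * τ + (1 - a) * σ = t := by linear_combination ha
  rw [traj_eq, traj_eq, traj_eq, ← hs]
  module

lemma traj_mem_closedBall {p : Euc d × Euc d} (hp : p ∈ OmegaAll (d := d) R) {t : ℝ}
    (ht : t ∈ Icc (entryTime R p) (exitTime R p)) :
    traj p.1 p.2 t ∈ closedBall (0:Euc d) R := by
  rcases eq_or_lt_of_le (entry_le_exit p) with heq | hlt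
  · have : t = entryTime R p := le_antisymm (heq ▸ ht.2) ht.1
    rw [this]; exact (entry_mem hp).2
  · set a := (t - entryTime R p)/(exitTime R p - entryTime R p) with ha_def
    have h0 : 0 ≤ a := div_nonneg (by linarith [ht.1]) (by linarith)
    have h1 : a ≤ 1 := (div_le_one (by linarith)).mpr (by linarith [ht.2])
    rw [traj_combo hlt]
    exact convex_closedBall (0:Euc d) R (exit_mem hp).2 (entry_mem hp).2 h0 (by linarith) (by ring)

lemma traj_mem_ball (hR : 0 < R) {p : Euc d × Euc d} (hp : p ∈ OmegaAll (d := d) R)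
    (hxy : p.1 ≠ p.2) {t : ℝ} (ht : t ∈ Ioo (entryTime R p) (exitTime R p)) :
    traj p.1 p.2 t ∈ ball (0:Euc d) R := by
  have hlt : entryTime R p < exitTime R p := ht.1.trans ht.2
  set a := (t - entryTime R p)/(exitTime R p - entryTime R p) with ha_def
  have h0 : 0 < a := div_pos (by linarith [ht.1]) (by linarith)
  have h1 : a < 1 := (div_lt_one (by linarith)).mpr (by linarith [ht.2])
  have hne : traj p.1 p.2 (exitTime R p) ≠ traj p.1 p.2 (entryTime R p) := by
    intro h
    have hdiff : traj p.1 p.2 (exitTime R p) - traj p.1 p.2 (entryTime R p)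
        = (exitTime R p - entryTime R p) • (p.2 - p.1) := by
      rw [traj_eq, traj_eq]; module
    rw [h, sub_self] at hdiff
    exact (smul_ne_zero (sub_ne_zero.mpr hlt.ne') (sub_ne_zero.mpr (Ne.symm hxy))) hdiff.symm
  have hsc := strictConvex_closedBall ℝ (0:Euc d) R
  have hmem := hsc (exit_mem hp).2 (entry_mem hp).2 hne (a := a) (b := 1 - a) h0
    (by linarith) (by ring)
  rw [interior_cb hR] at hmem
  rw [traj_combo hlt]
  exact hmem

lemma exit_eq_one {p : Euc d × Euc d} (hp : p ∈ OmegaAll (d := d) R)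
    (h : traj p.1 p.2 (exitTime R p) ∈ ball (0:Euc d) R) : exitTime R p = 1 := by
  by_contra hne
  have hτ1 : exitTime R p < 1 := lt_of_le_of_ne (exit_mem hp).1.2 hne
  have hU : (fun t => traj p.1 p.2 t) ⁻¹' ball (0:Euc d) R ∈ 𝓝 (exitTime R p) :=
    (cont_traj_t p.1 p.2).continuousAt.preimage_mem_nhds (isOpen_ball.mem_nhds h)
  have h2 : Ioc (exitTime R p) 1 ∈ 𝓝[>] (exitTime R p) :=
    Ioc_mem_nhdsGT_of_mem ⟨le_rfl, hτ1⟩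
  obtain ⟨t, htU, ht1, ht2⟩ := Filter.nonempty_of_mem
    (Filter.inter_mem (mem_nhdsWithin_of_mem_nhds hU) h2)
  have htT : t ∈ Tset R p := ⟨⟨(exit_nonneg p).trans ht1.le, ht2⟩, ball_subset_closedBall htU⟩
  exact absurd (le_exit htT) (not_le.mpr ht1)

lemma entry_eq_zero {p : Euc d × Euc d} (hp : p ∈ OmegaAll (d := d) R)
    (h : traj p.1 p.2 (entryTime R p) ∈ ball (0:Euc d) R) : entryTime R p = 0 := by
  by_contra hne
  have hσ0 : 0 < entryTime R p := lt_of_le_of_ne (entry_nonneg p) (Ne.symm hne)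
  have hU : (fun t => traj p.1 p.2 t) ⁻¹' ball (0:Euc d) R ∈ 𝓝 (entryTime R p) :=
    (cont_traj_t p.1 p.2).continuousAt.preimage_mem_nhds (isOpen_ball.mem_nhds h)
  have h2 : Ico 0 (entryTime R p) ∈ 𝓝[<] (entryTime R p) :=
    Ico_mem_nhdsLT_of_mem ⟨hσ0, le_rfl⟩
  obtain ⟨t, htU, ht1, ht2⟩ := Filter.nonempty_of_mem
    (Filter.inter_mem (mem_nhdsWithin_of_mem_nhds hU) h2)
  have htT : t ∈ Tset R p := ⟨⟨ht1, ht2.le.trans (entry_mem hp).1.2⟩, ball_subset_closedBall htU⟩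
  exact absurd (entry_le htT) (not_le.mpr ht2)

lemma snd_mem_omega {p : Euc d × Euc d} (hy : p.2 ∈ ball (0:Euc d) R) :
    p ∈ OmegaAll (d := d) R :=
  ⟨1, ⟨zero_le_one, le_rfl⟩, by rw [traj_one]; exact ball_subset_closedBall hy⟩

lemma fst_mem_omega {p : Euc d × Euc d} (hx : p.1 ∈ ball (0:Euc d) R) :
    p ∈ OmegaAll (d := d) R :=
  ⟨0, ⟨le_rfl, zero_le_one⟩, by rw [traj_zero]; exact ball_subset_closedBall hx⟩

lemma exit_of_snd {p : Euc d × Euc d} (hy : p.2 ∈ ball (0:Euc d) R) : exitTime R p = 1 := by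
  have h1 : (1:ℝ) ∈ Tset R p :=
    ⟨⟨zero_le_one, le_rfl⟩, by rw [traj_one]; exact ball_subset_closedBall hy⟩
  exact le_antisymm (exit_le_one p) (le_exit h1)

lemma entry_of_fst {p : Euc d × Euc d} (hx : p.1 ∈ ball (0:Euc d) R) : entryTime R p = 0 := by
  have h0 : (0:ℝ) ∈ Tset R p :=
    ⟨⟨le_rfl, zero_le_one⟩, by rw [traj_zero]; exact ball_subset_closedBall hx⟩
  exact le_antisymm (entry_le h0) (entry_nonneg p)

lemma exit_split :
    OmegaAll (d := d) R ∩ {p | traj p.1 p.2 (exitTime R p) ∈ ball (0:Euc d) R}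
      = Prod.snd ⁻¹' ball (0:Euc d) R := by
  ext p
  constructor
  · rintro ⟨hp, hb⟩
    simp only [mem_setOf_eq] at hb
    have h1 := exit_eq_one hp hb
    rw [h1, traj_one] at hb
    exact hb
  · intro hy
    refine ⟨snd_mem_omega hy, ?_⟩
    show traj p.1 p.2 (exitTime R p) ∈ ball (0:Euc d) R
    rw [exit_of_snd hy, traj_one]
    exact hy

lemma entry_split :
    OmegaAll (d := d) R ∩ {p | traj p.1 p.2 (entryTime R p) ∈ ball (0:Euc d) R}
      = Prod.fst ⁻¹' ball (0:Euc d) R := by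
  ext p
  constructor
  · rintro ⟨hp, hb⟩
    simp only [mem_setOf_eq] at hb
    have h1 := entry_eq_zero hp hb
    rw [h1, traj_zero] at hb
    exact hb
  · intro hx
    refine ⟨fst_mem_omega hx, ?_⟩
    show traj p.1 p.2 (entryTime R p) ∈ ball (0:Euc d) R
    rw [entry_of_fst hx, traj_zero]
    exact hx

lemma omega_decomp_exit :
    OmegaAll (d := d) R =
      (OmegaAll (d := d) R ∩ {p | traj p.1 p.2 (exitTime R p) ∈ sphere (0:Euc d) R})
        ∪ Prod.snd ⁻¹' ball (0:Euc d) R := by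
  ext p
  constructor
  · intro hp
    have hmem : traj p.1 p.2 (exitTime R p) ∈ closedBall (0:Euc d) R := (exit_mem hp).2
    rcases lt_or_eq_of_le (mem_closedBall.mp hmem) with hlt | heq
    · right
      have : p ∈ OmegaAll (d := d) R ∩ {p | traj p.1 p.2 (exitTime R p) ∈ ball (0:Euc d) R} :=
        ⟨hp, mem_ball.mpr hlt⟩
      rwa [exit_split] at this
    · left; exact ⟨hp, mem_sphere.mpr heq⟩
  · rintro (⟨hp, _⟩ | hy)
    · exact hp
    · exact snd_mem_omega hy

lemma omega_decomp_entry :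
    OmegaAll (d := d) R =
      (OmegaAll (d := d) R ∩ {p | traj p.1 p.2 (entryTime R p) ∈ sphere (0:Euc d) R})
        ∪ Prod.fst ⁻¹' ball (0:Euc d) R := by
  ext p
  constructor
  · intro hp
    have hmem : traj p.1 p.2 (entryTime R p) ∈ closedBall (0:Euc d) R := (entry_mem hp).2
    rcases lt_or_eq_of_le (mem_closedBall.mp hmem) with hlt | heq
    · right
      have : p ∈ OmegaAll (d := d) R ∩ {p | traj p.1 p.2 (entryTime R p) ∈ ball (0:Euc d) R} :=
        ⟨hp, mem_ball.mpr hlt⟩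
      rwa [entry_split] at this
    · left; exact ⟨hp, mem_sphere.mpr heq⟩
  · rintro (⟨hp, _⟩ | hx)
    · exact hp
    · exact fst_mem_omega hx

lemma disjoint_exit :
    Disjoint (OmegaAll (d := d) R ∩ {p | traj p.1 p.2 (exitTime R p) ∈ sphere (0:Euc d) R})
      (Prod.snd ⁻¹' ball (0:Euc d) R) := by
  rw [disjoint_left]
  rintro p ⟨hp, hs⟩ hy
  simp only [mem_setOf_eq] at hs
  rw [exit_of_snd hy, traj_one] at hs
  rw [mem_sphere] at hs
  rw [mem_preimage, mem_ball] at hy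
  exact absurd hs (ne_of_lt hy)

lemma disjoint_entry :
    Disjoint (OmegaAll (d := d) R ∩ {p | traj p.1 p.2 (entryTime R p) ∈ sphere (0:Euc d) R})
      (Prod.fst ⁻¹' ball (0:Euc d) R) := by
  rw [disjoint_left]
  rintro p ⟨hp, hs⟩ hx
  simp only [mem_setOf_eq] at hs
  rw [entry_of_fst hx, traj_zero] at hs
  rw [mem_sphere] at hs
  rw [mem_preimage, mem_ball] at hx
  exact absurd hs (ne_of_lt hx)

end OrthAux

namespace OrthAux

variable {d : ℕ} {R : ℝ} {φ : Euc d → ℝ}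

lemma measurable_gradient (φ : Euc d → ℝ) : Measurable (gradient φ) := by
  have : gradient φ = fun x => (InnerProductSpace.toDual ℝ (Euc d)).symm (fderiv ℝ φ x) := rfl
  rw [this]
  exact (LinearIsometryEquiv.continuous _).measurable.comp (measurable_fderiv ℝ φ)

lemma grad_bound (hR : 0 < R) (hφ : ContDiffOn ℝ 1 φ (closedBall 0 R)) :
    ∃ G : ℝ, 0 ≤ G ∧ ∀ z ∈ closedBall (0:Euc d) R, ‖gradient φ z‖ ≤ G := by
  have hu : UniqueDiffOn ℝ (closedBall (0:Euc d) R) :=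
    uniqueDiffOn_convex (convex_closedBall _ _)
      (by rw [interior_cb hR]; exact nonempty_ball.mpr hR)
  have hC : ContinuousOn (fun z => ‖fderivWithin ℝ φ (closedBall (0:Euc d) R) z‖)
      (closedBall (0:Euc d) R) :=
    (hφ.continuousOn_fderivWithin hu le_rfl).norm
  obtain ⟨z0, _, hz0⟩ := (isCompact_closedBall (0:Euc d) R).exists_isMaxOn
    ⟨0, mem_closedBall_self hR.le⟩ hC
  refine ⟨‖fderivWithin ℝ φ (closedBall (0:Euc d) R) z0‖, norm_nonneg _, fun z hz => ?_⟩
  by_cases hdz : DifferentiableAt ℝ φ z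
  · have h1 : ‖gradient φ z‖ = ‖fderiv ℝ φ z‖ := LinearIsometryEquiv.norm_map _ _
    have h2 : fderivWithin ℝ φ (closedBall (0:Euc d) R) z = fderiv ℝ φ z :=
      hdz.fderivWithin (hu z hz)
    rw [h1, ← h2]
    exact hz0 hz
  · rw [gradient_eq_zero_of_not_differentiableAt hdz, norm_zero]
    exact (norm_nonneg _).trans (hz0 hz)

lemma phi_bound (hR : 0 < R) (hφ : ContDiffOn ℝ 1 φ (closedBall 0 R)) :
    ∃ C : ℝ, 0 ≤ C ∧ ∀ z ∈ closedBall (0:Euc d) R, |φ z| ≤ C := by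
  obtain ⟨z0, _, hz0⟩ := (isCompact_closedBall (0:Euc d) R).exists_isMaxOn
    ⟨0, mem_closedBall_self hR.le⟩ hφ.continuousOn.norm
  exact ⟨‖φ z0‖, norm_nonneg _, fun z hz => hz0 hz⟩

/-- The cross term: fundamental theorem of calculus along the trajectory. -/
lemma cross_ftc (hR : 0 < R) (hφ : ContDiffOn ℝ 1 φ (closedBall 0 R))
    {G : ℝ} (hG : ∀ z ∈ closedBall (0:Euc d) R, ‖gradient φ z‖ ≤ G)
    {p : Euc d × Euc d} (hp : p ∈ OmegaAll (d := d) R) :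
    ∫ t in (entryTime R p)..(exitTime R p), ⟪p.2 - p.1, gradient φ (traj p.1 p.2 t)⟫ =
      φ (traj p.1 p.2 (exitTime R p)) - φ (traj p.1 p.2 (entryTime R p)) := by
  set σ := entryTime R p with hσ
  set τ := exitTime R p with hτ
  have hle : σ ≤ τ := entry_le_exit p
  by_cases hxy : p.1 = p.2
  · have h0 : (fun t => ⟪p.2 - p.1, gradient φ (traj p.1 p.2 t)⟫) = fun _ : ℝ => (0:ℝ) := by
      funext t
      rw [← hxy, sub_self, inner_zero_left]
    rw [h0, ← hxy, traj_self, traj_self, sub_self, intervalIntegral.integral_zero]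
  · have hmeas : Measurable fun t : ℝ => ⟪p.2 - p.1, gradient φ (traj p.1 p.2 t)⟫ :=
      (measurable_const.inner ((measurable_gradient φ).comp (cont_traj_t p.1 p.2).measurable))
    have hbdd : ∀ t ∈ Ioc σ τ, ‖⟪p.2 - p.1, gradient φ (traj p.1 p.2 t)⟫‖
        ≤ ‖p.2 - p.1‖ * G := by
      intro t ht
      have hmem : traj p.1 p.2 t ∈ closedBall (0:Euc d) R :=
        traj_mem_closedBall hp ⟨ht.1.le, ht.2⟩
      calc ‖⟪p.2 - p.1, gradient φ (traj p.1 p.2 t)⟫‖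
          ≤ ‖p.2 - p.1‖ * ‖gradient φ (traj p.1 p.2 t)‖ := norm_inner_le_norm _ _
        _ ≤ ‖p.2 - p.1‖ * G := by
            exact mul_le_mul_of_nonneg_left (hG _ hmem) (norm_nonneg _)
    have hint : IntervalIntegrable
        (fun t => ⟪p.2 - p.1, gradient φ (traj p.1 p.2 t)⟫) volume σ τ := by
      rw [intervalIntegrable_iff_integrableOn_Ioc_of_le hle]
      refine Integrable.mono' (integrable_const (‖p.2 - p.1‖ * G))
        hmeas.aestronglyMeasurable ?_
      exact (ae_restrict_mem measurableSet_Ioc).mono hbdd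
    rcases eq_or_lt_of_le hle with heq | hlt
    · rw [← heq]
      simp
    · have hcont : ContinuousOn (fun t => φ (traj p.1 p.2 t)) (Icc σ τ) :=
        hφ.continuousOn.comp (cont_traj_t p.1 p.2).continuousOn
          (fun t ht => traj_mem_closedBall hp ht)
      have hderiv : ∀ t ∈ Ioo σ τ, HasDerivWithinAt (fun t => φ (traj p.1 p.2 t))
          (⟪p.2 - p.1, gradient φ (traj p.1 p.2 t)⟫) (Ioi t) t := by
        intro t ht
        have hz : traj p.1 p.2 t ∈ ball (0:Euc d) R := traj_mem_ball hR hp hxy ht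
        have hdiff : DifferentiableAt ℝ φ (traj p.1 p.2 t) :=
          (hφ.differentiableOn one_ne_zero).differentiableAt
            (Filter.mem_of_superset (isOpen_ball.mem_nhds hz) ball_subset_closedBall)
        have hcomp : HasDerivAt (fun t => φ (traj p.1 p.2 t))
            (fderiv ℝ φ (traj p.1 p.2 t) (p.2 - p.1)) t :=
          hdiff.hasFDerivAt.comp_hasDerivAt t (hasDerivAt_traj p.1 p.2 t)
        have hval : ⟪p.2 - p.1, gradient φ (traj p.1 p.2 t)⟫
            = fderiv ℝ φ (traj p.1 p.2 t) (p.2 - p.1) := by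
          rw [real_inner_comm]
          exact InnerProductSpace.toDual_symm_apply
        rw [hval]
        exact hcomp.hasDerivWithinAt
      exact intervalIntegral.integral_eq_sub_of_hasDeriv_right_of_le hle hcont hderiv hint

end OrthAux

namespace OrthAux

variable {d : ℕ} {R : ℝ} {φ : Euc d → ℝ}

/-- Interval integrability of `‖∇φ(X(t))‖²` on `[σ,τ]`. -/
lemma intervalIntegrable_gradsq {G : ℝ}
    (hG : ∀ z ∈ closedBall (0:Euc d) R, ‖gradient φ z‖ ≤ G)
    {p : Euc d × Euc d} (hp : p ∈ OmegaAll (d := d) R) :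
    IntervalIntegrable (fun t => ‖gradient φ (traj p.1 p.2 t)‖ ^ 2) volume
      (entryTime R p) (exitTime R p) := by
  have hle : entryTime R p ≤ exitTime R p := entry_le_exit p
  rw [intervalIntegrable_iff_integrableOn_Ioc_of_le hle]
  have hmeas : Measurable fun t : ℝ => ‖gradient φ (traj p.1 p.2 t)‖ ^ 2 :=
    (((measurable_gradient φ).comp (cont_traj_t p.1 p.2).measurable).norm).pow_const 2
  refine Integrable.mono' (integrable_const (G ^ 2)) hmeas.aestronglyMeasurable ?_
  refine (ae_restrict_mem measurableSet_Ioc).mono fun t ht => ?_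
  have hmem : traj p.1 p.2 t ∈ closedBall (0:Euc d) R :=
    traj_mem_closedBall hp ⟨ht.1.le, ht.2⟩
  have h1 : 0 ≤ ‖gradient φ (traj p.1 p.2 t)‖ := norm_nonneg _
  have h2 := hG _ hmem
  rw [Real.norm_eq_abs, abs_of_nonneg (by positivity)]
  exact pow_le_pow_left₀ h1 h2 2

lemma intervalIntegrable_cross {G : ℝ}
    (hG : ∀ z ∈ closedBall (0:Euc d) R, ‖gradient φ z‖ ≤ G)
    {p : Euc d × Euc d} (hp : p ∈ OmegaAll (d := d) R) :
    IntervalIntegrable (fun t => ⟪p.2 - p.1, gradient φ (traj p.1 p.2 t)⟫) volume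
      (entryTime R p) (exitTime R p) := by
  have hle : entryTime R p ≤ exitTime R p := entry_le_exit p
  rw [intervalIntegrable_iff_integrableOn_Ioc_of_le hle]
  have hmeas : Measurable fun t : ℝ => ⟪p.2 - p.1, gradient φ (traj p.1 p.2 t)⟫ :=
    measurable_const.inner ((measurable_gradient φ).comp (cont_traj_t p.1 p.2).measurable)
  refine Integrable.mono' (integrable_const (‖p.2 - p.1‖ * G)) hmeas.aestronglyMeasurable ?_
  refine (ae_restrict_mem measurableSet_Ioc).mono fun t ht => ?_
  have hmem : traj p.1 p.2 t ∈ closedBall (0:Euc d) R :=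
    traj_mem_closedBall hp ⟨ht.1.le, ht.2⟩
  calc ‖⟪p.2 - p.1, gradient φ (traj p.1 p.2 t)⟫‖
      ≤ ‖p.2 - p.1‖ * ‖gradient φ (traj p.1 p.2 t)‖ := norm_inner_le_norm _ _
    _ ≤ ‖p.2 - p.1‖ * G := mul_le_mul_of_nonneg_left (hG _ hmem) (norm_nonneg _)

/-- The pointwise orthogonality identity on a single trajectory. -/
lemma pointwise_identity (hR : 0 < R) (hφ : ContDiffOn ℝ 1 φ (closedBall 0 R))
    {G : ℝ} (hG : ∀ z ∈ closedBall (0:Euc d) R, ‖gradient φ z‖ ≤ G)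
    {p : Euc d × Euc d} (hp : p ∈ OmegaAll (d := d) R) :
    (∫ t in (entryTime R p)..(exitTime R p),
        ‖(p.2 - p.1) - gradient φ (traj p.1 p.2 t)‖ ^ 2)
      = (∫ t in (entryTime R p)..(exitTime R p), ‖p.2 - p.1‖ ^ 2)
        + (∫ t in (entryTime R p)..(exitTime R p), ‖gradient φ (traj p.1 p.2 t)‖ ^ 2)
        - 2 * (φ (traj p.1 p.2 (exitTime R p)) - φ (traj p.1 p.2 (entryTime R p))) := by
  have hexp : (fun t => ‖(p.2 - p.1) - gradient φ (traj p.1 p.2 t)‖ ^ 2)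
      = fun t => (‖p.2 - p.1‖ ^ 2 - 2 * ⟪p.2 - p.1, gradient φ (traj p.1 p.2 t)⟫)
          + ‖gradient φ (traj p.1 p.2 t)‖ ^ 2 := by
    funext t
    rw [norm_sub_sq_real]
  rw [hexp]
  rw [intervalIntegral.integral_add
    (IntervalIntegrable.sub intervalIntegrable_const
      ((intervalIntegrable_cross hG hp).const_mul 2))
    (intervalIntegrable_gradsq hG hp)]
  rw [intervalIntegral.integral_sub intervalIntegrable_const
    ((intervalIntegrable_cross hG hp).const_mul 2)]
  rw [intervalIntegral.integral_const_mul]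
  rw [cross_ftc hR hφ hG hp]
  ring

end OrthAux

namespace OrthAux

variable {d : ℕ} {R : ℝ}

/-- Measurability of a parametrized integral between entry and exit times. -/
lemma stronglyMeasurable_paramIntegral (F : (Euc d × Euc d) × ℝ → ℝ) (hF : Measurable F) :
    StronglyMeasurable fun p : Euc d × Euc d =>
      ∫ t in (entryTime R p)..(exitTime R p), F (p, t) := by
  have h1 : (fun p : Euc d × Euc d => ∫ t in (entryTime R p)..(exitTime R p), F (p, t))
      = fun p => ∫ t, (if entryTime R p < t ∧ t ≤ exitTime R p then F (p, t) else 0) := by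
    funext p
    rw [intervalIntegral.integral_of_le (entry_le_exit p),
      ← integral_indicator measurableSet_Ioc]
    congr 1
    funext t
    rw [indicator_apply]
    simp [mem_Ioc]
  rw [h1]
  have hG : Measurable fun q : (Euc d × Euc d) × ℝ =>
      (if entryTime R q.1 < q.2 ∧ q.2 ≤ exitTime R q.1 then F q else 0) := by
    refine Measurable.ite ?_ hF measurable_const
    exact (measurableSet_lt (measurable_entryTime.comp measurable_fst) measurable_snd).inter
      (measurableSet_le measurable_snd (measurable_exitTime.comp measurable_fst))
  exact hG.stronglyMeasurable.integral_prod_right'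

/-- A bounded measurable function is integrable on a set of a finite measure. -/
lemma integrableOn_of_bounded {π : Measure (Euc d × Euc d)} [IsFiniteMeasure π]
    {f : Euc d × Euc d → ℝ} {s : Set (Euc d × Euc d)} (hs : MeasurableSet s)
    (hf : AEStronglyMeasurable f (π.restrict s)) {C : ℝ} (h : ∀ p ∈ s, |f p| ≤ C) :
    IntegrableOn f s π :=
  Integrable.mono' (integrable_const C) hf
    ((ae_restrict_mem hs).mono fun p hp => by
      rw [Real.norm_eq_abs]; exact h p hp)

end OrthAux

namespace OrthAux

variable {d : ℕ} {R : ℝ}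

lemma measurable_exitPoint :
    Measurable fun p : Euc d × Euc d => traj p.1 p.2 (exitTime R p) :=
  cont_traj.measurable.comp (measurable_id.prodMk measurable_exitTime)

lemma measurable_entryPoint :
    Measurable fun p : Euc d × Euc d => traj p.1 p.2 (entryTime R p) :=
  cont_traj.measurable.comp (measurable_id.prodMk measurable_entryTime)

lemma exit_boundary (π : Measure (Euc d × Euc d)) [IsFiniteMeasure π]
    (mu : Measure (Euc d)) (hmap : π.map Prod.snd = mu)
    (ψ : Euc d → ℝ) (hψ : Continuous ψ)
    {C : ℝ} (hC : ∀ z ∈ closedBall (0:Euc d) R, |ψ z| ≤ C) :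
    ∫ p in OmegaAll (d := d) R, ψ (traj p.1 p.2 (exitTime R p)) ∂π
      = ∫ x in ball (0:Euc d) R, ψ x ∂mu
        + ∫ x, ψ x ∂(exitMeasure (OmegaAll (d := d) R) π R) := by
  set Xτ := fun p : Euc d × Euc d => traj p.1 p.2 (exitTime R p) with hXτ
  have hXm : Measurable Xτ := measurable_exitPoint
  set Sg := OmegaAll (d := d) R ∩ {p | Xτ p ∈ sphere (0:Euc d) R} with hSg
  have hSgm : MeasurableSet Sg :=
    isClosed_omega.measurableSet.inter (hXm isClosed_sphere.measurableSet)
  have hSym : MeasurableSet (Prod.snd ⁻¹' ball (0:Euc d) R : Set (Euc d × Euc d)) :=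
    measurable_snd measurableSet_ball
  have hint1 : IntegrableOn (fun p => ψ (Xτ p)) Sg π := by
    refine integrableOn_of_bounded (C := C) hSgm
      ((hψ.measurable.comp hXm).aestronglyMeasurable) (fun p hp => ?_)
    exact hC _ (sphere_subset_closedBall hp.2)
  have hint2 : IntegrableOn (fun p => ψ (Xτ p)) (Prod.snd ⁻¹' ball (0:Euc d) R) π := by
    refine integrableOn_of_bounded (C := C) hSym
      ((hψ.measurable.comp hXm).aestronglyMeasurable) (fun p hp => ?_)
    have : Xτ p = p.2 := by
      show traj p.1 p.2 (exitTime R p) = p.2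
      rw [exit_of_snd hp, traj_one]
    rw [this]
    exact hC _ (ball_subset_closedBall hp)
  have hsplit : ∫ p in OmegaAll (d := d) R, ψ (Xτ p) ∂π
      = (∫ p in Sg, ψ (Xτ p) ∂π) + ∫ p in Prod.snd ⁻¹' ball (0:Euc d) R, ψ (Xτ p) ∂π := by
    have hset : OmegaAll (d := d) R = Sg ∪ Prod.snd ⁻¹' ball (0:Euc d) R := omega_decomp_exit
    rw [hset, setIntegral_union disjoint_exit hSym hint1 hint2]
  have hterm2 : ∫ p in Prod.snd ⁻¹' ball (0:Euc d) R, ψ (Xτ p) ∂π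
      = ∫ x in ball (0:Euc d) R, ψ x ∂mu := by
    rw [setIntegral_congr_fun hSym (g := fun p : Euc d × Euc d => ψ p.2)
      (fun p hp => by
        show ψ (traj p.1 p.2 (exitTime R p)) = ψ p.2
        rw [exit_of_snd hp, traj_one])]
    rw [← hmap]
    exact (setIntegral_map measurableSet_ball hψ.aestronglyMeasurable
      measurable_snd.aemeasurable).symm
  have hterm1 : ∫ x, ψ x ∂(exitMeasure (OmegaAll (d := d) R) π R)
      = ∫ p in Sg, ψ (Xτ p) ∂π := by
    rw [exitMeasure]
    exact integral_map hXm.aemeasurable hψ.aestronglyMeasurable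
  rw [hsplit, hterm2, hterm1]
  ring

lemma entry_boundary (π : Measure (Euc d × Euc d)) [IsFiniteMeasure π]
    (lam : Measure (Euc d)) (hmap : π.map Prod.fst = lam)
    (ψ : Euc d → ℝ) (hψ : Continuous ψ)
    {C : ℝ} (hC : ∀ z ∈ closedBall (0:Euc d) R, |ψ z| ≤ C) :
    ∫ p in OmegaAll (d := d) R, ψ (traj p.1 p.2 (entryTime R p)) ∂π
      = ∫ x in ball (0:Euc d) R, ψ x ∂lam
        + ∫ x, ψ x ∂(enterMeasure (OmegaAll (d := d) R) π R) := by
  set Xσ := fun p : Euc d × Euc d => traj p.1 p.2 (entryTime R p) with hXσ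
  have hXm : Measurable Xσ := measurable_entryPoint
  set Sf := OmegaAll (d := d) R ∩ {p | Xσ p ∈ sphere (0:Euc d) R} with hSf
  have hSfm : MeasurableSet Sf :=
    isClosed_omega.measurableSet.inter (hXm isClosed_sphere.measurableSet)
  have hSxm : MeasurableSet (Prod.fst ⁻¹' ball (0:Euc d) R : Set (Euc d × Euc d)) :=
    measurable_fst measurableSet_ball
  have hint1 : IntegrableOn (fun p => ψ (Xσ p)) Sf π := by
    refine integrableOn_of_bounded (C := C) hSfm
      ((hψ.measurable.comp hXm).aestronglyMeasurable) (fun p hp => ?_)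
    exact hC _ (sphere_subset_closedBall hp.2)
  have hint2 : IntegrableOn (fun p => ψ (Xσ p)) (Prod.fst ⁻¹' ball (0:Euc d) R) π := by
    refine integrableOn_of_bounded (C := C) hSxm
      ((hψ.measurable.comp hXm).aestronglyMeasurable) (fun p hp => ?_)
    have : Xσ p = p.1 := by
      show traj p.1 p.2 (entryTime R p) = p.1
      rw [entry_of_fst hp, traj_zero]
    rw [this]
    exact hC _ (ball_subset_closedBall hp)
  have hsplit : ∫ p in OmegaAll (d := d) R, ψ (Xσ p) ∂π
      = (∫ p in Sf, ψ (Xσ p) ∂π) + ∫ p in Prod.fst ⁻¹' ball (0:Euc d) R, ψ (Xσ p) ∂π := by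
    have hset : OmegaAll (d := d) R = Sf ∪ Prod.fst ⁻¹' ball (0:Euc d) R := omega_decomp_entry
    rw [hset, setIntegral_union disjoint_entry hSxm hint1 hint2]
  have hterm2 : ∫ p in Prod.fst ⁻¹' ball (0:Euc d) R, ψ (Xσ p) ∂π
      = ∫ x in ball (0:Euc d) R, ψ x ∂lam := by
    rw [setIntegral_congr_fun hSxm (g := fun p : Euc d × Euc d => ψ p.1)
      (fun p hp => by
        show ψ (traj p.1 p.2 (entryTime R p)) = ψ p.1
        rw [entry_of_fst hp, traj_zero])]
    rw [← hmap]
    exact (setIntegral_map measurableSet_ball hψ.aestronglyMeasurable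
      measurable_fst.aemeasurable).symm
  have hterm1 : ∫ x, ψ x ∂(enterMeasure (OmegaAll (d := d) R) π R)
      = ∫ p in Sf, ψ (Xσ p) ∂π := by
    rw [enterMeasure]
    exact integral_map hXm.aemeasurable hψ.aestronglyMeasurable
  rw [hsplit, hterm2, hterm1]
  ring

end OrthAux


open OrthAux in
/-- Lemma 2.1 (orthogonality identity): for any admissible plan `π` and any `C¹`
function `φ` on the closed ball `B̄_R`, the stated energy identity holds. -/
theorem orthogonality_identity {d : ℕ} (lam mu : Measure (Euc d))
    [IsFiniteMeasure lam] [IsFiniteMeasure mu]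
    (hlK : HasCompactSupp lam) (hmK : HasCompactSupp mu)
    (hmass : lam univ = mu univ)
    (π : Measure (Euc d × Euc d)) (hπ : IsCoupling π lam mu)
    (R : ℝ) (hR : 0 < R)
    (φ : Euc d → ℝ) (hφ : ContDiffOn ℝ 1 φ (closedBall 0 R)) :
    (∫ p in OmegaAll (d := d) R,
        (∫ t in (entryTime R p)..(exitTime R p),
          ‖(p.2 - p.1) - gradient φ (traj p.1 p.2 t)‖ ^ 2) ∂π)
      = (∫ p in OmegaAll (d := d) R,
          (∫ t in (entryTime R p)..(exitTime R p), ‖p.2 - p.1‖ ^ 2) ∂π)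
        + (∫ p in OmegaAll (d := d) R,
            (∫ t in (entryTime R p)..(exitTime R p), ‖gradient φ (traj p.1 p.2 t)‖ ^ 2) ∂π)
        - 2 * ((∫ x in ball (0 : Euc d) R, φ x ∂mu) - ∫ x in ball (0 : Euc d) R, φ x ∂lam)
        - 2 * ((∫ x, φ x ∂(exitMeasure (OmegaAll R) π R))
                - ∫ x, φ x ∂(enterMeasure (OmegaAll R) π R)) := by
  classical
  obtain ⟨G, hG0, hG⟩ := grad_bound hR hφ
  obtain ⟨Cφ, hCφ0, hCφ⟩ := phi_bound hR hφ
  -- continuous (Tietze) extension of φ from the closed ball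
  obtain ⟨ψc, hψc⟩ := ContinuousMap.exists_restrict_eq
    (isClosed_closedBall (x := (0:Euc d)) (ε := R))
    ⟨fun z => φ z, hφ.continuousOn.restrict⟩
  set ψ : Euc d → ℝ := fun z => ψc z with hψdef
  have hψ : ∀ z ∈ closedBall (0:Euc d) R, ψ z = φ z := by
    intro z hz
    have := ContinuousMap.congr_fun hψc ⟨z, hz⟩
    exact this
  have hCψ : ∀ z ∈ closedBall (0:Euc d) R, |ψ z| ≤ Cφ := fun z hz => by
    rw [hψ z hz]; exact hCφ z hz
  have hψcont : Continuous ψ := ψc.continuous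
  -- π is a finite measure
  have hπfin : IsFiniteMeasure π := by
    constructor
    have h1 : π univ = lam univ := by
      rw [← hπ.1, Measure.map_apply measurable_fst MeasurableSet.univ, preimage_univ]
    rw [h1]; exact measure_lt_top lam univ
  -- a.e. bound on the velocity from compact supports
  obtain ⟨M, hM0, hMae⟩ : ∃ M : ℝ, 0 ≤ M ∧ ∀ᵐ p ∂π, ‖p.2 - p.1‖ ≤ M := by
    obtain ⟨Kl, hKlc, hKl0⟩ := hlK
    obtain ⟨Km, hKmc, hKm0⟩ := hmK
    obtain ⟨rl, hrl⟩ := hKlc.isBounded.subset_closedBall 0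
    obtain ⟨rm, hrm⟩ := hKmc.isBounded.subset_closedBall 0
    refine ⟨max 0 (rl + rm), le_max_left _ _, ?_⟩
    have h1 : π (Prod.fst ⁻¹' Klᶜ) = 0 := by
      rw [← Measure.map_apply measurable_fst hKlc.isClosed.measurableSet.compl, hπ.1]
      exact hKl0
    have h2 : π (Prod.snd ⁻¹' Kmᶜ) = 0 := by
      rw [← Measure.map_apply measurable_snd hKmc.isClosed.measurableSet.compl, hπ.2]
      exact hKm0
    have hae : ∀ᵐ p ∂π, p.1 ∈ Kl ∧ p.2 ∈ Km := by
      rw [ae_iff]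
      refine measure_mono_null ?_ (measure_union_null h1 h2)
      intro p hp
      simp only [mem_setOf_eq, not_and_or] at hp
      rcases hp with hp | hp
      · exact Or.inl hp
      · exact Or.inr hp
    refine hae.mono fun p hp => ?_
    have h1 : ‖p.1‖ ≤ rl := mem_closedBall_zero_iff.mp (hrl hp.1)
    have h2 : ‖p.2‖ ≤ rm := mem_closedBall_zero_iff.mp (hrm hp.2)
    calc ‖p.2 - p.1‖ ≤ ‖p.2‖ + ‖p.1‖ := norm_sub_le _ _
      _ ≤ rl + rm := by linarith
      _ ≤ max 0 (rl + rm) := le_max_right _ _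
  have hΩm : MeasurableSet (OmegaAll (d := d) R) := isClosed_omega.measurableSet
  -- notation
  set F0 : Euc d × Euc d → ℝ := fun p =>
    ∫ t in (entryTime R p)..(exitTime R p),
      ‖(p.2 - p.1) - gradient φ (traj p.1 p.2 t)‖ ^ 2 with hF0def
  set F1 : Euc d × Euc d → ℝ := fun p =>
    ∫ t in (entryTime R p)..(exitTime R p), ‖p.2 - p.1‖ ^ 2 with hF1def
  set F2 : Euc d × Euc d → ℝ := fun p =>
    ∫ t in (entryTime R p)..(exitTime R p), ‖gradient φ (traj p.1 p.2 t)‖ ^ 2 with hF2def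
  set Dψ : Euc d × Euc d → ℝ := fun p =>
    ψ (traj p.1 p.2 (exitTime R p)) - ψ (traj p.1 p.2 (entryTime R p)) with hDdef
  -- integrability of F1
  have hF1eq : ∀ p : Euc d × Euc d,
      F1 p = (exitTime R p - entryTime R p) * ‖p.2 - p.1‖ ^ 2 := fun p => by
    simp only [hF1def]
    rw [intervalIntegral.integral_const, smul_eq_mul]
  have hF1m : Measurable F1 := by
    have : F1 = fun p : Euc d × Euc d =>
        (exitTime R p - entryTime R p) * ‖p.2 - p.1‖ ^ 2 := funext hF1eq
    rw [this]
    exact (measurable_exitTime.sub measurable_entryTime).mul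
      (((measurable_snd.sub measurable_fst).norm).pow_const 2)
  have hF1int : IntegrableOn F1 (OmegaAll (d := d) R) π := by
    refine Integrable.mono' (integrable_const (M ^ 2)) hF1m.aestronglyMeasurable ?_
    filter_upwards [ae_restrict_of_ae hMae, ae_restrict_mem hΩm] with p h1 h2
    have h3 : 0 ≤ exitTime R p - entryTime R p := sub_nonneg.mpr (entry_le_exit p)
    have h4 : exitTime R p - entryTime R p ≤ 1 := by
      have hA : exitTime R p ≤ 1 := exit_le_one p
      have hB : 0 ≤ entryTime R p := entry_nonneg p
      linarith
    have h5 : ‖p.2 - p.1‖ ^ 2 ≤ M ^ 2 := pow_le_pow_left₀ (norm_nonneg _) h1 2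
    rw [hF1eq p, Real.norm_eq_abs, abs_of_nonneg (by positivity)]
    nlinarith [sq_nonneg ‖p.2 - p.1‖]
  -- integrability of F2
  have hF2m : StronglyMeasurable F2 := by
    have h := stronglyMeasurable_paramIntegral (R := R)
      (fun q : (Euc d × Euc d) × ℝ => ‖gradient φ (traj q.1.1 q.1.2 q.2)‖ ^ 2)
      ((((measurable_gradient φ).comp cont_traj.measurable).norm).pow_const 2)
    exact h
  have hF2bound : ∀ p ∈ OmegaAll (d := d) R, |F2 p| ≤ G ^ 2 := by
    intro p hp
    have hle : entryTime R p ≤ exitTime R p := entry_le_exit p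
    simp only [hF2def]
    rw [intervalIntegral.integral_of_le hle]
    have hnorm := norm_setIntegral_le_of_norm_le_const (μ := volume)
      (s := Ioc (entryTime R p) (exitTime R p)) (C := G ^ 2)
      (f := fun t => ‖gradient φ (traj p.1 p.2 t)‖ ^ 2)
      measure_Ioc_lt_top ?_
    · have hvol : (volume (Ioc (entryTime R p) (exitTime R p))).toReal
          = exitTime R p - entryTime R p := by
        rw [Real.volume_Ioc, ENNReal.toReal_ofReal (sub_nonneg.mpr hle)]
      rw [Real.norm_eq_abs, measureReal_def] at hnorm
      refine hnorm.trans ?_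
      rw [hvol]
      have h4 : exitTime R p - entryTime R p ≤ 1 := by
        have hA : exitTime R p ≤ 1 := exit_le_one p
        have hB : 0 ≤ entryTime R p := entry_nonneg p
        linarith
      nlinarith [sq_nonneg G]
    · intro t ht
      have hmem : traj p.1 p.2 t ∈ closedBall (0:Euc d) R :=
        traj_mem_closedBall hp ⟨ht.1.le, ht.2⟩
      rw [Real.norm_eq_abs, abs_of_nonneg (by positivity)]
      exact pow_le_pow_left₀ (norm_nonneg _) (hG _ hmem) 2
  have hF2int : IntegrableOn F2 (OmegaAll (d := d) R) π :=
    integrableOn_of_bounded (C := G ^ 2) hΩm hF2m.aestronglyMeasurable hF2bound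
  -- integrability of the boundary terms
  have hXτm : Measurable fun p : Euc d × Euc d => ψ (traj p.1 p.2 (exitTime R p)) :=
    hψcont.measurable.comp measurable_exitPoint
  have hXσm : Measurable fun p : Euc d × Euc d => ψ (traj p.1 p.2 (entryTime R p)) :=
    hψcont.measurable.comp measurable_entryPoint
  have hτint : IntegrableOn (fun p : Euc d × Euc d => ψ (traj p.1 p.2 (exitTime R p)))
      (OmegaAll (d := d) R) π := by
    refine integrableOn_of_bounded (C := Cφ) hΩm hXτm.aestronglyMeasurable fun p hp => ?_
    exact hCψ _ (exit_mem hp).2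
  have hσint : IntegrableOn (fun p : Euc d × Euc d => ψ (traj p.1 p.2 (entryTime R p)))
      (OmegaAll (d := d) R) π := by
    refine integrableOn_of_bounded (C := Cφ) hΩm hXσm.aestronglyMeasurable fun p hp => ?_
    exact hCψ _ (entry_mem hp).2
  have hDint : IntegrableOn Dψ (OmegaAll (d := d) R) π := hτint.sub hσint
  -- pointwise identity a.e.
  have hptwise : ∀ᵐ p ∂(π.restrict (OmegaAll (d := d) R)),
      F0 p = F1 p + F2 p - 2 * Dψ p := by
    refine (ae_restrict_mem hΩm).mono fun p hp => ?_
    simp only [hF0def, hF1def, hF2def, hDdef]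
    rw [pointwise_identity hR hφ hG hp]
    rw [hψ _ (exit_mem hp).2, hψ _ (entry_mem hp).2]
  -- integrate
  have hLHS : ∫ p in OmegaAll (d := d) R, F0 p ∂π
      = (∫ p in OmegaAll (d := d) R, F1 p ∂π) + (∫ p in OmegaAll (d := d) R, F2 p ∂π)
        - 2 * ∫ p in OmegaAll (d := d) R, Dψ p ∂π := by
    rw [integral_congr_ae hptwise]
    have hsum : IntegrableOn (fun p => F1 p + F2 p) (OmegaAll (d := d) R) π :=
      hF1int.add hF2int
    have hDmul : IntegrableOn (fun p => 2 * Dψ p) (OmegaAll (d := d) R) π :=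
      hDint.const_mul 2
    rw [integral_sub hsum hDmul]
    rw [integral_add hF1int hF2int, integral_const_mul]
  -- boundary identities
  have hDsplit : ∫ p in OmegaAll (d := d) R, Dψ p ∂π
      = (∫ p in OmegaAll (d := d) R, ψ (traj p.1 p.2 (exitTime R p)) ∂π)
        - ∫ p in OmegaAll (d := d) R, ψ (traj p.1 p.2 (entryTime R p)) ∂π :=
    integral_sub hτint hσint
  have hexit := exit_boundary (R := R) π mu hπ.2 ψ hψcont hCψ
  have hentry := entry_boundary (R := R) π lam hπ.1 ψ hψcont hCψ
  -- replace ψ by φ in the boundary terms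
  have hball_mu : ∫ x in ball (0:Euc d) R, ψ x ∂mu = ∫ x in ball (0:Euc d) R, φ x ∂mu :=
    setIntegral_congr_fun measurableSet_ball fun x hx => hψ x (ball_subset_closedBall hx)
  have hball_lam : ∫ x in ball (0:Euc d) R, ψ x ∂lam = ∫ x in ball (0:Euc d) R, φ x ∂lam :=
    setIntegral_congr_fun measurableSet_ball fun x hx => hψ x (ball_subset_closedBall hx)
  have hg_ae : ∀ᵐ z ∂(exitMeasure (OmegaAll (d := d) R) π R), z ∈ sphere (0:Euc d) R := by
    rw [ae_iff]
    have hset : {z : Euc d | ¬ z ∈ sphere (0:Euc d) R} = (sphere (0:Euc d) R)ᶜ := rfl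
    rw [hset, exitMeasure,
      Measure.map_apply measurable_exitPoint isClosed_sphere.measurableSet.compl,
      Measure.restrict_apply (measurable_exitPoint isClosed_sphere.measurableSet.compl)]
    have : (fun p : Euc d × Euc d => traj p.1 p.2 (exitTime R p)) ⁻¹' (sphere (0:Euc d) R)ᶜ
        ∩ (OmegaAll (d := d) R ∩ {p | traj p.1 p.2 (exitTime R p) ∈ sphere (0:Euc d) R})
        = ∅ := by
      ext p
      simp only [mem_inter_iff, mem_preimage, mem_compl_iff, mem_setOf_eq,
        mem_empty_iff_false, iff_false, not_and]
      intro h1 _ h3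
      exact h1 h3
    rw [this]
    simp
  have hf_ae : ∀ᵐ z ∂(enterMeasure (OmegaAll (d := d) R) π R), z ∈ sphere (0:Euc d) R := by
    rw [ae_iff]
    have hset : {z : Euc d | ¬ z ∈ sphere (0:Euc d) R} = (sphere (0:Euc d) R)ᶜ := rfl
    rw [hset, enterMeasure,
      Measure.map_apply measurable_entryPoint isClosed_sphere.measurableSet.compl,
      Measure.restrict_apply (measurable_entryPoint isClosed_sphere.measurableSet.compl)]
    have : (fun p : Euc d × Euc d => traj p.1 p.2 (entryTime R p)) ⁻¹' (sphere (0:Euc d) R)ᶜ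
        ∩ (OmegaAll (d := d) R ∩ {p | traj p.1 p.2 (entryTime R p) ∈ sphere (0:Euc d) R})
        = ∅ := by
      ext p
      simp only [mem_inter_iff, mem_preimage, mem_compl_iff, mem_setOf_eq,
        mem_empty_iff_false, iff_false, not_and]
      intro h1 _ h3
      exact h1 h3
    rw [this]
    simp
  have hg_eq : ∫ x, ψ x ∂(exitMeasure (OmegaAll (d := d) R) π R)
      = ∫ x, φ x ∂(exitMeasure (OmegaAll (d := d) R) π R) :=
    integral_congr_ae (hg_ae.mono fun z hz => hψ z (sphere_subset_closedBall hz))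
  have hf_eq : ∫ x, ψ x ∂(enterMeasure (OmegaAll (d := d) R) π R)
      = ∫ x, φ x ∂(enterMeasure (OmegaAll (d := d) R) π R) :=
    integral_congr_ae (hf_ae.mono fun z hz => hψ z (sphere_subset_closedBall hz))
  rw [hball_mu, hg_eq] at hexit
  rw [hball_lam, hf_eq] at hentry
  -- conclude
  show (∫ p in OmegaAll (d := d) R, F0 p ∂π) = _
  rw [hLHS, hDsplit, hexit, hentry]
  show _ = (∫ p in OmegaAll (d := d) R, F1 p ∂π) + (∫ p in OmegaAll (d := d) R, F2 p ∂π)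
    - 2 * ((∫ x in ball (0 : Euc d) R, φ x ∂mu) - ∫ x in ball (0 : Euc d) R, φ x ∂lam)
    - 2 * ((∫ x, φ x ∂(exitMeasure (OmegaAll R) π R))
            - ∫ x, φ x ∂(enterMeasure (OmegaAll R) π R))
  ring

end
end

section
/- Let λ, μ be finite nonnegative Borel measures on ℝ^d with compact support and λ(ℝ^d) = μ(ℝ^d), let π be any admissible plan for (λ, μ), and let R > 0. Then the entering/exiting boundary measures satisfy the mass balance λ(B_R) + f(∂B_R) = μ(B_R) + g(∂B_R). -/
open MeasureTheory Metric Set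
open scoped ENNReal RealInnerProductSpace

noncomputable section

section AuxMassBalance

variable {d : ℕ}

/-- The set of times at which the trajectory lies in the closed ball. -/
def trajSet (R : ℝ) (p : Euc d × Euc d) : Set ℝ :=
  {t ∈ Icc (0:ℝ) 1 | traj p.1 p.2 t ∈ closedBall (0 : Euc d) R}

lemma entryTime_def' (R : ℝ) (p : Euc d × Euc d) : entryTime R p = sInf (trajSet R p) := rfl
lemma exitTime_def' (R : ℝ) (p : Euc d × Euc d) : exitTime R p = sSup (trajSet R p) := rfl

@[simp] lemma traj_zero (x y : Euc d) : traj x y 0 = x := by simp [traj]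
@[simp] lemma traj_one (x y : Euc d) : traj x y 1 = y := by simp [traj]

lemma continuous_traj : Continuous (fun q : (Euc d × Euc d) × ℝ => traj q.1.1 q.1.2 q.2) := by
  unfold traj; fun_prop

lemma continuous_traj' (p : Euc d × Euc d) : Continuous (fun t : ℝ => traj p.1 p.2 t) := by
  unfold traj; fun_prop

lemma isClosed_trajSet (R : ℝ) (p : Euc d × Euc d) : IsClosed (trajSet R p) := by
  have : trajSet R p = Icc (0:ℝ) 1 ∩ (fun t => traj p.1 p.2 t) ⁻¹' closedBall (0 : Euc d) R := rfl
  rw [this]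
  exact isClosed_Icc.inter (Metric.isClosed_closedBall.preimage (continuous_traj' p))

lemma bddBelow_trajSet (R : ℝ) (p : Euc d × Euc d) : BddBelow (trajSet R p) :=
  ⟨0, fun _ ht => ht.1.1⟩

lemma bddAbove_trajSet (R : ℝ) (p : Euc d × Euc d) : BddAbove (trajSet R p) :=
  ⟨1, fun _ ht => ht.1.2⟩

lemma omega_iff (R : ℝ) (p : Euc d × Euc d) : p ∈ OmegaAll R ↔ (trajSet R p).Nonempty := by
  constructor
  · rintro ⟨t, ht, h⟩; exact ⟨t, ht, h⟩
  · rintro ⟨t, ht, h⟩; exact ⟨t, ht, h⟩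

lemma isClosed_hit (R a b : ℝ) :
    IsClosed {p : Euc d × Euc d | ∃ t ∈ Icc a b, traj p.1 p.2 t ∈ closedBall (0:Euc d) R} := by
  have h1 : IsClosed {q : (Euc d × Euc d) × (Icc a b) |
      traj q.1.1 q.1.2 (q.2 : ℝ) ∈ closedBall (0:Euc d) R} := by
    apply Metric.isClosed_closedBall.preimage
    unfold traj; fun_prop
  have h2 := isClosedMap_fst_of_compactSpace _ h1
  convert h2 using 1
  ext p
  constructor
  · rintro ⟨t, ht, h⟩; exact ⟨(p, ⟨t, ht⟩), h, rfl⟩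
  · rintro ⟨⟨p', t⟩, h, rfl⟩; exact ⟨t.1, t.2, h⟩

lemma isClosed_omega (R : ℝ) : IsClosed (OmegaAll (d := d) R) := isClosed_hit R 0 1

lemma entryTime_nonneg (R : ℝ) (p : Euc d × Euc d) : 0 ≤ entryTime R p := by
  rw [entryTime_def']
  rcases eq_empty_or_nonempty (trajSet R p) with h | h
  · rw [h, Real.sInf_empty]
  · exact le_csInf h fun t ht => ht.1.1

lemma exitTime_nonneg (R : ℝ) (p : Euc d × Euc d) : 0 ≤ exitTime R p := by
  rw [exitTime_def']
  rcases eq_empty_or_nonempty (trajSet R p) with h | h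
  · rw [h, Real.sSup_empty]
  · obtain ⟨t, ht⟩ := h
    exact le_trans ht.1.1 (le_csSup (bddAbove_trajSet R p) ht)

lemma entryTime_mem {R : ℝ} {p : Euc d × Euc d} (hp : p ∈ OmegaAll R) :
    entryTime R p ∈ trajSet R p :=
  (isClosed_trajSet R p).csInf_mem ((omega_iff R p).1 hp) (bddBelow_trajSet R p)

lemma exitTime_mem {R : ℝ} {p : Euc d × Euc d} (hp : p ∈ OmegaAll R) :
    exitTime R p ∈ trajSet R p :=
  (isClosed_trajSet R p).csSup_mem ((omega_iff R p).1 hp) (bddAbove_trajSet R p)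

lemma measurable_entryTime (R : ℝ) : Measurable (entryTime (d := d) R) := by
  apply measurable_of_Iio
  intro a
  rcases le_or_gt a 0 with ha | ha
  · have : entryTime (d := d) R ⁻¹' Iio a = ∅ := by
      rw [eq_empty_iff_forall_notMem]
      intro p hp
      exact absurd (mem_Iio.1 hp) (not_lt.2 (le_trans ha (entryTime_nonneg R p)))
    rw [this]; exact MeasurableSet.empty
  · have heq : entryTime (d := d) R ⁻¹' Iio a = (OmegaAll (d := d) R)ᶜ ∪
        ⋃ n : ℕ, {p : Euc d × Euc d | ∃ t ∈ Icc (0:ℝ) (min (a - 1/(n+1)) 1),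
          traj p.1 p.2 t ∈ closedBall (0:Euc d) R} := by
      ext p
      simp only [mem_preimage, mem_Iio, mem_union, mem_compl_iff, mem_iUnion, mem_setOf_eq]
      constructor
      · intro h
        by_cases hΩ : p ∈ OmegaAll R
        · right
          have hmem := entryTime_mem hΩ
          obtain ⟨n, hn⟩ := exists_nat_one_div_lt (sub_pos.2 h)
          exact ⟨n, entryTime R p, ⟨hmem.1.1, le_min (by linarith) hmem.1.2⟩, hmem.2⟩
        · left; exact hΩ
      · rintro (h | ⟨n, t, ⟨ht0, htm⟩, htb⟩)
        · have hemp : trajSet R p = ∅ := by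
            rw [eq_empty_iff_forall_notMem]
            intro t ht
            exact h ((omega_iff R p).2 ⟨t, ht⟩)
          rw [entryTime_def', hemp, Real.sInf_empty]
          exact ha
        · have hts : t ∈ trajSet R p :=
            ⟨⟨ht0, le_trans htm (min_le_right _ _)⟩, htb⟩
          have h1 : entryTime R p ≤ t := csInf_le (bddBelow_trajSet R p) hts
          have h2 : (0:ℝ) < 1/(n+1) := by positivity
          have h3 : t ≤ a - 1/(n+1) := le_trans htm (min_le_left _ _)
          linarith
    rw [heq]
    exact ((isClosed_omega R).measurableSet.compl).union
      (MeasurableSet.iUnion fun n => (isClosed_hit R 0 _).measurableSet)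

lemma measurable_exitTime (R : ℝ) : Measurable (exitTime (d := d) R) := by
  apply measurable_of_Ioi
  intro a
  rcases lt_or_ge a 0 with ha | ha
  · have : exitTime (d := d) R ⁻¹' Ioi a = univ := by
      rw [eq_univ_iff_forall]
      intro p
      exact mem_Ioi.2 (lt_of_lt_of_le ha (exitTime_nonneg R p))
    rw [this]; exact MeasurableSet.univ
  · have heq : exitTime (d := d) R ⁻¹' Ioi a =
        ⋃ n : ℕ, {p : Euc d × Euc d | ∃ t ∈ Icc (a + 1/(n+1)) 1,
          traj p.1 p.2 t ∈ closedBall (0:Euc d) R} := by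
      ext p
      simp only [mem_preimage, mem_Ioi, mem_iUnion, mem_setOf_eq]
      constructor
      · intro h
        have hΩ : p ∈ OmegaAll R := by
          by_contra hc
          have hemp : trajSet R p = ∅ := by
            rw [eq_empty_iff_forall_notMem]
            intro t ht
            exact hc ((omega_iff R p).2 ⟨t, ht⟩)
          rw [exitTime_def', hemp, Real.sSup_empty] at h
          exact absurd h (not_lt.2 ha)
        have hmem := exitTime_mem hΩ
        obtain ⟨n, hn⟩ := exists_nat_one_div_lt (sub_pos.2 h)
        exact ⟨n, exitTime R p, ⟨by linarith, hmem.1.2⟩, hmem.2⟩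
      · rintro ⟨n, t, ⟨ht0, htm⟩, htb⟩
        have h2 : (0:ℝ) < 1/(n+1) := by positivity
        have hts : t ∈ trajSet R p := ⟨⟨by linarith, htm⟩, htb⟩
        have h1 : t ≤ exitTime R p := le_csSup (bddAbove_trajSet R p) hts
        linarith
    rw [heq]
    exact MeasurableSet.iUnion fun n => (isClosed_hit R _ 1).measurableSet

lemma entry_sphere {R : ℝ} {p : Euc d × Euc d} (hp : p ∈ OmegaAll R)
    (hx : p.1 ∉ ball (0 : Euc d) R) :
    traj p.1 p.2 (entryTime R p) ∈ sphere (0 : Euc d) R := by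
  set σ := entryTime R p with hσ
  have hσS : σ ∈ trajSet R p := entryTime_mem hp
  have hle : dist (traj p.1 p.2 σ) 0 ≤ R := mem_closedBall.1 hσS.2
  rw [mem_sphere]
  by_contra hns
  have hlt : dist (traj p.1 p.2 σ) 0 < R := lt_of_le_of_ne hle hns
  have hσpos : 0 < σ := by
    rcases (entryTime_nonneg R p).lt_or_eq with h | h
    · exact h
    · exfalso
      apply hx
      rw [mem_ball]
      have : traj p.1 p.2 σ = p.1 := by rw [hσ, ← h, traj_zero]
      rwa [this] at hlt
  have hopen : IsOpen ((fun t => traj p.1 p.2 t) ⁻¹' ball (0 : Euc d) R) :=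
    Metric.isOpen_ball.preimage (continuous_traj' p)
  obtain ⟨δ, hδ, hball⟩ := Metric.isOpen_iff.1 hopen σ (by simpa [mem_ball] using hlt)
  set t := max 0 (σ - δ/2) with htdef
  have ht_lt : t < σ := max_lt hσpos (by linarith)
  have ht_close : dist t σ < δ := by
    rw [Real.dist_eq, abs_sub_lt_iff]
    constructor
    · linarith
    · have h1 : σ - δ/2 ≤ t := le_max_right _ _
      linarith
  have htpre : traj p.1 p.2 t ∈ ball (0 : Euc d) R := hball (mem_ball.2 ht_close)
  have htS : t ∈ trajSet R p :=
    ⟨⟨le_max_left _ _, le_trans ht_lt.le hσS.1.2⟩, ball_subset_closedBall htpre⟩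
  have := csInf_le (bddBelow_trajSet R p) htS
  rw [← entryTime_def', ← hσ] at this
  linarith

lemma exit_sphere {R : ℝ} {p : Euc d × Euc d} (hp : p ∈ OmegaAll R)
    (hy : p.2 ∉ ball (0 : Euc d) R) :
    traj p.1 p.2 (exitTime R p) ∈ sphere (0 : Euc d) R := by
  set τ := exitTime R p with hτ
  have hτS : τ ∈ trajSet R p := exitTime_mem hp
  have hle : dist (traj p.1 p.2 τ) 0 ≤ R := mem_closedBall.1 hτS.2
  rw [mem_sphere]
  by_contra hns
  have hlt : dist (traj p.1 p.2 τ) 0 < R := lt_of_le_of_ne hle hns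
  have hτlt : τ < 1 := by
    rcases hτS.1.2.lt_or_eq with h | h
    · exact h
    · exfalso
      apply hy
      rw [mem_ball]
      have : traj p.1 p.2 τ = p.2 := by rw [hτ] at h ⊢; rw [h, traj_one]
      rwa [this] at hlt
  have hopen : IsOpen ((fun t => traj p.1 p.2 t) ⁻¹' ball (0 : Euc d) R) :=
    Metric.isOpen_ball.preimage (continuous_traj' p)
  obtain ⟨δ, hδ, hball⟩ := Metric.isOpen_iff.1 hopen τ (by simpa [mem_ball] using hlt)
  set t := min 1 (τ + δ/2) with htdef
  have ht_gt : τ < t := lt_min hτlt (by linarith)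
  have ht_close : dist t τ < δ := by
    rw [Real.dist_eq, abs_sub_lt_iff]
    constructor
    · have h1 : t ≤ τ + δ/2 := min_le_right _ _
      linarith
    · linarith
  have htpre : traj p.1 p.2 t ∈ ball (0 : Euc d) R := hball (mem_ball.2 ht_close)
  have htS : t ∈ trajSet R p :=
    ⟨⟨le_trans hτS.1.1 ht_gt.le, min_le_left _ _⟩, ball_subset_closedBall htpre⟩
  have := le_csSup (bddAbove_trajSet R p) htS
  rw [← exitTime_def', ← hτ] at this
  linarith

lemma entryTime_eq_zero {R : ℝ} {p : Euc d × Euc d}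
    (hx : p.1 ∈ closedBall (0 : Euc d) R) : entryTime R p = 0 := by
  have h0 : (0:ℝ) ∈ trajSet R p := ⟨⟨le_refl 0, zero_le_one⟩, by simpa using hx⟩
  exact le_antisymm (csInf_le (bddBelow_trajSet R p) h0) (entryTime_nonneg R p)

lemma exitTime_eq_one {R : ℝ} {p : Euc d × Euc d}
    (hy : p.2 ∈ closedBall (0 : Euc d) R) : exitTime R p = 1 := by
  have h1 : (1:ℝ) ∈ trajSet R p := ⟨⟨zero_le_one, le_refl 1⟩, by simpa using hy⟩
  have h2 : exitTime R p ≤ 1 := csSup_le ⟨1, h1⟩ fun t ht => ht.1.2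
  exact le_antisymm h2 (le_csSup (bddAbove_trajSet R p) h1)

end AuxMassBalance

/-- Mass balance: `λ(B_R) + f(∂B_R) = μ(B_R) + g(∂B_R)`. -/
theorem mass_balance {d : ℕ} (lam mu : Measure (Euc d))
    [IsFiniteMeasure lam] [IsFiniteMeasure mu]
    (hlK : HasCompactSupp lam) (hmK : HasCompactSupp mu)
    (hmass : lam univ = mu univ)
    (π : Measure (Euc d × Euc d)) (hπ : IsCoupling π lam mu)
    (R : ℝ) (hR : 0 < R) :
    lam (ball 0 R) + enterMeasure (OmegaAll (d := d) R) π R (sphere 0 R)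
      = mu (ball 0 R) + exitMeasure (OmegaAll (d := d) R) π R (sphere 0 R) := by
  obtain ⟨hπ1, hπ2⟩ := hπ
  have hF : Measurable (fun p : Euc d × Euc d => traj p.1 p.2 (entryTime R p)) :=
    continuous_traj.measurable.comp (measurable_id.prodMk (measurable_entryTime R))
  have hG : Measurable (fun p : Euc d × Euc d => traj p.1 p.2 (exitTime R p)) :=
    continuous_traj.measurable.comp (measurable_id.prodMk (measurable_exitTime R))
  have hOmeas : MeasurableSet (OmegaAll (d := d) R) := (isClosed_omega R).measurableSet
  have hEmeas : MeasurableSet (OmegaAll (d := d) R ∩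
      {p : Euc d × Euc d | traj p.1 p.2 (entryTime R p) ∈ sphere (0 : Euc d) R}) :=
    hOmeas.inter (hF isClosed_sphere.measurableSet)
  have hGmeas : MeasurableSet (OmegaAll (d := d) R ∩
      {p : Euc d × Euc d | traj p.1 p.2 (exitTime R p) ∈ sphere (0 : Euc d) R}) :=
    hOmeas.inter (hG isClosed_sphere.measurableSet)
  have hf : enterMeasure (OmegaAll (d := d) R) π R (sphere 0 R)
      = π (OmegaAll (d := d) R ∩
          {p : Euc d × Euc d | traj p.1 p.2 (entryTime R p) ∈ sphere (0 : Euc d) R}) := by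
    unfold enterMeasure
    rw [Measure.map_apply hF isClosed_sphere.measurableSet,
        Measure.restrict_apply (hF isClosed_sphere.measurableSet)]
    exact congrArg π (inter_eq_self_of_subset_right inter_subset_right)
  have hg : exitMeasure (OmegaAll (d := d) R) π R (sphere 0 R)
      = π (OmegaAll (d := d) R ∩
          {p : Euc d × Euc d | traj p.1 p.2 (exitTime R p) ∈ sphere (0 : Euc d) R}) := by
    unfold exitMeasure
    rw [Measure.map_apply hG isClosed_sphere.measurableSet,
        Measure.restrict_apply (hG isClosed_sphere.measurableSet)]
    exact congrArg π (inter_eq_self_of_subset_right inter_subset_right)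
  have hunionE : OmegaAll (d := d) R = (Prod.fst ⁻¹' ball (0 : Euc d) R) ∪
      (OmegaAll (d := d) R ∩
        {p : Euc d × Euc d | traj p.1 p.2 (entryTime R p) ∈ sphere (0 : Euc d) R}) := by
    apply subset_antisymm
    · intro p hp
      by_cases h : p.1 ∈ ball (0 : Euc d) R
      · exact Or.inl h
      · exact Or.inr ⟨hp, entry_sphere hp h⟩
    · apply union_subset
      · intro p hp
        exact ⟨0, ⟨le_refl 0, zero_le_one⟩, by simpa using ball_subset_closedBall hp⟩
      · exact inter_subset_left
  have hunionG : OmegaAll (d := d) R = (Prod.snd ⁻¹' ball (0 : Euc d) R) ∪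
      (OmegaAll (d := d) R ∩
        {p : Euc d × Euc d | traj p.1 p.2 (exitTime R p) ∈ sphere (0 : Euc d) R}) := by
    apply subset_antisymm
    · intro p hp
      by_cases h : p.2 ∈ ball (0 : Euc d) R
      · exact Or.inl h
      · exact Or.inr ⟨hp, exit_sphere hp h⟩
    · apply union_subset
      · intro p hp
        exact ⟨1, ⟨zero_le_one, le_refl 1⟩, by simpa using ball_subset_closedBall hp⟩
      · exact inter_subset_left
  have hdisjE : Disjoint (Prod.fst ⁻¹' ball (0 : Euc d) R)
      (OmegaAll (d := d) R ∩
        {p : Euc d × Euc d | traj p.1 p.2 (entryTime R p) ∈ sphere (0 : Euc d) R}) := by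
    rw [disjoint_left]
    rintro p hp ⟨_, hsp⟩
    have h0 : entryTime R p = 0 := entryTime_eq_zero (ball_subset_closedBall hp)
    rw [mem_setOf_eq, h0, traj_zero] at hsp
    have h1 : dist p.1 (0 : Euc d) < R := mem_ball.1 hp
    have h2 : dist p.1 (0 : Euc d) = R := mem_sphere.1 hsp
    linarith
  have hdisjG : Disjoint (Prod.snd ⁻¹' ball (0 : Euc d) R)
      (OmegaAll (d := d) R ∩
        {p : Euc d × Euc d | traj p.1 p.2 (exitTime R p) ∈ sphere (0 : Euc d) R}) := by
    rw [disjoint_left]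
    rintro p hp ⟨_, hsp⟩
    have h0 : exitTime R p = 1 := exitTime_eq_one (ball_subset_closedBall hp)
    rw [mem_setOf_eq, h0, traj_one] at hsp
    have h1 : dist p.2 (0 : Euc d) < R := mem_ball.1 hp
    have h2 : dist p.2 (0 : Euc d) = R := mem_sphere.1 hsp
    linarith
  have hlam : lam (ball 0 R) = π (Prod.fst ⁻¹' ball (0 : Euc d) R) := by
    rw [← hπ1, Measure.map_apply measurable_fst measurableSet_ball]
  have hmu : mu (ball 0 R) = π (Prod.snd ⁻¹' ball (0 : Euc d) R) := by
    rw [← hπ2, Measure.map_apply measurable_snd measurableSet_ball]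
  calc lam (ball 0 R) + enterMeasure (OmegaAll (d := d) R) π R (sphere 0 R)
      = π (Prod.fst ⁻¹' ball (0 : Euc d) R) + π (OmegaAll (d := d) R ∩
          {p : Euc d × Euc d | traj p.1 p.2 (entryTime R p) ∈ sphere (0 : Euc d) R}) := by
        rw [hlam, hf]
    _ = π (OmegaAll (d := d) R) := by rw [← measure_union hdisjE hEmeas, ← hunionE]
    _ = π (Prod.snd ⁻¹' ball (0 : Euc d) R) + π (OmegaAll (d := d) R ∩
          {p : Euc d × Euc d | traj p.1 p.2 (exitTime R p) ∈ sphere (0 : Euc d) R}) := by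
        rw [← measure_union hdisjG hGmeas, ← hunionG]
    _ = mu (ball 0 R) + exitMeasure (OmegaAll (d := d) R) π R (sphere 0 R) := by
        rw [← hmu, ← hg]


end
end

section
/- (All trajectories are short in the perturbative regime.) For every δ > 0 there exists ε = ε(d, δ) > 0 such that the following holds: if λ, μ are finite nonnegative Borel measures on ℝ^d with compact support and λ(ℝ^d) = μ(ℝ^d), π is an optimal plan for W(λ, μ), and E + D ≤ ε, then |x − y| ≤ δ for every (x, y) ∈ ((B_4 × ℝ^d) ∪ (ℝ^d × B_4)) ∩ supp π. -/
open MeasureTheory Metric Set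
open scoped ENNReal RealInnerProductSpace

noncomputable section

/-! ### Auxiliary machinery for the proof -/

set_option maxHeartbeats 1000000

/-- Transport cost of a plan. -/
def cost {d : ℕ} (π : Measure (Euc d × Euc d)) : ℝ≥0∞ :=
  ∫⁻ p, ENNReal.ofReal (‖p.1 - p.2‖ ^ 2) ∂π

lemma Fm (d : ℕ) : Measurable (fun p : Euc d × Euc d => ENNReal.ofReal (‖p.1 - p.2‖ ^ 2)) :=
  (((measurable_fst.sub measurable_snd).norm).pow_const 2).ennreal_ofReal

lemma cost_add {d : ℕ} (a b : Measure (Euc d × Euc d)) : cost (a + b) = cost a + cost b :=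
  lintegral_add_measure _ a b

lemma cost_smul {d : ℕ} (c : ℝ≥0∞) (a : Measure (Euc d × Euc d)) : cost (c • a) = c * cost a :=
  lintegral_smul_measure c _

lemma cost_mono {d : ℕ} {a b : Measure (Euc d × Euc d)} (h : a ≤ b) : cost a ≤ cost b :=
  lintegral_mono' h le_rfl

lemma exists_mem_msupp {α : Type*} [TopologicalSpace α] [SecondCountableTopology α]
    [MeasurableSpace α] {ν : Measure α} {G : Set α} (hG : IsOpen G) (h : ν G ≠ 0) :
    ∃ p ∈ G, p ∈ msupp ν := by
  by_contra hc
  push_neg at hc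
  apply h
  have : ∀ p ∈ G, ∃ U : Set α, IsOpen U ∧ p ∈ U ∧ ν U = 0 := by
    intro p hp
    obtain ⟨U, hU, hpU, hν⟩ := by simpa [msupp, not_lt, le_zero_iff] using hc p hp
    exact ⟨U, hU, hpU, hν⟩
  set S : Set (Set α) := {U | IsOpen U ∧ ν U = 0} with hS
  obtain ⟨T, hTc, hTS, hTU⟩ := TopologicalSpace.isOpen_sUnion_countable S (fun U hU => hU.1)
  have hsub : G ⊆ ⋃₀ S := fun p hp => by
    obtain ⟨U, h1, h2, h3⟩ := this p hp; exact ⟨U, ⟨h1, h3⟩, h2⟩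
  have : ν (⋃₀ T) = 0 := (measure_sUnion_null_iff hTc).2 (fun U hU => (hTS hU).2)
  exact measure_mono_null (hTU ▸ hsub) this

lemma W2_le_cost {d : ℕ} {π : Measure (Euc d × Euc d)} {lam mu : Measure (Euc d)}
    (h : IsCoupling π lam mu) : W2 lam mu ≤ cost π :=
  iInf_le_of_le π (iInf_le_of_le h le_rfl)

lemma exists_coupling_of_W2_lt {d : ℕ} {lam mu : Measure (Euc d)} {c : ℝ≥0∞}
    (h : W2 lam mu < c) : ∃ π : Measure (Euc d × Euc d), IsCoupling π lam mu ∧ cost π < c := by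
  rw [W2, iInf_lt_iff] at h
  obtain ⟨π, hπ⟩ := h
  rw [iInf_lt_iff] at hπ
  obtain ⟨h1, h2⟩ := hπ
  exact ⟨π, h1, h2⟩

lemma cheb {d : ℕ} (π : Measure (Euc d × Euc d)) {S T : Set (Euc d × Euc d)}
    (hT : MeasurableSet T) (hST : S ⊆ T) {c : ℝ} (hc : 0 ≤ c)
    (hS : ∀ p ∈ S, c ≤ ‖p.1 - p.2‖) :
    ENNReal.ofReal (c ^ 2) * π S ≤ ∫⁻ p in T, ENNReal.ofReal (‖p.1 - p.2‖ ^ 2) ∂π := by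
  set S' : Set (Euc d × Euc d) := T ∩ {p | c ≤ ‖p.1 - p.2‖} with hS'
  have hS'm : MeasurableSet S' :=
    hT.inter (measurableSet_le measurable_const ((measurable_fst.sub measurable_snd).norm))
  have h1 : π S ≤ π S' := measure_mono (fun p hp => ⟨hST hp, hS p hp⟩)
  calc ENNReal.ofReal (c ^ 2) * π S ≤ ENNReal.ofReal (c ^ 2) * π S' := by gcongr
    _ = ∫⁻ _ in S', ENNReal.ofReal (c ^ 2) ∂π := by rw [setLIntegral_const, mul_comm]
    _ ≤ ∫⁻ p in S', ENNReal.ofReal (‖p.1 - p.2‖ ^ 2) ∂π := by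
        refine setLIntegral_mono_ae (Fm d).aemeasurable ?_
        filter_upwards with p hp
        have : c ≤ ‖p.1 - p.2‖ := hp.2
        exact ENNReal.ofReal_le_ofReal (by nlinarith)
    _ ≤ ∫⁻ p in T, ENNReal.ofReal (‖p.1 - p.2‖ ^ 2) ∂π :=
        lintegral_mono_set (inter_subset_left)

lemma cost_map_swap {d : ℕ} (π : Measure (Euc d × Euc d)) :
    cost (π.map Prod.swap) = cost π := by
  rw [cost, lintegral_map (Fm d) measurable_swap]
  simp only [cost, Prod.fst_swap, Prod.snd_swap, norm_sub_rev]

lemma isCoupling_swap {d : ℕ} {π : Measure (Euc d × Euc d)} {lam mu : Measure (Euc d)}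
    (h : IsCoupling π lam mu) : IsCoupling (π.map Prod.swap) mu lam := by
  constructor
  · rw [Measure.map_map measurable_fst measurable_swap]; exact h.2
  · rw [Measure.map_map measurable_snd measurable_swap]; exact h.1

lemma W2_comm {d : ℕ} (lam mu : Measure (Euc d)) : W2 lam mu = W2 mu lam := by
  have key : ∀ a b : Measure (Euc d), W2 a b ≤ W2 b a := by
    intro a b
    refine le_iInf fun π => le_iInf fun hπ => ?_
    calc W2 a b ≤ cost (π.map Prod.swap) := W2_le_cost (isCoupling_swap hπ)
      _ = cost π := cost_map_swap π
  exact le_antisymm (key lam mu) (key mu lam)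

lemma W2_lt_top {d : ℕ} {lam mu : Measure (Euc d)} [IsFiniteMeasure lam] [IsFiniteMeasure mu]
    (hl : HasCompactSupp lam) (hm : HasCompactSupp mu) (hmass : lam univ = mu univ) :
    W2 lam mu < ⊤ := by
  obtain ⟨K, hK, hKn⟩ := hl
  obtain ⟨K', hK', hKn'⟩ := hm
  rcases eq_or_ne (mu univ) 0 with h0 | h0
  · -- lam = mu = 0
    have hl0 : lam = 0 := Measure.measure_univ_eq_zero.mp (hmass.trans h0)
    have hm0 : mu = 0 := Measure.measure_univ_eq_zero.mp h0
    have : IsCoupling (0 : Measure (Euc d × Euc d)) lam mu := by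
      constructor <;> simp [hl0, hm0]
    calc W2 lam mu ≤ cost 0 := W2_le_cost this
      _ = 0 := by simp [cost]
      _ < ⊤ := by simp
  · set M := mu univ
    have hMfin : M ≠ ⊤ := measure_ne_top mu univ
    set π : Measure (Euc d × Euc d) := M⁻¹ • (lam.prod mu) with hπdef
    have hcoup : IsCoupling π lam mu := by
      constructor
      · rw [hπdef, Measure.map_smul]
        have : Measure.map Prod.fst (lam.prod mu) = M • lam := by
          ext s hs
          rw [Measure.map_apply measurable_fst hs, Measure.smul_apply, smul_eq_mul]
          have : (Prod.fst ⁻¹' s : Set (Euc d × Euc d)) = s ×ˢ univ := by ext p; simp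
          rw [this, Measure.prod_prod, mul_comm]
        rw [this, smul_smul, ENNReal.inv_mul_cancel h0 hMfin, one_smul]
      · rw [hπdef, Measure.map_smul]
        have : Measure.map Prod.snd (lam.prod mu) = M • mu := by
          ext s hs
          rw [Measure.map_apply measurable_snd hs, Measure.smul_apply, smul_eq_mul]
          have : (Prod.snd ⁻¹' s : Set (Euc d × Euc d)) = univ ×ˢ s := by ext p; simp
          rw [this, Measure.prod_prod, hmass]
        rw [this, smul_smul, ENNReal.inv_mul_cancel h0 hMfin, one_smul]
    refine lt_of_le_of_lt (W2_le_cost hcoup) ?_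
    -- cost of product coupling is finite
    obtain ⟨R, hR⟩ := hK.isBounded.subset_closedBall 0
    obtain ⟨R', hR'⟩ := hK'.isBounded.subset_closedBall 0
    have hnull : (lam.prod mu) ((K ×ˢ K')ᶜ) = 0 := by
      have hsub : (K ×ˢ K')ᶜ ⊆ (Kᶜ ×ˢ univ) ∪ (univ ×ˢ K'ᶜ) := by
        intro p hp
        simp only [mem_compl_iff, mem_prod, not_and_or] at hp
        rcases hp with hp | hp
        · exact Or.inl ⟨hp, mem_univ _⟩
        · exact Or.inr ⟨mem_univ _, hp⟩
      refine measure_mono_null hsub (le_antisymm (le_trans (measure_union_le _ _) ?_) zero_le)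
      rw [Measure.prod_prod, Measure.prod_prod, hKn, hKn']
      simp
    have hbound : ∀ p ∈ K ×ˢ K', ENNReal.ofReal (‖(p : Euc d × Euc d).1 - p.2‖ ^ 2) ≤ ENNReal.ofReal ((R + R') ^ 2) := by
      intro p hp
      refine ENNReal.ofReal_le_ofReal ?_
      have h1 : ‖p.1‖ ≤ R := by simpa [dist_eq_norm] using hR hp.1
      have h2 : ‖p.2‖ ≤ R' := by simpa [dist_eq_norm] using hR' hp.2
      have h3 : ‖p.1 - p.2‖ ≤ R + R' := le_trans (norm_sub_le _ _) (by linarith)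
      nlinarith [norm_nonneg (p.1 - p.2), norm_nonneg p.1, norm_nonneg p.2]
    have : cost π = M⁻¹ * ∫⁻ p, ENNReal.ofReal (‖p.1 - p.2‖ ^ 2) ∂(lam.prod mu) := by
      rw [cost, hπdef, lintegral_smul_measure, smul_eq_mul]
    rw [this]
    have hsplit : ∫⁻ p, ENNReal.ofReal (‖p.1 - p.2‖ ^ 2) ∂(lam.prod mu)
        = ∫⁻ p in K ×ˢ K', ENNReal.ofReal (‖p.1 - p.2‖ ^ 2) ∂(lam.prod mu) := by
      rw [← lintegral_add_compl _ ((hK.measurableSet).prod (hK'.measurableSet))]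
      rw [setLIntegral_measure_zero _ _ hnull, add_zero]
    rw [hsplit]
    have hle : ∫⁻ p in K ×ˢ K', ENNReal.ofReal (‖p.1 - p.2‖ ^ 2) ∂(lam.prod mu)
        ≤ ENNReal.ofReal ((R + R') ^ 2) * (lam.prod mu) (K ×ˢ K') := by
      calc ∫⁻ p in K ×ˢ K', ENNReal.ofReal (‖p.1 - p.2‖ ^ 2) ∂(lam.prod mu)
          ≤ ∫⁻ _ in K ×ˢ K', ENNReal.ofReal ((R + R') ^ 2) ∂(lam.prod mu) := by
            refine setLIntegral_mono_ae aemeasurable_const ?_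
            filter_upwards with p hp
            exact hbound p hp
        _ = ENNReal.ofReal ((R + R') ^ 2) * (lam.prod mu) (K ×ˢ K') := by
            rw [setLIntegral_const, mul_comm]
    refine lt_of_le_of_lt (mul_le_mul_right hle _) ?_
    refine ENNReal.mul_lt_top (ENNReal.inv_lt_top.2 (pos_iff_ne_zero.2 h0)) ?_
    exact ENNReal.mul_lt_top ENNReal.ofReal_lt_top (measure_lt_top _ _)

lemma improvement {d : ℕ} {π : Measure (Euc d × Euc d)} {lam mu : Measure (Euc d)}
    (hc : IsCoupling π lam mu) [IsFiniteMeasure π] (hfin : cost π ≠ ⊤)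
    {U1 V1 U2 V2 : Set (Euc d)}
    (hU1 : MeasurableSet U1) (hV1 : MeasurableSet V1)
    (hU2 : MeasurableSet U2) (hV2 : MeasurableSet V2)
    (hdisj : Disjoint V1 V2)
    (hA : π (U1 ×ˢ V1) ≠ 0) (hB : π (U2 ×ˢ V2) ≠ 0)
    {S1 S2 I1 : ℝ} (hS1 : 0 ≤ S1) (hS2 : 0 ≤ S2)
    (hb1 : ∀ a ∈ U1, ∀ e ∈ V2, ‖a - e‖ ^ 2 ≤ S1)
    (hb2 : ∀ c ∈ U2, ∀ b ∈ V1, ‖c - b‖ ^ 2 ≤ S2)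
    (hlo : ∀ a ∈ U1, ∀ b ∈ V1, I1 ≤ ‖a - b‖ ^ 2)
    (hgap : S1 + S2 < I1) :
    ∃ π' : Measure (Euc d × Euc d), IsCoupling π' lam mu ∧ cost π' < cost π := by
  classical
  set A := U1 ×ˢ V1 with hAdef
  set B := U2 ×ˢ V2 with hBdef
  have hAm : MeasurableSet A := hU1.prod hV1
  have hBm : MeasurableSet B := hU2.prod hV2
  have hABdisj : Disjoint A B := by
    rw [Set.disjoint_iff_forall_ne]
    rintro p hp q hq rfl
    exact (Set.disjoint_iff_forall_ne.mp hdisj hp.2 hq.2) rfl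
  set m := min (π A) (π B) with hmdef
  have hm0 : m ≠ 0 := by
    simp only [hmdef, ne_eq, min_eq_iff]
    rintro (⟨h, -⟩ | ⟨h, -⟩) <;> [exact hA h; exact hB h]
  have hmtop : m ≠ ⊤ := ne_top_of_le_ne_top (measure_ne_top π A) (min_le_left _ _)
  have hmA : m ≤ π A := min_le_left _ _
  have hmB : m ≤ π B := min_le_right _ _
  have hπA0 : π A ≠ 0 := hA
  have hπB0 : π B ≠ 0 := hB
  have hπAt : π A ≠ ⊤ := measure_ne_top _ _
  have hπBt : π B ≠ ⊤ := measure_ne_top _ _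
  set c1 : ℝ≥0∞ := m / π A with hc1def
  set c2 : ℝ≥0∞ := m / π B with hc2def
  have hc1le : c1 ≤ 1 := ENNReal.div_le_of_le_mul (by simpa using hmA)
  have hc2le : c2 ≤ 1 := ENNReal.div_le_of_le_mul (by simpa using hmB)
  have hc1t : c1 ≠ ⊤ := ne_top_of_le_ne_top ENNReal.one_ne_top hc1le
  have hc2t : c2 ≠ ⊤ := ne_top_of_le_ne_top ENNReal.one_ne_top hc2le
  have hc1A : c1 * π A = m := by
    rw [hc1def, ENNReal.div_mul_cancel hπA0 hπAt]
  have hc2B : c2 * π B = m := by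
    rw [hc2def, ENNReal.div_mul_cancel hπB0 hπBt]
  -- pieces
  set π1 : Measure (Euc d × Euc d) := c1 • π.restrict A with hπ1def
  set π2 : Measure (Euc d × Euc d) := c2 • π.restrict B with hπ2def
  set ν1 : Measure (Euc d) := π1.map Prod.fst with hν1def
  set ν2 : Measure (Euc d) := π2.map Prod.fst with hν2def
  set κ1 : Measure (Euc d) := π1.map Prod.snd with hκ1def
  set κ2 : Measure (Euc d) := π2.map Prod.snd with hκ2def
  have hπ1univ : π1 univ = m := by
    rw [hπ1def, Measure.smul_apply, smul_eq_mul, Measure.restrict_apply MeasurableSet.univ,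
      univ_inter, hc1A]
  have hπ2univ : π2 univ = m := by
    rw [hπ2def, Measure.smul_apply, smul_eq_mul, Measure.restrict_apply MeasurableSet.univ,
      univ_inter, hc2B]
  have hν1univ : ν1 univ = m := by
    rw [hν1def, Measure.map_apply measurable_fst MeasurableSet.univ, preimage_univ, hπ1univ]
  have hν2univ : ν2 univ = m := by
    rw [hν2def, Measure.map_apply measurable_fst MeasurableSet.univ, preimage_univ, hπ2univ]
  have hκ1univ : κ1 univ = m := by
    rw [hκ1def, Measure.map_apply measurable_snd MeasurableSet.univ, preimage_univ, hπ1univ]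
  have hκ2univ : κ2 univ = m := by
    rw [hκ2def, Measure.map_apply measurable_snd MeasurableSet.univ, preimage_univ, hπ2univ]
  haveI : IsFiniteMeasure ν1 := ⟨by rw [hν1univ]; exact hmtop.lt_top⟩
  haveI : IsFiniteMeasure ν2 := ⟨by rw [hν2univ]; exact hmtop.lt_top⟩
  haveI : IsFiniteMeasure κ1 := ⟨by rw [hκ1univ]; exact hmtop.lt_top⟩
  haveI : IsFiniteMeasure κ2 := ⟨by rw [hκ2univ]; exact hmtop.lt_top⟩
  set swap : Measure (Euc d × Euc d) := m⁻¹ • (ν1.prod κ2) + m⁻¹ • (ν2.prod κ1) with hswapdef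
  set π' : Measure (Euc d × Euc d) :=
    π.restrict (A ∪ B)ᶜ + ((1 - c1) • π.restrict A + ((1 - c2) • π.restrict B + swap)) with hπ'def
  -- general helper: fst/snd of product
  have fst_prod : ∀ (a b : Measure (Euc d)) (_ : IsFiniteMeasure a) (_ : IsFiniteMeasure b),
      (a.prod b).map Prod.fst = b univ • a := by
    intro a b ha hb
    ext s hs
    rw [Measure.map_apply measurable_fst hs, Measure.smul_apply, smul_eq_mul]
    have : (Prod.fst ⁻¹' s : Set (Euc d × Euc d)) = s ×ˢ univ := by ext p; simp
    rw [this, Measure.prod_prod, mul_comm]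
  have snd_prod : ∀ (a b : Measure (Euc d)) (_ : IsFiniteMeasure a) (_ : IsFiniteMeasure b),
      (a.prod b).map Prod.snd = a univ • b := by
    intro a b ha hb
    ext s hs
    rw [Measure.map_apply measurable_snd hs, Measure.smul_apply, smul_eq_mul]
    have : (Prod.snd ⁻¹' s : Set (Euc d × Euc d)) = univ ×ˢ s := by ext p; simp
    rw [this, Measure.prod_prod]
  have hdecomp : π = π.restrict (A ∪ B)ᶜ + (π.restrict A + π.restrict B) := by
    rw [← Measure.restrict_union hABdisj hBm]
    rw [add_comm]
    exact (Measure.restrict_add_restrict_compl (hAm.union hBm)).symm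
  -- marginals of swap
  have hswap_fst : swap.map Prod.fst = c1 • (π.restrict A).map Prod.fst
      + c2 • (π.restrict B).map Prod.fst := by
    rw [hswapdef, Measure.map_add _ _ measurable_fst, Measure.map_smul, Measure.map_smul,
      fst_prod ν1 κ2 inferInstance inferInstance, fst_prod ν2 κ1 inferInstance inferInstance,
      hκ2univ, hκ1univ, smul_smul, smul_smul, ENNReal.inv_mul_cancel hm0 hmtop, one_smul, one_smul,
      hν1def, hν2def, hπ1def, hπ2def, Measure.map_smul, Measure.map_smul]
  have hswap_snd : swap.map Prod.snd = c1 • (π.restrict A).map Prod.snd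
      + c2 • (π.restrict B).map Prod.snd := by
    rw [hswapdef, Measure.map_add _ _ measurable_snd, Measure.map_smul, Measure.map_smul,
      snd_prod ν1 κ2 inferInstance inferInstance, snd_prod ν2 κ1 inferInstance inferInstance,
      hν1univ, hν2univ, smul_smul, smul_smul, ENNReal.inv_mul_cancel hm0 hmtop, one_smul, one_smul,
      hκ1def, hκ2def, hπ1def, hπ2def, Measure.map_smul, Measure.map_smul, add_comm]
  have hrecombine : ∀ X : Measure (Euc d), (1 - c1) • X + c1 • X = X := by
    intro X
    rw [← add_smul, tsub_add_cancel_of_le hc1le, one_smul]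
  have hrecombine2 : ∀ X : Measure (Euc d), (1 - c2) • X + c2 • X = X := by
    intro X
    rw [← add_smul, tsub_add_cancel_of_le hc2le, one_smul]
  have hXfst : π.map Prod.fst = (π.restrict (A ∪ B)ᶜ).map Prod.fst
      + ((π.restrict A).map Prod.fst + (π.restrict B).map Prod.fst) := by
    conv_lhs => rw [hdecomp]
    rw [Measure.map_add _ _ measurable_fst, Measure.map_add _ _ measurable_fst]
  have hXsnd : π.map Prod.snd = (π.restrict (A ∪ B)ᶜ).map Prod.snd
      + ((π.restrict A).map Prod.snd + (π.restrict B).map Prod.snd) := by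
    conv_lhs => rw [hdecomp]
    rw [Measure.map_add _ _ measurable_snd, Measure.map_add _ _ measurable_snd]
  have hcoup' : IsCoupling π' lam mu := by
    constructor
    · rw [← hc.1, hπ'def, Measure.map_add _ _ measurable_fst, Measure.map_add _ _ measurable_fst,
        Measure.map_add _ _ measurable_fst, Measure.map_smul, Measure.map_smul, hswap_fst]
      set X := (π.restrict A).map Prod.fst
      set Y := (π.restrict B).map Prod.fst
      calc (π.restrict (A ∪ B)ᶜ).map Prod.fst
            + ((1 - c1) • X + ((1 - c2) • Y + (c1 • X + c2 • Y)))
          = (π.restrict (A ∪ B)ᶜ).map Prod.fst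
            + (((1 - c1) • X + c1 • X) + ((1 - c2) • Y + c2 • Y)) := by abel
        _ = (π.restrict (A ∪ B)ᶜ).map Prod.fst + (X + Y) := by
            rw [hrecombine, hrecombine2]
        _ = π.map Prod.fst := hXfst.symm
    · rw [← hc.2, hπ'def, Measure.map_add _ _ measurable_snd, Measure.map_add _ _ measurable_snd,
        Measure.map_add _ _ measurable_snd, Measure.map_smul, Measure.map_smul, hswap_snd]
      set X := (π.restrict A).map Prod.snd
      set Y := (π.restrict B).map Prod.snd
      calc (π.restrict (A ∪ B)ᶜ).map Prod.snd
            + ((1 - c1) • X + ((1 - c2) • Y + (c1 • X + c2 • Y)))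
          = (π.restrict (A ∪ B)ᶜ).map Prod.snd
            + (((1 - c1) • X + c1 • X) + ((1 - c2) • Y + c2 • Y)) := by abel
        _ = (π.restrict (A ∪ B)ᶜ).map Prod.snd + (X + Y) := by
            rw [hrecombine, hrecombine2]
        _ = π.map Prod.snd := hXsnd.symm
  -- cost analysis
  refine ⟨π', hcoup', ?_⟩
  set K := cost (π.restrict (A ∪ B)ᶜ) with hKdef
  set CA := cost (π.restrict A) with hCAdef
  set CB := cost (π.restrict B) with hCBdef
  have hcostπ : cost π = K + (CA + CB) := by
    conv_lhs => rw [hdecomp]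
    rw [cost_add, cost_add]
  have hCAle : CA ≤ cost π := cost_mono Measure.restrict_le_self
  have hCBle : CB ≤ cost π := cost_mono Measure.restrict_le_self
  have hKle : K ≤ cost π := cost_mono Measure.restrict_le_self
  have hCAt : CA ≠ ⊤ := ne_top_of_le_ne_top hfin hCAle
  have hCBt : CB ≠ ⊤ := ne_top_of_le_ne_top hfin hCBle
  have hKt : K ≠ ⊤ := ne_top_of_le_ne_top hfin hKle
  -- null sets of marginal pieces
  have hν1null : ν1 U1ᶜ = 0 := by
    rw [hν1def, Measure.map_apply measurable_fst hU1.compl, hπ1def, Measure.smul_apply,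
      smul_eq_mul, Measure.restrict_apply (measurable_fst hU1.compl)]
    have : (Prod.fst ⁻¹' U1ᶜ) ∩ A = ∅ := by
      ext p; simp only [hAdef, mem_inter_iff, mem_preimage, mem_compl_iff, mem_prod,
        mem_empty_iff_false, iff_false, not_and]
      tauto
    rw [this, measure_empty, mul_zero]
  have hν2null : ν2 U2ᶜ = 0 := by
    rw [hν2def, Measure.map_apply measurable_fst hU2.compl, hπ2def, Measure.smul_apply,
      smul_eq_mul, Measure.restrict_apply (measurable_fst hU2.compl)]
    have : (Prod.fst ⁻¹' U2ᶜ) ∩ B = ∅ := by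
      ext p; simp only [hBdef, mem_inter_iff, mem_preimage, mem_compl_iff, mem_prod,
        mem_empty_iff_false, iff_false, not_and]
      tauto
    rw [this, measure_empty, mul_zero]
  have hκ1null : κ1 V1ᶜ = 0 := by
    rw [hκ1def, Measure.map_apply measurable_snd hV1.compl, hπ1def, Measure.smul_apply,
      smul_eq_mul, Measure.restrict_apply (measurable_snd hV1.compl)]
    have : (Prod.snd ⁻¹' V1ᶜ) ∩ A = ∅ := by
      ext p; simp only [hAdef, mem_inter_iff, mem_preimage, mem_compl_iff, mem_prod,
        mem_empty_iff_false, iff_false, not_and]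
      tauto
    rw [this, measure_empty, mul_zero]
  have hκ2null : κ2 V2ᶜ = 0 := by
    rw [hκ2def, Measure.map_apply measurable_snd hV2.compl, hπ2def, Measure.smul_apply,
      smul_eq_mul, Measure.restrict_apply (measurable_snd hV2.compl)]
    have : (Prod.snd ⁻¹' V2ᶜ) ∩ B = ∅ := by
      ext p; simp only [hBdef, mem_inter_iff, mem_preimage, mem_compl_iff, mem_prod,
        mem_empty_iff_false, iff_false, not_and]
      tauto
    rw [this, measure_empty, mul_zero]
  -- bound cost of a product piece
  have prod_cost_bound : ∀ (a b : Measure (Euc d)) (_ : IsFiniteMeasure a) (_ : IsFiniteMeasure b)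
      (U V : Set (Euc d)) (_ : MeasurableSet U) (_ : MeasurableSet V)
      (_ : a Uᶜ = 0) (_ : b Vᶜ = 0) (S : ℝ)
      (_ : ∀ u ∈ U, ∀ v ∈ V, ‖u - v‖ ^ 2 ≤ S),
      cost (a.prod b) ≤ ENNReal.ofReal S * (a univ * b univ) := by
    intro a b ha hb U V hU hV haU hbV S hS
    have hnull : (a.prod b) ((U ×ˢ V)ᶜ) = 0 := by
      have hsub : (U ×ˢ V)ᶜ ⊆ (Uᶜ ×ˢ univ) ∪ (univ ×ˢ Vᶜ) := by
        intro p hp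
        simp only [mem_compl_iff, mem_prod, not_and_or] at hp
        rcases hp with hp | hp
        · exact Or.inl ⟨hp, mem_univ _⟩
        · exact Or.inr ⟨mem_univ _, hp⟩
      refine measure_mono_null hsub (le_antisymm (le_trans (measure_union_le _ _) ?_) zero_le)
      rw [Measure.prod_prod, Measure.prod_prod, haU, hbV]
      simp
    have hsplit : cost (a.prod b) = ∫⁻ p in U ×ˢ V, ENNReal.ofReal (‖p.1 - p.2‖ ^ 2) ∂(a.prod b) := by
      rw [cost, ← lintegral_add_compl _ ((hU.prod hV)), setLIntegral_measure_zero _ _ hnull,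
        add_zero]
    rw [hsplit]
    calc ∫⁻ p in U ×ˢ V, ENNReal.ofReal (‖p.1 - p.2‖ ^ 2) ∂(a.prod b)
        ≤ ∫⁻ _ in U ×ˢ V, ENNReal.ofReal S ∂(a.prod b) := by
          refine setLIntegral_mono_ae aemeasurable_const ?_
          filter_upwards with p hp
          exact ENNReal.ofReal_le_ofReal (hS p.1 hp.1 p.2 hp.2)
      _ = ENNReal.ofReal S * (a.prod b) (U ×ˢ V) := by rw [setLIntegral_const, mul_comm]
      _ ≤ ENNReal.ofReal S * (a univ * b univ) := by
          rw [Measure.prod_prod]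
          exact mul_le_mul_right (mul_le_mul' (measure_mono (subset_univ U))
            (measure_mono (subset_univ V))) _
  have hcost1 : cost (ν1.prod κ2) ≤ ENNReal.ofReal S1 * (m * m) := by
    have := prod_cost_bound ν1 κ2 inferInstance inferInstance U1 V2 hU1 hV2 hν1null hκ2null S1 hb1
    rwa [hν1univ, hκ2univ] at this
  have hcost2 : cost (ν2.prod κ1) ≤ ENNReal.ofReal S2 * (m * m) := by
    have := prod_cost_bound ν2 κ1 inferInstance inferInstance U2 V1 hU2 hV1 hν2null hκ1null S2 hb2
    rwa [hν2univ, hκ1univ] at this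
  have hswapcost : cost swap ≤ m * ENNReal.ofReal (S1 + S2) := by
    rw [hswapdef, cost_add, cost_smul, cost_smul]
    have e1 : m⁻¹ * (ENNReal.ofReal S1 * (m * m)) = ENNReal.ofReal S1 * m := by
      calc m⁻¹ * (ENNReal.ofReal S1 * (m * m)) = ENNReal.ofReal S1 * m * (m⁻¹ * m) := by ring
        _ = ENNReal.ofReal S1 * m := by rw [ENNReal.inv_mul_cancel hm0 hmtop, mul_one]
    have e2 : m⁻¹ * (ENNReal.ofReal S2 * (m * m)) = ENNReal.ofReal S2 * m := by
      calc m⁻¹ * (ENNReal.ofReal S2 * (m * m)) = ENNReal.ofReal S2 * m * (m⁻¹ * m) := by ring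
        _ = ENNReal.ofReal S2 * m := by rw [ENNReal.inv_mul_cancel hm0 hmtop, mul_one]
    calc m⁻¹ * cost (ν1.prod κ2) + m⁻¹ * cost (ν2.prod κ1)
        ≤ m⁻¹ * (ENNReal.ofReal S1 * (m * m)) + m⁻¹ * (ENNReal.ofReal S2 * (m * m)) := by gcongr
      _ = ENNReal.ofReal S1 * m + ENNReal.ofReal S2 * m := by rw [e1, e2]
      _ = m * ENNReal.ofReal (S1 + S2) := by
          rw [ENNReal.ofReal_add hS1 hS2]; ring
  have hlowCA : ENNReal.ofReal I1 * π A ≤ CA := by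
    rw [hCAdef, cost]
    have : ∫⁻ p, ENNReal.ofReal (‖p.1 - p.2‖ ^ 2) ∂(π.restrict A)
        = ∫⁻ p in A, ENNReal.ofReal (‖p.1 - p.2‖ ^ 2) ∂π := rfl
    rw [this]
    calc ENNReal.ofReal I1 * π A = ∫⁻ _ in A, ENNReal.ofReal I1 ∂π := by
          rw [setLIntegral_const, mul_comm]
      _ ≤ ∫⁻ p in A, ENNReal.ofReal (‖p.1 - p.2‖ ^ 2) ∂π := by
          refine setLIntegral_mono_ae (Fm d).aemeasurable ?_
          filter_upwards with p hp
          exact ENNReal.ofReal_le_ofReal (hlo p.1 hp.1 p.2 hp.2)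
  have hlower : ENNReal.ofReal I1 * m ≤ c1 * CA := by
    calc ENNReal.ofReal I1 * m = ENNReal.ofReal I1 * (c1 * π A) := by rw [hc1A]
      _ = c1 * (ENNReal.ofReal I1 * π A) := by ring
      _ ≤ c1 * CA := by gcongr
  have hI1m_le_CA : ENNReal.ofReal I1 * m ≤ CA := by
    calc ENNReal.ofReal I1 * m ≤ c1 * CA := hlower
      _ ≤ 1 * CA := by gcongr
      _ = CA := one_mul _
  have hI1m_t : ENNReal.ofReal I1 * m ≠ ⊤ := ne_top_of_le_ne_top hCAt hI1m_le_CA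
  -- assemble
  have hcostπ' : cost π' = K + ((1 - c1) * CA + ((1 - c2) * CB + cost swap)) := by
    rw [hπ'def, cost_add, cost_add, cost_add, cost_smul, cost_smul]
  have hsub1 : (1 - c1) * CA ≤ CA - ENNReal.ofReal I1 * m := by
    have : (1 - c1) * CA = 1 * CA - c1 * CA :=
      ENNReal.sub_mul (fun _ _ => hCAt)
    rw [this, one_mul]
    exact tsub_le_tsub_left hlower CA
  have hsub2 : (1 - c2) * CB ≤ CB := by
    calc (1 - c2) * CB ≤ 1 * CB := by gcongr; exact tsub_le_self
      _ = CB := one_mul _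
  have hmain : cost π' ≤ K + ((CA - ENNReal.ofReal I1 * m)
      + (CB + m * ENNReal.ofReal (S1 + S2))) := by
    rw [hcostπ']
    gcongr
  refine lt_of_le_of_lt hmain ?_
  rw [hcostπ]
  have hstrict : (CA - ENNReal.ofReal I1 * m) + (CB + m * ENNReal.ofReal (S1 + S2))
      < CA + CB := by
    have hI1pos : 0 < I1 := lt_of_le_of_lt (add_nonneg hS1 hS2) hgap
    have hslt : m * ENNReal.ofReal (S1 + S2) < ENNReal.ofReal I1 * m := by
      rw [mul_comm (ENNReal.ofReal I1) m]
      refine ENNReal.mul_lt_mul_right hm0 hmtop ?_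
      exact (ENNReal.ofReal_lt_ofReal_iff hI1pos).2 hgap
    calc (CA - ENNReal.ofReal I1 * m) + (CB + m * ENNReal.ofReal (S1 + S2))
        = ((CA - ENNReal.ofReal I1 * m) + m * ENNReal.ofReal (S1 + S2)) + CB := by ring
      _ < ((CA - ENNReal.ofReal I1 * m) + ENNReal.ofReal I1 * m) + CB := by
          refine ENNReal.add_lt_add_right hCBt ?_
          exact ENNReal.add_lt_add_left (by
            exact ne_top_of_le_ne_top hCAt tsub_le_self) hslt
      _ = CA + CB := by rw [tsub_add_cancel_of_le hI1m_le_CA]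
  exact ENNReal.add_lt_add_left hKt hstrict

lemma mass_lower {d : ℕ} (lam : Measure (Euc d)) [IsFiniteMeasure lam] {ε : ℝ} (hε : 0 < ε)
    (hdata : W2 (lam.restrict (ball 0 5))
      (ENNReal.ofReal (kappa5 lam) • volume.restrict (ball 0 5)) ≤ ENNReal.ofReal ε)
    (hκ : 1/2 ≤ kappa5 lam) {z : Euc d} {s : ℝ} (hs : 0 < s) (hz : ball z s ⊆ ball (0:Euc d) 5) :
    (1/2) * (volume (ball (0:Euc d) (s/2))).toReal
      ≤ (lam (ball z s)).toReal + 2*ε/((s/2)^2) := by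
  have h2 : W2 (lam.restrict (ball 0 5))
      (ENNReal.ofReal (kappa5 lam) • volume.restrict (ball 0 5)) < ENNReal.ofReal (2*ε) :=
    lt_of_le_of_lt hdata ((ENNReal.ofReal_lt_ofReal_iff (by linarith)).2 (by linarith))
  obtain ⟨π₀, hπ₀c, hπ₀cost⟩ := exists_coupling_of_W2_lt h2
  set Sbad : Set (Euc d × Euc d) := {p | s/2 ≤ ‖p.1 - p.2‖} with hSbad
  have hincl : (univ ×ˢ ball z (s/2) : Set (Euc d × Euc d)) ⊆ (ball z s ×ˢ univ) ∪ Sbad := by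
    rintro ⟨a, b⟩ ⟨-, hb⟩
    by_cases hab : s/2 ≤ ‖a - b‖
    · exact Or.inr hab
    · push_neg at hab
      refine Or.inl ⟨?_, mem_univ _⟩
      have : dist a z ≤ ‖a - b‖ + dist b z := by
        rw [← dist_eq_norm]; exact dist_triangle a b z
      rw [mem_ball] at hb ⊢
      show dist a z < s
      linarith
  have hlhs : π₀ (univ ×ˢ ball z (s/2))
      = ENNReal.ofReal (kappa5 lam) * volume (ball z (s/2)) := by
    have hmeas : MeasurableSet (ball z (s/2)) := measurableSet_ball
    have : π₀ (univ ×ˢ ball z (s/2)) = π₀ (Prod.snd ⁻¹' (ball z (s/2))) := by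
      congr 1; ext p; simp
    rw [this, ← Measure.map_apply measurable_snd hmeas, hπ₀c.2, Measure.smul_apply, smul_eq_mul,
      Measure.restrict_apply hmeas, inter_eq_self_of_subset_left
        ((ball_subset_ball (by linarith)).trans hz)]
  have hfst : π₀ (ball z s ×ˢ univ) ≤ lam (ball z s) := by
    have hmeas : MeasurableSet (ball z s) := measurableSet_ball
    have : π₀ (ball z s ×ˢ univ) = π₀ (Prod.fst ⁻¹' (ball z s)) := by
      congr 1; ext p; simp
    rw [this, ← Measure.map_apply measurable_fst hmeas, hπ₀c.1,
      Measure.restrict_apply hmeas]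
    exact measure_mono inter_subset_left
  have hbad : ENNReal.ofReal ((s/2) ^ 2) * π₀ Sbad ≤ ENNReal.ofReal (2*ε) := by
    have := cheb π₀ MeasurableSet.univ (subset_univ Sbad) (by positivity : (0:ℝ) ≤ s/2)
      (fun p hp => hp)
    rw [setLIntegral_univ] at this
    exact this.trans hπ₀cost.le
  have hbad' : π₀ Sbad ≤ ENNReal.ofReal (2*ε / ((s/2)^2)) := by
    have hpos : (0:ℝ) < (s/2)^2 := by positivity
    rw [ENNReal.ofReal_div_of_pos hpos]
    rw [ENNReal.le_div_iff_mul_le (Or.inl (by simp [ENNReal.ofReal_pos, hpos, hs.ne'])) 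
      (Or.inl ENNReal.ofReal_ne_top)]
    rw [mul_comm]
    exact hbad
  have hmain : ENNReal.ofReal (kappa5 lam) * volume (ball z (s/2))
      ≤ lam (ball z s) + ENNReal.ofReal (2*ε / ((s/2)^2)) := by
    calc ENNReal.ofReal (kappa5 lam) * volume (ball z (s/2)) = π₀ (univ ×ˢ ball z (s/2)) :=
        hlhs.symm
      _ ≤ π₀ ((ball z s ×ˢ univ) ∪ Sbad) := measure_mono hincl
      _ ≤ π₀ (ball z s ×ˢ univ) + π₀ Sbad := measure_union_le _ _
      _ ≤ lam (ball z s) + ENNReal.ofReal (2*ε / ((s/2)^2)) := add_le_add hfst hbad'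
  have hrt : lam (ball z s) + ENNReal.ofReal (2*ε / ((s/2)^2)) ≠ ⊤ :=
    ENNReal.add_ne_top.2 ⟨measure_ne_top _ _, ENNReal.ofReal_ne_top⟩
  have := ENNReal.toReal_mono hrt hmain
  rw [ENNReal.toReal_mul, ENNReal.toReal_ofReal (by linarith),
    ENNReal.toReal_add (measure_ne_top _ _) ENNReal.ofReal_ne_top,
    ENNReal.toReal_ofReal (by positivity)] at this
  have hvol : volume (ball z (s/2)) = volume (ball (0:Euc d) (s/2)) :=
    Measure.addHaar_ball_center volume z (s/2)
  rw [hvol] at this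
  nlinarith [ENNReal.toReal_nonneg (a := volume (ball (0:Euc d) (s/2)))]

lemma norm_pert {d : ℕ} {η : ℝ} (a x w b : Euc d) (h1 : ‖a - x‖ ≤ η) (h2 : ‖b - w‖ ≤ η) :
    ‖a - b‖ ≤ ‖x - w‖ + 2 * η := by
  have hd : a - b = (a - x) + ((x - w) + (w - b)) := by abel
  calc ‖a - b‖ = ‖(a - x) + ((x - w) + (w - b))‖ := by rw [← hd]
    _ ≤ ‖a - x‖ + (‖x - w‖ + ‖w - b‖) := le_trans (norm_add_le _ _)
        (by gcongr; exact norm_add_le _ _)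
    _ ≤ ‖x - w‖ + 2 * η := by rw [norm_sub_rev w b]; linarith

lemma main_one (d : ℕ) (δ : ℝ) (hδ : 0 < δ) :
    ∃ ε : ℝ, 0 < ε ∧
      ∀ (lam mu : Measure (Euc d)), IsFiniteMeasure lam → IsFiniteMeasure mu →
        HasCompactSupp lam → HasCompactSupp mu → lam univ = mu univ →
        ∀ π : Measure (Euc d × Euc d), IsOptimal π lam mu →
          energy π + dataTerm lam mu ≤ ENNReal.ofReal ε →
          ∀ p ∈ (ball (0 : Euc d) 4 ×ˢ (univ : Set (Euc d))) ∩ msupp π,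
            ‖p.1 - p.2‖ ≤ δ := by
  set δ' := min δ 1 with hδ'def
  have hδ'pos : 0 < δ' := lt_min hδ one_pos
  have hδ'le : δ' ≤ δ := min_le_left _ _
  have hδ'1 : δ' ≤ 1 := min_le_right _ _
  set r : ℝ := δ' / 100 with hrdef
  set η : ℝ := δ' / 10000 with hηdef
  set s : ℝ := r / 2 with hsdef
  have hrpos : 0 < r := by positivity
  have hspos : 0 < s := by positivity
  have hrpos : 0 < r := by positivity
  have hηpos : 0 < η := by positivity
  set v : ℝ := (volume (ball (0 : Euc d) (s / 2))).toReal with hvdef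
  have hvpos : 0 < v := ENNReal.toReal_pos
    (measure_ball_pos volume 0 (by positivity)).ne' (measure_ball_lt_top).ne
  set ε : ℝ := min (1/4) (min (v * (s/2)^2 / 16) (v * r^2 / 8)) with hεdef
  have hεpos : 0 < ε := by
    refine lt_min (by norm_num) (lt_min (by positivity) (by positivity))
  have hε14 : ε ≤ 1/4 := min_le_left _ _
  have hεs : ε ≤ v * (s/2)^2 / 16 := le_trans (min_le_right _ _) (min_le_left _ _)
  have hερ : ε ≤ v * r^2 / 8 := le_trans (min_le_right _ _) (min_le_right _ _)
  refine ⟨ε, hεpos, ?_⟩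
  intro lam mu hflam hfmu hcl hcm hmass π hopt hsmall p hp
  haveI := hflam; haveI := hfmu
  obtain ⟨hpball, hpsupp⟩ := hp
  have hx4 : ‖p.1‖ < 4 := by
    have := hpball.1
    rwa [mem_ball, dist_zero_right] at this
  by_contra hcon
  push_neg at hcon
  set L : ℝ := ‖p.1 - p.2‖ with hLdef
  have hLδ' : δ' < L := lt_of_le_of_lt hδ'le hcon
  have hLpos : 0 < L := lt_trans hδ'pos hLδ'
  -- extract pieces of the smallness assumption
  have henergy : energy π ≤ ENNReal.ofReal ε := le_trans le_self_add hsmall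
  have hdata : dataTerm lam mu ≤ ENNReal.ofReal ε := le_trans le_add_self hsmall
  have hW2lam : W2 (lam.restrict (ball 0 5))
      (ENNReal.ofReal (kappa5 lam) • volume.restrict (ball 0 5)) ≤ ENNReal.ofReal ε := by
    refine le_trans ?_ hdata
    rw [dataTerm]
    exact le_add_right (le_add_right le_self_add)
  have hκsq : (kappa5 lam - 1) ^ 2 ≤ ε := by
    have h1 : ENNReal.ofReal ((kappa5 lam - 1) ^ 2) ≤ dataTerm lam mu := by
      rw [dataTerm]
      exact le_add_right (le_add_right le_add_self)
    have := le_trans h1 hdata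
    exact (ENNReal.ofReal_le_ofReal_iff hεpos.le).1 this
  have hκ : 1/2 ≤ kappa5 lam := by nlinarith
  -- π is a finite measure with finite cost
  haveI hπfin : IsFiniteMeasure π := by
    constructor
    rw [show (univ : Set (Euc d × Euc d)) = Prod.fst ⁻¹' univ from preimage_univ.symm,
      ← Measure.map_apply measurable_fst MeasurableSet.univ, hopt.1.1]
    exact measure_lt_top _ _
  have hcostfin : cost π ≠ ⊤ := by
    rw [show cost π = W2 lam mu from hopt.2]
    exact (W2_lt_top hcl hcm hmass).ne
  -- geometry
  set u : Euc d := L⁻¹ • (p.2 - p.1) with hudef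
  have hnu : ‖u‖ = 1 := by
    rw [hudef, norm_smul, norm_inv, Real.norm_eq_abs, abs_of_pos hLpos, norm_sub_rev, ← hLdef]
    field_simp
  have hLu : L • u = p.2 - p.1 := by
    rw [hudef, smul_smul, mul_inv_cancel₀ hLpos.ne', one_smul]
  set z : Euc d := p.1 + r • u with hzdef
  have hzx : ‖z - p.1‖ = r := by
    rw [hzdef]
    simp only [add_sub_cancel_left]
    rw [norm_smul, Real.norm_eq_abs, abs_of_pos hrpos, hnu, mul_one]
  have hzy : ‖z - p.2‖ = L - r := by
    have he : z - p.2 = (r - L) • u := by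
      rw [hzdef, sub_smul, hLu]; abel
    rw [he, norm_smul, Real.norm_eq_abs, hnu, mul_one, abs_of_nonpos (by nlinarith), neg_sub]
  have hz5 : ball z s ⊆ ball (0 : Euc d) 5 := by
    intro w hw
    rw [mem_ball, dist_zero_right]
    have h1 : ‖w - z‖ < s := by rwa [mem_ball, dist_eq_norm] at hw
    have h2 : ‖z‖ ≤ ‖p.1‖ + r := by
      calc ‖z‖ = ‖p.1 + r • u‖ := by rw [hzdef]
        _ ≤ ‖p.1‖ + ‖r • u‖ := norm_add_le _ _
        _ = ‖p.1‖ + r := by rw [norm_smul, Real.norm_eq_abs, abs_of_pos hrpos, hnu, mul_one]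
    calc ‖w‖ ≤ ‖w - z‖ + ‖z‖ := by
          have : w = (w - z) + z := by abel
          calc ‖w‖ = ‖(w - z) + z‖ := by rw [← this]
            _ ≤ ‖w - z‖ + ‖z‖ := norm_add_le _ _
      _ < 5 := by
          have : r ≤ 1/100 := by rw [hrdef]; linarith
          have : s ≤ 1/200 := by rw [hsdef]; linarith
          linarith
  -- mass lower bound near z
  have hmass_z : (1/2) * v ≤ (lam (ball z s)).toReal + 2 * ε / ((s/2)^2) :=
    mass_lower lam hεpos hW2lam hκ hspos hz5
  have hεterm : 2 * ε / ((s/2)^2) ≤ v / 8 := by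
    rw [div_le_iff₀ (by positivity)]
    calc 2 * ε ≤ 2 * (v * (s/2)^2 / 16) := by linarith
      _ = v / 8 * (s/2)^2 := by ring
  have hlam_z : 3 * v / 8 ≤ (lam (ball z s)).toReal := by linarith
  -- energy bound: few long trajectories from ball z s
  set T : Set (Euc d × Euc d) := (ball (0 : Euc d) 5 ×ˢ (univ : Set (Euc d))) ∪
      ((univ : Set (Euc d)) ×ˢ ball (0 : Euc d) 5) with hTdef
  have hTm : MeasurableSet T :=
    (measurableSet_ball.prod MeasurableSet.univ).union
      (MeasurableSet.univ.prod measurableSet_ball)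
  set Gbad : Set (Euc d × Euc d) := {q | q.1 ∈ ball z s ∧ r ≤ ‖q.1 - q.2‖} with hGbaddef
  have hGbadsub : Gbad ⊆ T := by
    intro q hq
    exact Or.inl ⟨hz5 hq.1, mem_univ _⟩
  have hGbadbound : ENNReal.ofReal (r^2) * π Gbad ≤ ENNReal.ofReal ε := by
    refine le_trans (cheb π hTm hGbadsub hrpos.le (fun q hq => hq.2)) ?_
    exact henergy
  have hGbadreal : (π Gbad).toReal ≤ ε / r^2 := by
    have h1 : π Gbad ≤ ENNReal.ofReal (ε / r^2) := by
      rw [ENNReal.ofReal_div_of_pos (by positivity)]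
      rw [ENNReal.le_div_iff_mul_le (Or.inl (by simp [ENNReal.ofReal_pos]; positivity))
        (Or.inl ENNReal.ofReal_ne_top), mul_comm]
      exact hGbadbound
    exact le_trans (ENNReal.toReal_mono ENNReal.ofReal_ne_top h1)
      (by rw [ENNReal.toReal_ofReal (by positivity)])
  have hGbadv : (π Gbad).toReal ≤ v / 8 := by
    have : ε / r^2 ≤ v / 8 := by
      rw [div_le_div_iff₀ (by positivity) (by norm_num)]
      linarith
    linarith
  -- the good set has positive measure
  set G : Set (Euc d × Euc d) := {q | q.1 ∈ ball z s ∧ ‖q.1 - q.2‖ < r} with hGdef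
  have hGopen : IsOpen G := by
    refine IsOpen.inter (isOpen_ball.preimage continuous_fst) ?_
    exact isOpen_lt ((continuous_fst.sub continuous_snd).norm) continuous_const
  have hGpos : π G ≠ 0 := by
    intro hG0
    have hcover : (ball z s ×ˢ (univ : Set (Euc d)) : Set (Euc d × Euc d)) ⊆ G ∪ Gbad := by
      rintro ⟨a, b⟩ ⟨ha, -⟩
      by_cases hab : ‖a - b‖ < r
      · exact Or.inl ⟨ha, hab⟩
      · exact Or.inr ⟨ha, le_of_not_gt hab⟩
    have hfstball : π (ball z s ×ˢ (univ : Set (Euc d))) = lam (ball z s) := by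
      have : (ball z s ×ˢ (univ : Set (Euc d)) : Set (Euc d × Euc d))
          = Prod.fst ⁻¹' ball z s := by ext q; simp
      rw [this, ← Measure.map_apply measurable_fst measurableSet_ball, hopt.1.1]
    have hle : lam (ball z s) ≤ π Gbad := by
      calc lam (ball z s) = π (ball z s ×ˢ (univ : Set (Euc d))) := hfstball.symm
        _ ≤ π (G ∪ Gbad) := measure_mono hcover
        _ ≤ π G + π Gbad := measure_union_le _ _
        _ = π Gbad := by rw [hG0, zero_add]
    have := ENNReal.toReal_mono (measure_ne_top _ _) hle
    linarith
  obtain ⟨p', hp'G, hp'supp⟩ := exists_mem_msupp hGopen hGpos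
  have hx'z : ‖p'.1 - z‖ < s := by
    have := hp'G.1; rwa [mem_ball, dist_eq_norm] at this
  have hρ' : ‖p'.1 - p'.2‖ < r := hp'G.2
  -- distance estimates
  have hxx' : ‖p'.1 - p.1‖ ≤ 3 * r / 2 := by
    calc ‖p'.1 - p.1‖ = ‖(p'.1 - z) + (z - p.1)‖ := by congr 1; abel
      _ ≤ ‖p'.1 - z‖ + ‖z - p.1‖ := norm_add_le _ _
      _ ≤ 3 * r / 2 := by rw [hzx]; rw [hsdef] at hx'z; linarith
  have hx'y : ‖p'.1 - p.2‖ ≤ L - r / 2 := by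
    calc ‖p'.1 - p.2‖ = ‖(p'.1 - z) + (z - p.2)‖ := by congr 1; abel
      _ ≤ ‖p'.1 - z‖ + ‖z - p.2‖ := norm_add_le _ _
      _ ≤ L - r / 2 := by rw [hzy]; rw [hsdef] at hx'z; linarith
  have hxy' : ‖p.1 - p'.2‖ ≤ 3 * r / 2 + r := by
    calc ‖p.1 - p'.2‖ = ‖(p.1 - p'.1) + (p'.1 - p'.2)‖ := by congr 1; abel
      _ ≤ ‖p.1 - p'.1‖ + ‖p'.1 - p'.2‖ := norm_add_le _ _
      _ ≤ 3 * r / 2 + r := by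
          rw [norm_sub_rev]
          linarith
  have hyy' : L - (3 * r / 2 + r) ≤ ‖p.2 - p'.2‖ := by
    have : L ≤ ‖p.1 - p'.1‖ + ‖p'.1 - p'.2‖ + ‖p'.2 - p.2‖ := by
      calc L = ‖p.1 - p.2‖ := hLdef
        _ = ‖(p.1 - p'.1) + (p'.1 - p'.2) + (p'.2 - p.2)‖ := by congr 1; abel
        _ ≤ ‖p.1 - p'.1‖ + ‖p'.1 - p'.2‖ + ‖p'.2 - p.2‖ := norm_add₃_le
    rw [norm_sub_rev p.2 p'.2]
    rw [norm_sub_rev p.1 p'.1] at this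
    linarith
  -- disjointness of target balls
  have hdisjV : Disjoint (ball p.2 η) (ball p'.2 η) := by
    refine ball_disjoint_ball ?_
    rw [dist_eq_norm]
    have h1 : 3 * r / 2 + r ≤ δ' / 40 := by rw [hrdef]; linarith
    have h2 : η + η ≤ δ' / 5000 := by rw [hηdef]; linarith
    linarith
  -- apply the improvement lemma
  have hA : π (ball p.1 η ×ˢ ball p.2 η) ≠ 0 := by
    refine (hpsupp _ (isOpen_ball.prod isOpen_ball) ⟨mem_ball_self hηpos, mem_ball_self hηpos⟩).ne'
  have hB : π (ball p'.1 η ×ˢ ball p'.2 η) ≠ 0 := by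
    refine (hp'supp _ (isOpen_ball.prod isOpen_ball) ⟨mem_ball_self hηpos, mem_ball_self hηpos⟩).ne'
  have hb1 : ∀ a ∈ ball p.1 η, ∀ e ∈ ball p'.2 η,
      ‖a - e‖ ^ 2 ≤ (3 * r / 2 + r + 2 * η) ^ 2 := by
    intro a ha e he
    rw [mem_ball, dist_eq_norm] at ha he
    have := norm_pert a p.1 p'.2 e ha.le he.le
    have h2 : ‖a - e‖ ≤ 3 * r / 2 + r + 2 * η := by linarith
    exact pow_le_pow_left₀ (norm_nonneg _) h2 2
  have hb2 : ∀ c ∈ ball p'.1 η, ∀ b ∈ ball p.2 η,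
      ‖c - b‖ ^ 2 ≤ (L - r / 2 + 2 * η) ^ 2 := by
    intro c hc b hb
    rw [mem_ball, dist_eq_norm] at hc hb
    have := norm_pert c p'.1 p.2 b hc.le hb.le
    have h2 : ‖c - b‖ ≤ L - r / 2 + 2 * η := by linarith
    exact pow_le_pow_left₀ (norm_nonneg _) h2 2
  have hlo : ∀ a ∈ ball p.1 η, ∀ b ∈ ball p.2 η, (L - 2 * η) ^ 2 ≤ ‖a - b‖ ^ 2 := by
    intro a ha b hb
    rw [mem_ball, dist_eq_norm] at ha hb
    have h1 : ‖p.1 - p.2‖ ≤ ‖a - b‖ + 2 * η := by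
      have := norm_pert (η := η) p.1 a b p.2
        (show ‖p.1 - a‖ ≤ η by rw [norm_sub_rev p.1 a]; exact ha.le)
        (show ‖p.2 - b‖ ≤ η by rw [norm_sub_rev p.2 b]; exact hb.le)
      linarith
    have h2 : L - 2 * η ≤ ‖a - b‖ := by rw [hLdef]; linarith
    have h3 : 0 ≤ L - 2 * η := by
      have : 2 * η ≤ δ' := by rw [hηdef]; linarith
      linarith
    exact pow_le_pow_left₀ h3 h2 2
  have hgap : (3 * r / 2 + r + 2 * η) ^ 2 + (L - r / 2 + 2 * η) ^ 2 < (L - 2 * η) ^ 2 := by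
    have hP : 3 * r / 2 + r + 2 * η = 63 / 2500 * δ' := by
      rw [hrdef, hηdef]; ring
    have h1 : (L - 2 * η) ^ 2 - (L - r / 2 + 2 * η) ^ 2
        = (23 * δ' / 5000) * (2 * L - δ' / 200) := by
      rw [hrdef, hηdef]; ring
    have h2 : (23 * δ' / 5000) * (399 * δ' / 200) ≤ (23 * δ' / 5000) * (2 * L - δ' / 200) := by
      have : 399 * δ' / 200 ≤ 2 * L - δ' / 200 := by linarith
      have h0 : 0 ≤ 23 * δ' / 5000 := by positivity
      exact mul_le_mul_of_nonneg_left this h0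
    have h3 : (3 * r / 2 + r + 2 * η) ^ 2 = 3969 / 6250000 * δ' ^ 2 := by
      rw [hP]; ring
    have h4 : (23 * δ' / 5000) * (399 * δ' / 200) = 9177 / 1000000 * δ' ^ 2 := by ring
    have h5 : 0 < δ' ^ 2 := by positivity
    linarith [h1, h2, h3, h4, h5]
  obtain ⟨π'', hcoup'', hlt⟩ := improvement hopt.1 hcostfin
    measurableSet_ball measurableSet_ball measurableSet_ball measurableSet_ball
    hdisjV hA hB (by positivity) (by positivity) hb1 hb2 hlo hgap
  have : W2 lam mu ≤ cost π'' := W2_le_cost hcoup''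
  rw [show cost π = W2 lam mu from hopt.2] at hlt
  exact absurd hlt (not_lt.2 this)

/-- Lemma 3.3, part (m07): in the perturbative regime all trajectories starting
or ending in `B_4` are short. -/
theorem short_trajectories (d : ℕ) (δ : ℝ) (hδ : 0 < δ) :
    ∃ ε : ℝ, 0 < ε ∧
      ∀ (lam mu : Measure (Euc d)), IsFiniteMeasure lam → IsFiniteMeasure mu →
        HasCompactSupp lam → HasCompactSupp mu → lam univ = mu univ →
        ∀ π : Measure (Euc d × Euc d), IsOptimal π lam mu →
          energy π + dataTerm lam mu ≤ ENNReal.ofReal ε →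
          ∀ p ∈ ((ball (0 : Euc d) 4 ×ˢ (univ : Set (Euc d))) ∪
              ((univ : Set (Euc d)) ×ˢ ball (0 : Euc d) 4)) ∩ msupp π,
            ‖p.1 - p.2‖ ≤ δ := by
  obtain ⟨ε, hε, H⟩ := main_one d δ hδ
  refine ⟨ε, hε, ?_⟩
  intro lam mu hflam hfmu hcl hcm hmass π hopt hsmall p hp
  haveI := hflam; haveI := hfmu
  obtain ⟨hpu, hpsupp⟩ := hp
  rcases hpu with h4 | h4
  · exact H lam mu hflam hfmu hcl hcm hmass π hopt hsmall p ⟨⟨h4.1, mem_univ _⟩, hpsupp⟩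
  · set σπ : Measure (Euc d × Euc d) := π.map Prod.swap with hσdef
    have hcoupσ : IsCoupling σπ mu lam := isCoupling_swap hopt.1
    have hoptσ : IsOptimal σπ mu lam := by
      refine ⟨hcoupσ, ?_⟩
      have h1 : (∫⁻ q, ENNReal.ofReal (‖q.1 - q.2‖ ^ 2) ∂σπ) = cost σπ := rfl
      rw [h1, hσdef, cost_map_swap, show cost π = W2 lam mu from hopt.2, W2_comm]
    have hTm : MeasurableSet ((ball (0 : Euc d) 5 ×ˢ (univ : Set (Euc d))) ∪
        ((univ : Set (Euc d)) ×ˢ ball (0 : Euc d) 5)) :=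
      (measurableSet_ball.prod MeasurableSet.univ).union
        (MeasurableSet.univ.prod measurableSet_ball)
    have hTsym : Prod.swap ⁻¹' ((ball (0 : Euc d) 5 ×ˢ (univ : Set (Euc d))) ∪
        ((univ : Set (Euc d)) ×ˢ ball (0 : Euc d) 5))
        = (ball (0 : Euc d) 5 ×ˢ (univ : Set (Euc d))) ∪
          ((univ : Set (Euc d)) ×ˢ ball (0 : Euc d) 5) := by
      ext q
      simp only [mem_preimage, mem_union, mem_prod, mem_univ, and_true, true_and,
        Prod.fst_swap, Prod.snd_swap]
      tauto
    have henergyσ : energy σπ = energy π := by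
      rw [energy, energy, hσdef,
        Measure.restrict_map measurable_swap hTm, hTsym,
        lintegral_map (Fm d) measurable_swap]
      refine lintegral_congr fun q => ?_
      rw [Prod.fst_swap, Prod.snd_swap, norm_sub_rev]
    have hdataσ : dataTerm mu lam = dataTerm lam mu := by
      rw [dataTerm, dataTerm]; ring
    have hsmallσ : energy σπ + dataTerm mu lam ≤ ENNReal.ofReal ε := by
      rw [henergyσ, hdataσ]; exact hsmall
    have hsuppσ : Prod.swap p ∈ msupp σπ := by
      intro U hU hpU
      rw [hσdef, Measure.map_apply measurable_swap hU.measurableSet]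
      exact hpsupp _ (hU.preimage continuous_swap) (by simpa using hpU)
    have := H mu lam hfmu hflam hcm hcl hmass.symm σπ hoptσ hsmallσ (Prod.swap p)
      ⟨⟨h4.2, mem_univ _⟩, hsuppσ⟩
    rwa [Prod.fst_swap, Prod.snd_swap, norm_sub_rev] at this

end
end

section
/- For any finite nonnegative Borel measures λ, μ on ℝ^d with compact support and λ(ℝ^d) = μ(ℝ^d), and any 0 ≤ M < ∞, one has W(λ, μ) ≤ (√(1+M) − √M)^{-1} · W(λ + Mμ, (1+M)μ). -/
open MeasureTheory Metric Set
open scoped ENNReal RealInnerProductSpace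

noncomputable section

namespace WScaling

open ProbabilityTheory

variable {d : ℕ}

/-- quadratic cost -/
def cf {d : ℕ} : Euc d × Euc d → ℝ≥0∞ := fun p => ENNReal.ofReal (‖p.1 - p.2‖ ^ 2)

lemma measurable_cf : Measurable (cf (d := d)) :=
  (((continuous_fst.sub continuous_snd).norm.pow 2).measurable).ennreal_ofReal

def cost (π : Measure (Euc d × Euc d)) : ℝ≥0∞ := ∫⁻ p, cf p ∂π

/-- one gluing step: transport the second marginal through the kernel `κ`. -/
def glue (κ : Kernel (Euc d) (Euc d)) (G : Measure (Euc d × Euc d)) :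
    Measure (Euc d × Euc d) :=
  (G ⊗ₘ (Kernel.prodMkLeft (Euc d) κ)).map (fun p => (p.1.1, p.2))

lemma measurable_gluemap :
    Measurable (fun p : (Euc d × Euc d) × Euc d => (p.1.1, p.2)) :=
  (measurable_fst.comp measurable_fst).prodMk measurable_snd

variable (κ : Kernel (Euc d) (Euc d)) [IsMarkovKernel κ]

lemma glue_fst (G : Measure (Euc d × Euc d)) [IsFiniteMeasure G] :
    (glue κ G).fst = G.fst := by
  rw [Measure.fst, glue, Measure.map_map measurable_fst measurable_gluemap]
  have : (Prod.fst ∘ fun p : (Euc d × Euc d) × Euc d => (p.1.1, p.2))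
      = Prod.fst ∘ (Prod.fst : (Euc d × Euc d) × Euc d → Euc d × Euc d) := rfl
  rw [this, ← Measure.map_map measurable_fst measurable_fst]
  have h2 : (G ⊗ₘ (Kernel.prodMkLeft (Euc d) κ)).map Prod.fst = G :=
    Measure.fst_compProd G _
  rw [h2, Measure.fst]

lemma glue_snd (G : Measure (Euc d × Euc d)) [IsFiniteMeasure G] :
    (glue κ G).snd = G.snd.bind κ := by
  ext s hs
  rw [Measure.snd_apply hs, glue,
    Measure.map_apply measurable_gluemap (measurable_snd hs)]
  have hpre : ((fun p : (Euc d × Euc d) × Euc d => (p.1.1, p.2)) ⁻¹' (Prod.snd ⁻¹' s))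
      = Prod.snd ⁻¹' s := rfl
  rw [hpre, Measure.compProd_apply (measurable_snd hs)]
  have h1 : ∀ q : Euc d × Euc d,
      (Kernel.prodMkLeft (Euc d) κ) q (Prod.mk q ⁻¹' (Prod.snd ⁻¹' s)) = κ q.2 s := by
    intro q; rfl
  simp_rw [h1]
  rw [Measure.bind_apply hs κ.measurable.aemeasurable, Measure.snd,
    lintegral_map (κ.measurable_coe hs) measurable_snd]

lemma glue_isFinite (G : Measure (Euc d × Euc d)) [IsFiniteMeasure G] :
    IsFiniteMeasure (glue κ G) := by
  constructor
  rw [glue, Measure.map_apply measurable_gluemap MeasurableSet.univ]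
  have : (fun p : (Euc d × Euc d) × Euc d => (p.1.1, p.2)) ⁻¹' univ = univ := rfl
  rw [this, Measure.compProd_apply_univ]
  exact measure_lt_top G univ

lemma cost_glue (G : Measure (Euc d × Euc d)) [IsFiniteMeasure G] {t : ℝ} (ht : 0 < t) :
    cost (glue κ G) ≤ ENNReal.ofReal (1 + t) * cost G
      + ENNReal.ofReal (1 + 1 / t) * ∫⁻ y, ∫⁻ z, cf (y, z) ∂(κ y) ∂G.snd := by
  have hc2 : Measurable (fun y : Euc d => ∫⁻ z, cf (y, z) ∂(κ y)) := by
    have : Measurable (Function.uncurry fun (y z : Euc d) => cf (y, z)) := measurable_cf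
    exact Measurable.lintegral_kernel_prod_right this
  rw [cost, glue, lintegral_map measurable_cf measurable_gluemap]
  have hpt : ∀ p : (Euc d × Euc d) × Euc d,
      cf (p.1.1, p.2) ≤ ENNReal.ofReal (1 + t) * cf p.1
        + ENNReal.ofReal (1 + 1 / t) * cf (p.1.2, p.2) := by
    intro p
    obtain ⟨⟨x, y⟩, z⟩ := p
    have h1 : ‖x - z‖ ≤ ‖x - y‖ + ‖y - z‖ := by
      calc ‖x - z‖ = ‖(x - y) + (y - z)‖ := by rw [sub_add_sub_cancel]
      _ ≤ ‖x - y‖ + ‖y - z‖ := norm_add_le _ _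
    have h2 : ‖x - z‖ ^ 2 ≤ (1 + t) * ‖x - y‖ ^ 2 + (1 + 1 / t) * ‖y - z‖ ^ 2 := by
      have ha : (0:ℝ) ≤ ‖x - y‖ := norm_nonneg _
      have hb : (0:ℝ) ≤ ‖y - z‖ := norm_nonneg _
      have hc : (0:ℝ) ≤ ‖x - z‖ := norm_nonneg _
      have key : (t * ‖x - y‖ - ‖y - z‖) ^ 2 ≥ 0 := sq_nonneg _
      have ht' : 0 < t := ht
      have h3 : ‖x - z‖ ^ 2 ≤ (‖x - y‖ + ‖y - z‖) ^ 2 := by nlinarith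
      have h4 : (‖x - y‖ + ‖y - z‖) ^ 2 ≤ (1 + t) * ‖x - y‖ ^ 2 + (1 + 1 / t) * ‖y - z‖ ^ 2 := by
        have expand : (1 / t) * (t * ‖x - y‖ - ‖y - z‖) ^ 2
            = t * ‖x - y‖ ^ 2 - 2 * (‖x - y‖ * ‖y - z‖) + (1 / t) * ‖y - z‖ ^ 2 := by
          field_simp
          ring
        have h5 : (0:ℝ) ≤ (1 / t) * (t * ‖x - y‖ - ‖y - z‖) ^ 2 := by positivity
        rw [expand] at h5
        nlinarith [h5]
      linarith
    calc cf (x, z) = ENNReal.ofReal (‖x - z‖ ^ 2) := rfl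
    _ ≤ ENNReal.ofReal ((1 + t) * ‖x - y‖ ^ 2 + (1 + 1 / t) * ‖y - z‖ ^ 2) :=
        ENNReal.ofReal_le_ofReal h2
    _ ≤ ENNReal.ofReal ((1 + t) * ‖x - y‖ ^ 2) + ENNReal.ofReal ((1 + 1 / t) * ‖y - z‖ ^ 2) :=
        ENNReal.ofReal_add_le
    _ = ENNReal.ofReal (1 + t) * cf (x, y) + ENNReal.ofReal (1 + 1 / t) * cf (y, z) := by
        rw [ENNReal.ofReal_mul (by positivity), ENNReal.ofReal_mul (by positivity)]; rfl
  calc ∫⁻ p, cf (p.1.1, p.2) ∂(G ⊗ₘ (Kernel.prodMkLeft (Euc d) κ))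
      ≤ ∫⁻ p, (ENNReal.ofReal (1 + t) * cf p.1
          + ENNReal.ofReal (1 + 1 / t) * cf (p.1.2, p.2))
          ∂(G ⊗ₘ (Kernel.prodMkLeft (Euc d) κ)) := lintegral_mono hpt
  _ = ENNReal.ofReal (1 + t) * ∫⁻ p, cf p.1 ∂(G ⊗ₘ (Kernel.prodMkLeft (Euc d) κ))
      + ENNReal.ofReal (1 + 1 / t) * ∫⁻ p, cf (p.1.2, p.2)
          ∂(G ⊗ₘ (Kernel.prodMkLeft (Euc d) κ)) := by
      have hm1 : Measurable fun p : (Euc d × Euc d) × Euc d => cf p.1 :=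
        measurable_cf.comp measurable_fst
      have hm2 : Measurable fun p : (Euc d × Euc d) × Euc d => cf (p.1.2, p.2) :=
        measurable_cf.comp ((measurable_fst.snd).prodMk measurable_snd)
      rw [lintegral_add_left (hm1.const_mul _), lintegral_const_mul _ hm1,
        lintegral_const_mul _ hm2]
  _ = ENNReal.ofReal (1 + t) * cost G
      + ENNReal.ofReal (1 + 1 / t) * ∫⁻ y, ∫⁻ z, cf (y, z) ∂(κ y) ∂G.snd := by
      have hm1 : Measurable fun p : (Euc d × Euc d) × Euc d => cf p.1 :=
        measurable_cf.comp measurable_fst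
      have hm2 : Measurable fun p : (Euc d × Euc d) × Euc d => cf (p.1.2, p.2) :=
        measurable_cf.comp ((measurable_fst.snd).prodMk measurable_snd)
      congr 1
      · congr 1
        rw [Measure.lintegral_compProd hm1]
        simp only [Kernel.prodMkLeft_apply]
        rw [cost]
        congr 1
        ext q
        rw [lintegral_const, measure_univ, mul_one]
      · congr 1
        rw [Measure.lintegral_compProd hm2]
        rw [Measure.snd, lintegral_map hc2 measurable_snd]
        simp only [Kernel.prodMkLeft_apply]

lemma bind_add' (ρ τ : Measure (Euc d)) (a : ℝ≥0∞) :
    (ρ + a • τ).bind (κ : Kernel (Euc d) (Euc d)) = ρ.bind κ + a • (τ.bind κ) := by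
  ext s hs
  rw [Measure.bind_apply hs κ.measurable.aemeasurable, Measure.add_apply, Measure.smul_apply,
    Measure.bind_apply hs κ.measurable.aemeasurable, Measure.bind_apply hs κ.measurable.aemeasurable,
    lintegral_add_measure, lintegral_smul_measure, smul_eq_mul]

lemma bind_smul' (τ : Measure (Euc d)) (a : ℝ≥0∞) :
    (a • τ).bind (κ : Kernel (Euc d) (Euc d)) = a • (τ.bind κ) := by
  ext s hs
  rw [Measure.bind_apply hs κ.measurable.aemeasurable, Measure.smul_apply,
    Measure.bind_apply hs κ.measurable.aemeasurable, lintegral_smul_measure, smul_eq_mul]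

lemma bind_univ' (ρ : Measure (Euc d)) :
    (ρ.bind (κ : Kernel (Euc d) (Euc d))) univ = ρ univ := by
  rw [Measure.bind_apply MeasurableSet.univ κ.measurable.aemeasurable]
  simp

/-- iterated push-forward through a kernel -/
def iter (κ : Kernel (Euc d) (Euc d)) (ρ : Measure (Euc d)) : ℕ → Measure (Euc d)
  | 0 => ρ
  | n + 1 => (iter κ ρ n).bind κ

lemma iter_univ (ρ : Measure (Euc d)) (n : ℕ) :
    (iter (κ : Kernel (Euc d) (Euc d)) ρ n) univ = ρ univ := by
  induction n with
  | zero => rfl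
  | succ n ih => rw [iter, bind_univ', ih]

lemma iter_step (ν σ0 : Measure (Euc d)) (a : ℝ≥0∞)
    (h : σ0 = ν + a • (σ0.bind κ)) (m : ℕ) :
    iter κ σ0 m = iter κ ν m + a • iter κ σ0 (m + 1) := by
  induction m with
  | zero => exact h
  | succ m ih =>
      show (iter κ σ0 m).bind κ = (iter κ ν m).bind κ + a • (iter κ σ0 (m+1)).bind κ
      rw [ih, bind_add']

lemma iter_unroll (ν σ0 : Measure (Euc d)) (a : ℝ≥0∞)
    (h : σ0 = ν + a • (σ0.bind κ)) (N : ℕ) :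
    σ0 = (∑ n ∈ Finset.range N, a ^ n • iter κ ν n) + a ^ N • iter κ σ0 N := by
  induction N with
  | zero => simp [iter]
  | succ N ih =>
      rw [Finset.sum_range_succ, add_assoc]
      conv_lhs => rw [ih]
      congr 1
      rw [iter_step κ ν σ0 a h N, smul_add, smul_smul, ← pow_succ]

lemma sum_iter_eq (ν σ0 : Measure (Euc d)) [IsFiniteMeasure σ0] (a : ℝ≥0∞)
    (ha : a < 1) (h : σ0 = ν + a • (σ0.bind κ)) :
    Measure.sum (fun n => a ^ n • iter κ ν n) = σ0 := by
  ext s hs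
  rw [Measure.sum_apply _ hs]
  have key : ∀ N : ℕ, σ0 s
      = (∑ n ∈ Finset.range N, (a ^ n • iter κ ν n) s) + a ^ N * (iter κ σ0 N) s := by
    intro N
    conv_lhs => rw [iter_unroll κ ν σ0 a h N]
    rw [Measure.add_apply, Measure.smul_apply, smul_eq_mul]
    congr 1
    rw [Measure.finset_sum_apply]
  have h1 : Filter.Tendsto (fun N => ∑ n ∈ Finset.range N, (a ^ n • iter κ ν n) s)
      Filter.atTop (nhds (∑' n, (a ^ n • iter κ ν n) s)) := ENNReal.tendsto_nat_tsum _
  have h2 : Filter.Tendsto (fun N => a ^ N * (iter κ σ0 N) s) Filter.atTop (nhds 0) := by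
    have hb : ∀ N, a ^ N * (iter κ σ0 N) s ≤ a ^ N * σ0 univ := by
      intro N
      refine mul_le_mul_right ?_ _
      calc (iter κ σ0 N) s ≤ (iter κ σ0 N) univ := measure_mono (subset_univ s)
      _ = σ0 univ := iter_univ κ σ0 N
    have h3 : Filter.Tendsto (fun N : ℕ => a ^ N * σ0 univ) Filter.atTop (nhds 0) := by
      have := ENNReal.Tendsto.mul_const
        (ENNReal.tendsto_pow_atTop_nhds_zero_of_lt_one ha)
        (Or.inr (measure_ne_top σ0 univ))
      simpa using this
    exact tendsto_of_tendsto_of_tendsto_of_le_of_le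
      (tendsto_const_nhds (x := (0:ℝ≥0∞))) h3 (fun N => zero_le) hb
  have h4 : Filter.Tendsto
      (fun N => (∑ n ∈ Finset.range N, (a ^ n • iter κ ν n) s) + a ^ N * (iter κ σ0 N) s)
      Filter.atTop (nhds ((∑' n, (a ^ n • iter κ ν n) s) + 0)) := h1.add h2
  have h5 : Filter.Tendsto
      (fun _ : ℕ => σ0 s) Filter.atTop (nhds (σ0 s)) := tendsto_const_nhds
  have h6 : (fun N => (∑ n ∈ Finset.range N, (a ^ n • iter κ ν n) s)
      + a ^ N * (iter κ σ0 N) s) = fun _ : ℕ => σ0 s := by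
    ext N; exact (key N).symm
  rw [h6] at h4
  have := tendsto_nhds_unique h4 h5
  rw [add_zero] at this
  exact this

/-- the iterated gluing sequence -/
def seqG (κ : Kernel (Euc d) (Euc d)) (π₁ : Measure (Euc d × Euc d)) : ℕ → Measure (Euc d × Euc d)
  | 0 => π₁
  | n + 1 => glue κ (seqG κ π₁ n)

lemma seqG_isFinite (π₁ : Measure (Euc d × Euc d)) [IsFiniteMeasure π₁] (n : ℕ) :
    IsFiniteMeasure (seqG κ π₁ n) := by
  induction n with
  | zero => exact (inferInstance : IsFiniteMeasure π₁)
  | succ n ih => exact @glue_isFinite d κ _ (seqG κ π₁ n) ih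

lemma seqG_fst (π₁ : Measure (Euc d × Euc d)) [IsFiniteMeasure π₁] (n : ℕ) :
    (seqG κ π₁ n).fst = π₁.fst := by
  induction n with
  | zero => rfl
  | succ n ih =>
      haveI := seqG_isFinite κ π₁ n
      rw [seqG, glue_fst, ih]

lemma seqG_snd (π₁ : Measure (Euc d × Euc d)) [IsFiniteMeasure π₁] (n : ℕ) :
    (seqG κ π₁ n).snd = iter κ π₁.snd n := by
  induction n with
  | zero => rfl
  | succ n ih =>
      haveI := seqG_isFinite κ π₁ n
      rw [seqG, glue_snd, ih]
      rfl

lemma real_master {M x c1 c2 : ℝ} (hM : 0 < M) (hx : 0 ≤ x) (hc1 : 0 ≤ c1) (hc2 : 0 ≤ c2)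
    (H : ∀ t : ℝ, 0 < t → x - M * t * x ≤ c1 + M * c2 + (M / t) * c2) :
    x ≤ (Real.sqrt (1 + M) + Real.sqrt M) ^ 2 * (c1 + M * c2) := by
  set u := Real.sqrt M with hu
  set v := Real.sqrt (1 + M) with hv
  have hu0 : 0 < u := Real.sqrt_pos.mpr hM
  have hv0 : 0 < v := Real.sqrt_pos.mpr (by linarith)
  have hu2 : u ^ 2 = M := Real.sq_sqrt hM.le
  have hv2 : v ^ 2 = 1 + M := Real.sq_sqrt (by linarith)
  have he1 : (v - u) * (v + u) = 1 := by linear_combination hv2 - hu2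
  have hcpos : 0 < v - u := by nlinarith
  have huc : u * (v - u) < 1 := by nlinarith [sq_nonneg (u - v)]
  have hS1 : (1:ℝ) ≤ (v + u) ^ 2 := by nlinarith
  set q := Real.sqrt (c1 + M * c2) with hq
  set p := Real.sqrt (M * c2) with hp
  have hq0 : 0 ≤ q := Real.sqrt_nonneg _
  have hp0 : 0 ≤ p := Real.sqrt_nonneg _
  have hq2 : q ^ 2 = c1 + M * c2 := Real.sq_sqrt (by positivity)
  have hp2 : p ^ 2 = M * c2 := Real.sq_sqrt (by positivity)
  have hpq : p ≤ q := Real.sqrt_le_sqrt (by linarith)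
  have hgoal : (v + u) ^ 2 * (c1 + M * c2) = (v + u) ^ 2 * q ^ 2 := by rw [hq2]
  rw [hgoal]
  by_cases hc20 : c2 = 0
  · subst hc20
    have hx1 : x ≤ c1 := by
      by_contra hcon
      push_neg at hcon
      have hxpos : 0 < x := lt_of_le_of_lt hc1 hcon
      set t := (x - c1) / (2 * M * x) with htdef
      have ht : 0 < t := div_pos (by linarith) (by positivity)
      have h := H t ht
      have h2 : M * t * x = (x - c1) / 2 := by
        rw [htdef]; field_simp
      simp only [mul_zero, add_zero] at h
      rw [h2] at h
      linarith
    nlinarith [sq_nonneg q]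
  · have hc2pos : 0 < c2 := lt_of_le_of_ne hc2 (Ne.symm hc20)
    have hppos : 0 < p := Real.sqrt_pos.mpr (by positivity)
    have hqpos : 0 < q := Real.sqrt_pos.mpr (by positivity)
    set t := (v - u) * p / (u * q) with htdef
    have ht : 0 < t := by positivity
    have h := H t ht
    have hMt : M * t = u * (v - u) * p / q := by
      rw [htdef, ← hu2]; field_simp
    have hc2e : c2 = p ^ 2 / M := by rw [hp2]; field_simp
    have hMtc : M / t * c2 = u * q * p / (v - u) := by
      rw [htdef, hc2e, ← hu2]
      field_simp
    rw [hMt, hMtc, ← hq2] at h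
    -- h : x - u*(v-u)*p/q * x ≤ q^2 + u*q*p/(v-u)
    have h2 := mul_le_mul_of_nonneg_right h (by positivity : (0:ℝ) ≤ q * (v - u))
    have eL : (x - u * (v - u) * p / q * x) * (q * (v - u))
        = x * ((v - u) * (q - u * (v - u) * p)) := by
      field_simp
    have eR : (q ^ 2 + u * q * p / (v - u)) * (q * (v - u))
        = (v - u) * q ^ 3 + u * q ^ 2 * p := by
      field_simp
    rw [eL, eR] at h2
    have e4 : ((v - u) * (q - u * (v - u) * p)) * ((v + u) ^ 2 * q ^ 2)
        = (v + u) * q ^ 3 - u * p * q ^ 2 := by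
      linear_combination ((q - u * (v - u) * p) * q ^ 2 * (v + u) - u * p * q ^ 2) * he1
    have e5 : (v + u) * q ^ 3 - u * p * q ^ 2 - ((v - u) * q ^ 3 + u * q ^ 2 * p)
        = 2 * u * q ^ 2 * (q - p) := by ring
    have e6 : (0:ℝ) ≤ 2 * u * q ^ 2 * (q - p) :=
      mul_nonneg (by positivity) (by linarith)
    have h4 : (v - u) * q ^ 3 + u * q ^ 2 * p
        ≤ ((v - u) * (q - u * (v - u) * p)) * ((v + u) ^ 2 * q ^ 2) := by
      rw [e4]; linarith
    have hqp : 0 < q - u * (v - u) * p := by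
      have h7 : u * (v - u) * p ≤ u * (v - u) * q :=
        mul_le_mul_of_nonneg_left hpq (by positivity)
      have h8 : u * (v - u) * q < 1 * q := mul_lt_mul_of_pos_right huc hqpos
      rw [one_mul] at h8
      linarith
    have hfac : 0 < (v - u) * (q - u * (v - u) * p) := mul_pos hcpos hqp
    have h6 : x * ((v - u) * (q - u * (v - u) * p))
        ≤ ((v + u) ^ 2 * q ^ 2) * ((v - u) * (q - u * (v - u) * p)) := by
      calc x * ((v - u) * (q - u * (v - u) * p))
          ≤ (v - u) * q ^ 3 + u * q ^ 2 * p := h2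
      _ ≤ ((v - u) * (q - u * (v - u) * p)) * ((v + u) ^ 2 * q ^ 2) := h4
      _ = ((v + u) ^ 2 * q ^ 2) * ((v - u) * (q - u * (v - u) * p)) := by ring
    exact le_of_mul_le_mul_right h6 hfac


lemma key (lam mu : Measure (Euc d)) [IsFiniteMeasure lam] [IsFiniteMeasure mu]
    (hl : HasCompactSupp lam) (hm : HasCompactSupp mu)
    {M : ℝ} (hM : 0 < M)
    (π : Measure (Euc d × Euc d))
    (hπ : IsCoupling π (lam + ENNReal.ofReal M • mu) (ENNReal.ofReal (1 + M) • mu))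
    (hfin : cost π ≠ ⊤) :
    W2 lam mu ≤ ENNReal.ofReal ((Real.sqrt (1 + M) + Real.sqrt M) ^ 2) * cost π := by
  obtain ⟨hπ1, hπ2⟩ := hπ
  set Me := ENNReal.ofReal M with hMe
  have hM1 : (0:ℝ) < 1 + M := by linarith
  have hMe0 : Me ≠ 0 := by
    rw [hMe, Ne, ENNReal.ofReal_eq_zero]; linarith
  have hfst : π.fst = lam + Me • mu := hπ1
  have hsnd : π.snd = ENNReal.ofReal (1 + M) • mu := hπ2
  haveI : IsFiniteMeasure (Me • mu) := mu.smul_finite ENNReal.ofReal_ne_top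
  haveI : IsFiniteMeasure π := by
    constructor
    rw [← Measure.fst_univ, hfst]
    exact measure_lt_top _ _
  set κ := π.condKernel with hκdef
  have hdis : π.fst ⊗ₘ κ = π := π.disintegrate π.condKernel
  set π₁ := lam ⊗ₘ κ with hπ₁def
  set π₂ := mu ⊗ₘ κ with hπ₂def
  haveI : IsFiniteMeasure π₁ := by rw [hπ₁def]; infer_instance
  haveI : IsFiniteMeasure π₂ := by rw [hπ₂def]; infer_instance
  have hsplit : π = π₁ + Me • π₂ := by
    conv_lhs => rw [← hdis, hfst]
    rw [Measure.compProd_add_left, Measure.compProd_smul_left]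
  have hcost_split : cost π = cost π₁ + Me * cost π₂ := by
    conv_lhs => rw [hsplit]
    rw [cost, lintegral_add_measure, lintegral_smul_measure]
    rfl
  set C₁ := cost π₁ with hC₁def
  set C₂ := cost π₂ with hC₂def
  have hC₁top : C₁ ≠ ⊤ := by
    refine ne_top_of_le_ne_top hfin ?_
    rw [hcost_split]; exact le_self_add
  have hC₂top : C₂ ≠ ⊤ := by
    have hle2 : Me * C₂ ≤ cost π := by rw [hcost_split]; exact le_add_self
    have h2 : Me * C₂ ≠ ⊤ := ne_top_of_le_ne_top hfin hle2
    intro h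
    apply h2
    rw [h, ENNReal.mul_top hMe0]
  have hπ₁fst : π₁.fst = lam := Measure.fst_compProd lam κ
  have hπ₂fst : π₂.fst = mu := Measure.fst_compProd mu κ
  set ν₁ := π₁.snd with hν₁def
  set ν₂ := π₂.snd with hν₂def
  have hmarg : ν₁ + Me • ν₂ = ENNReal.ofReal (1 + M) • mu := by
    rw [← hsnd]
    conv_rhs => rw [hsplit]
    rw [hν₁def, hν₂def, Measure.snd, Measure.snd, Measure.snd,
      Measure.map_add _ _ measurable_snd, Measure.map_smul]
  set κ₂ := π₂.condKernel with hκ₂def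
  have hdis₂ : mu ⊗ₘ κ₂ = π₂ := by
    rw [← hπ₂fst]; exact π₂.disintegrate π₂.condKernel
  have hbind_mu : mu.bind κ₂ = ν₂ := by
    ext s hs
    have h1 : ν₂ s = ∫⁻ y, κ₂ y (Prod.mk y ⁻¹' (Prod.snd ⁻¹' s)) ∂mu := by
      rw [hν₂def, Measure.snd_apply hs, ← hdis₂,
        Measure.compProd_apply (measurable_snd hs)]
    rw [Measure.bind_apply hs κ₂.measurable.aemeasurable, h1]
    exact lintegral_congr fun y => rfl
  have hν₂null : ∀ s : Set (Euc d), MeasurableSet s → mu s = 0 → ν₂ s = 0 := by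
    intro s hs h0
    have h1 : ν₁ s + Me * ν₂ s = ENNReal.ofReal (1 + M) * mu s := by
      have := congrArg (fun m : Measure (Euc d) => m s) hmarg
      simpa [Measure.add_apply, Measure.smul_apply, smul_eq_mul] using this
    rw [h0, mul_zero] at h1
    have h2 := (add_eq_zero.mp h1).2
    exact (mul_eq_zero.mp h2).resolve_left hMe0
  have hν₁null : ∀ s : Set (Euc d), MeasurableSet s → mu s = 0 → ν₁ s = 0 := by
    intro s hs h0
    have h1 : ν₁ s + Me * ν₂ s = ENNReal.ofReal (1 + M) * mu s := by
      have := congrArg (fun m : Measure (Euc d) => m s) hmarg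
      simpa [Measure.add_apply, Measure.smul_apply, smul_eq_mul] using this
    rw [h0, mul_zero] at h1
    exact (add_eq_zero.mp h1).1
  have hκ₂ae : ∀ s : Set (Euc d), MeasurableSet s → mu s = 0 →
      (∀ᵐ y ∂mu, κ₂ y s = 0) := by
    intro s hs h0
    have hint : ∫⁻ y, κ₂ y s ∂mu = 0 := by
      have h1 : ∫⁻ y, κ₂ y s ∂mu = ν₂ s := by
        rw [← hbind_mu, Measure.bind_apply hs κ₂.measurable.aemeasurable]
      rw [h1]
      exact hν₂null s hs h0
    have := (lintegral_eq_zero_iff (κ₂.measurable_coe hs)).mp hint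
    filter_upwards [this] with y hy using hy
  have hiter_null : ∀ n, ∀ s : Set (Euc d), MeasurableSet s → mu s = 0 →
      (iter κ₂ ν₁ n) s = 0 := by
    intro n
    induction n with
    | zero => exact hν₁null
    | succ n ih =>
        intro s hs h0
        have h1 := hκ₂ae s hs h0
        have hset : MeasurableSet {y : Euc d | ¬ κ₂ y s = 0} := by
          have h2 := (κ₂.measurable_coe hs) (measurableSet_singleton (0 : ℝ≥0∞))
          have h3 : (fun y : Euc d => κ₂ y s) ⁻¹' {0} = {y : Euc d | κ₂ y s = 0} := by
            ext y; simp
          rw [h3] at h2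
          simpa [Set.compl_setOf] using h2.compl
        have hmunull : mu {y : Euc d | ¬ κ₂ y s = 0} = 0 := MeasureTheory.ae_iff.mp h1
        have hiternull : (iter κ₂ ν₁ n) {y : Euc d | ¬ κ₂ y s = 0} = 0 :=
          ih _ hset hmunull
        have hae : ∀ᵐ y ∂(iter κ₂ ν₁ n), κ₂ y s = 0 := MeasureTheory.ae_iff.mpr hiternull
        show (iter κ₂ ν₁ n).bind κ₂ s = 0
        rw [Measure.bind_apply hs κ₂.measurable.aemeasurable]
        refine (lintegral_eq_zero_iff (κ₂.measurable_coe hs)).mpr ?_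
        filter_upwards [hae] with y hy using hy
  -- compact support
  obtain ⟨Kl, hKlc, hKl0⟩ := hl
  obtain ⟨Km, hKmc, hKm0⟩ := hm
  set K := Kl ∪ Km with hKdef
  have hKc : IsCompact K := hKlc.union hKmc
  have hKmeas : MeasurableSet K := hKc.isClosed.measurableSet
  have hlK : lam Kᶜ = 0 :=
    measure_mono_null (compl_subset_compl.mpr subset_union_left) hKl0
  have hmK : mu Kᶜ = 0 :=
    measure_mono_null (compl_subset_compl.mpr subset_union_right) hKm0
  obtain ⟨r, hr⟩ := hKc.isBounded.subset_closedBall 0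
  set R := max r 0 with hRdef
  have hKR : K ⊆ closedBall 0 R :=
    hr.trans (closedBall_subset_closedBall (le_max_left _ _))
  have hR0 : (0:ℝ) ≤ R := le_max_right _ _
  -- the sequence of plans
  set G := seqG κ₂ π₁ with hGdef
  have hGfin : ∀ n, IsFiniteMeasure (G n) := seqG_isFinite κ₂ π₁
  have hGfst : ∀ n, (G n).fst = lam := by
    intro n; rw [hGdef, seqG_fst, hπ₁fst]
  have hGsnd : ∀ n, (G n).snd = iter κ₂ ν₁ n := by
    intro n; rw [hGdef, seqG_snd]
  have hGnull : ∀ n, (G n) ((K ×ˢ K)ᶜ) = 0 := by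
    intro n
    have hsub : (K ×ˢ K)ᶜ ⊆ (Kᶜ ×ˢ (univ : Set (Euc d))) ∪ ((univ : Set (Euc d)) ×ˢ Kᶜ) := by
      intro p hp
      by_cases h1 : p.1 ∈ K
      · right
        refine ⟨trivial, fun h2 => hp ⟨h1, h2⟩⟩
      · left
        exact ⟨h1, trivial⟩
    refine measure_mono_null hsub (measure_union_null ?_ ?_)
    · have h2 : (G n) (Kᶜ ×ˢ (univ : Set (Euc d))) = (G n).fst Kᶜ := by
        rw [Measure.fst_apply hKmeas.compl]
        congr 1
        ext p
        simp [Set.mem_prod]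
      rw [h2, hGfst n, hlK]
    · have h2 : (G n) ((univ : Set (Euc d)) ×ˢ Kᶜ) = (G n).snd Kᶜ := by
        rw [Measure.snd_apply hKmeas.compl]
        congr 1
        ext p
        simp [Set.mem_prod]
      rw [h2, hGsnd n]
      exact hiter_null n _ hKmeas.compl hmK
  set B := ENNReal.ofReal ((2*R)^2) * lam univ with hBdef
  have hBtop : B ≠ ⊤ := ENNReal.mul_ne_top ENNReal.ofReal_ne_top (measure_ne_top lam univ)
  have hGuniv : ∀ n, (G n) univ = lam univ := by
    intro n
    rw [← Measure.fst_univ, hGfst n]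
  have hGcost : ∀ n, cost (G n) ≤ B := by
    intro n
    have hKK : MeasurableSet (K ×ˢ K) := hKmeas.prod hKmeas
    rw [cost, ← lintegral_add_compl cf hKK (μ := G n),
      setLIntegral_measure_zero _ _ (hGnull n), add_zero]
    calc ∫⁻ p in K ×ˢ K, cf p ∂(G n)
        ≤ ∫⁻ _ in K ×ˢ K, ENNReal.ofReal ((2*R)^2) ∂(G n) := by
          refine setLIntegral_mono measurable_const ?_
          intro p hp
          obtain ⟨hp1, hp2⟩ := hp
          have h1 : ‖p.1‖ ≤ R := mem_closedBall_zero_iff.mp (hKR hp1)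
          have h2 : ‖p.2‖ ≤ R := mem_closedBall_zero_iff.mp (hKR hp2)
          have h3 : ‖p.1 - p.2‖ ≤ 2 * R := by
            calc ‖p.1 - p.2‖ ≤ ‖p.1‖ + ‖p.2‖ := norm_sub_le _ _
            _ ≤ 2 * R := by linarith
          exact ENNReal.ofReal_le_ofReal
            (pow_le_pow_left₀ (norm_nonneg _) h3 2)
    _ = ENNReal.ofReal ((2*R)^2) * (G n) (K ×ˢ K) := setLIntegral_const _ _
    _ ≤ ENNReal.ofReal ((2*R)^2) * (G n) univ :=
          mul_le_mul_right (measure_mono (subset_univ _)) _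
    _ = B := by rw [hGuniv n, hBdef]
  -- weights
  set a := ENNReal.ofReal (M / (1+M)) with hadef
  set b := ENNReal.ofReal (1 / (1+M)) with hbdef
  have hb0 : b ≠ 0 := by
    rw [hbdef, Ne, ENNReal.ofReal_eq_zero, not_le]
    positivity
  have ha1 : a < 1 := by
    rw [hadef, ENNReal.ofReal_lt_one, div_lt_one hM1]
    linarith
  have haM : a * ENNReal.ofReal (1 + M) = Me := by
    rw [hadef, hMe, ← ENNReal.ofReal_mul (by positivity)]
    congr 1
    field_simp
  have hb1M : b * ENNReal.ofReal (1 + M) = 1 := by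
    rw [hbdef, ← ENNReal.ofReal_mul (by positivity)]
    rw [one_div, inv_mul_cancel₀ (ne_of_gt hM1)]
    exact ENNReal.ofReal_one
  set w : ℕ → ℝ≥0∞ := fun n => b * a ^ n with hwdef
  have hw_succ : ∀ n, w (n+1) = a * w n := by
    intro n
    show b * a ^ (n+1) = a * (b * a ^ n)
    ring
  have hwsum : ∑' n, w n = 1 := by
    rw [hwdef]
    rw [ENNReal.tsum_mul_left, ENNReal.tsum_geometric]
    have h1a : (1:ℝ≥0∞) - a = b := by
      rw [hadef, hbdef, ← ENNReal.ofReal_one, ← ENNReal.ofReal_sub _ (by positivity)]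
      congr 1
      field_simp
      ring
    rw [h1a]
    exact ENNReal.mul_inv_cancel hb0 ENNReal.ofReal_ne_top
  -- the measure identity
  set σ0 : Measure (Euc d) := ENNReal.ofReal (1+M) • mu with hσ0def
  haveI : IsFiniteMeasure σ0 := mu.smul_finite ENNReal.ofReal_ne_top
  have hσrec : σ0 = ν₁ + a • (σ0.bind κ₂) := by
    rw [hσ0def, bind_smul' κ₂, hbind_mu, smul_smul, haM]
    exact hmarg.symm
  have hsum_a : Measure.sum (fun n => a ^ n • iter κ₂ ν₁ n) = σ0 :=
    sum_iter_eq κ₂ ν₁ σ0 a ha1 hσrec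
  have hsum_w : ∀ s : Set (Euc d), MeasurableSet s →
      ∑' n, w n * (iter κ₂ ν₁ n) s = mu s := by
    intro s hs
    have h1 : ∑' n, a ^ n * (iter κ₂ ν₁ n) s = ENNReal.ofReal (1+M) * mu s := by
      have h2 : (Measure.sum (fun n => a ^ n • iter κ₂ ν₁ n)) s = σ0 s := by rw [hsum_a]
      rw [Measure.sum_apply _ hs] at h2
      simpa [Measure.smul_apply, smul_eq_mul, hσ0def] using h2
    calc ∑' n, w n * (iter κ₂ ν₁ n) s = ∑' n, b * (a ^ n * (iter κ₂ ν₁ n) s) := by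
          congr 1
          ext n
          rw [hwdef]
          ring
    _ = b * ∑' n, a ^ n * (iter κ₂ ν₁ n) s := ENNReal.tsum_mul_left
    _ = b * (ENNReal.ofReal (1+M) * mu s) := by rw [h1]
    _ = mu s := by rw [← mul_assoc, hb1M, one_mul]
  have hmusum : Measure.sum (fun n => w n • iter κ₂ ν₁ n) = mu := by
    ext s hs
    rw [Measure.sum_apply _ hs]
    simp only [Measure.smul_apply, smul_eq_mul]
    exact hsum_w s hs
  -- the candidate coupling
  set Γ := Measure.sum (fun n => w n • G n) with hΓdef
  have hΓfst : Γ.map Prod.fst = lam := by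
    ext s hs
    rw [Measure.map_apply measurable_fst hs, hΓdef,
      Measure.sum_apply _ (measurable_fst hs)]
    have h1 : ∀ n, (w n • G n) (Prod.fst ⁻¹' s) = w n * lam s := by
      intro n
      rw [Measure.smul_apply, smul_eq_mul, ← Measure.fst_apply hs, hGfst n]
    simp_rw [h1]
    rw [ENNReal.tsum_mul_right, hwsum, one_mul]
  have hΓsnd : Γ.map Prod.snd = mu := by
    ext s hs
    rw [Measure.map_apply measurable_snd hs, hΓdef,
      Measure.sum_apply _ (measurable_snd hs)]
    have h1 : ∀ n, (w n • G n) (Prod.snd ⁻¹' s) = w n * (iter κ₂ ν₁ n) s := by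
      intro n
      rw [Measure.smul_apply, smul_eq_mul, ← Measure.snd_apply hs, hGsnd n]
    simp_rw [h1]
    exact hsum_w s hs
  have hΓcost : cost Γ = ∑' n, w n * cost (G n) := by
    rw [cost, hΓdef, lintegral_sum_measure]
    congr 1
    ext n
    rw [lintegral_smul_measure]
    rfl
  set X := cost Γ with hXdef
  have hXB : X ≤ B := by
    rw [hΓcost]
    calc ∑' n, w n * cost (G n) ≤ ∑' n, w n * B :=
          ENNReal.tsum_le_tsum (fun n => mul_le_mul_right (hGcost n) _)
    _ = (∑' n, w n) * B := ENNReal.tsum_mul_right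
    _ = B := by rw [hwsum, one_mul]
  have hXtop : X ≠ ⊤ := ne_top_of_le_ne_top hBtop hXB
  -- the ξ sequence
  set ξ : ℕ → ℝ≥0∞ := fun n => ∫⁻ y, ∫⁻ z, cf (y,z) ∂(κ₂ y) ∂(iter κ₂ ν₁ n) with hξdef
  have hc2meas : Measurable (fun y : Euc d => ∫⁻ z, cf (y, z) ∂(κ₂ y)) := by
    have h1 : Measurable (Function.uncurry fun (y z : Euc d) => cf (y, z)) := measurable_cf
    exact Measurable.lintegral_kernel_prod_right h1
  have hξsum : ∑' n, w n * ξ n = C₂ := by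
    calc ∑' n, w n * ξ n
        = ∫⁻ y, (∫⁻ z, cf (y,z) ∂(κ₂ y)) ∂(Measure.sum fun n => w n • iter κ₂ ν₁ n) := by
          rw [lintegral_sum_measure]
          congr 1
          ext n
          rw [lintegral_smul_measure]
          rfl
    _ = ∫⁻ y, (∫⁻ z, cf (y,z) ∂(κ₂ y)) ∂mu := by rw [hmusum]
    _ = C₂ := by
          rw [hC₂def, cost, ← hdis₂, Measure.lintegral_compProd measurable_cf]
  -- the master inequality
  have hmaster : ∀ t : ℝ, 0 < t →
      X ≤ b * C₁ + a * (ENNReal.ofReal (1+t) * X + ENNReal.ofReal (1+1/t) * C₂) := by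
    intro t ht
    have hstep : ∑' n, w (n+1) * cost (G (n+1))
        ≤ a * (ENNReal.ofReal (1+t) * X + ENNReal.ofReal (1+1/t) * C₂) := by
      calc ∑' n, w (n+1) * cost (G (n+1))
          ≤ ∑' n, ((a * ENNReal.ofReal (1+t)) * (w n * cost (G n))
              + (a * ENNReal.ofReal (1+1/t)) * (w n * ξ n)) := by
            refine ENNReal.tsum_le_tsum (fun n => ?_)
            haveI := hGfin n
            have h2 : cost (G (n+1)) ≤ ENNReal.ofReal (1+t) * cost (G n)
                + ENNReal.ofReal (1+1/t) * ξ n := by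
              have h3 := cost_glue κ₂ (G n) ht
              rw [hGsnd n] at h3
              exact h3
            calc w (n+1) * cost (G (n+1))
                ≤ w (n+1) * (ENNReal.ofReal (1+t) * cost (G n)
                  + ENNReal.ofReal (1+1/t) * ξ n) := mul_le_mul_right h2 _
            _ = (a * ENNReal.ofReal (1+t)) * (w n * cost (G n))
                + (a * ENNReal.ofReal (1+1/t)) * (w n * ξ n) := by
                rw [hw_succ n]
                ring
      _ = (a * ENNReal.ofReal (1+t)) * (∑' n, w n * cost (G n))
          + (a * ENNReal.ofReal (1+1/t)) * (∑' n, w n * ξ n) := by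
            rw [ENNReal.tsum_add, ENNReal.tsum_mul_left, ENNReal.tsum_mul_left]
      _ = a * (ENNReal.ofReal (1+t) * X + ENNReal.ofReal (1+1/t) * C₂) := by
            rw [hξsum, ← hΓcost]
            ring
    calc X = ∑' n, w n * cost (G n) := hΓcost
    _ = w 0 * cost (G 0) + ∑' n, w (n+1) * cost (G (n+1)) :=
        tsum_eq_zero_add' ENNReal.summable
    _ ≤ b * C₁ + a * (ENNReal.ofReal (1+t) * X + ENNReal.ofReal (1+1/t) * C₂) := by
        refine add_le_add ?_ hstep
        have hw0 : w 0 = b := by rw [hwdef]; simp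
        have hG0 : cost (G 0) = C₁ := rfl
        rw [hw0, hG0]
  -- pass to real numbers
  set xR := X.toReal with hxRdef
  set c1R := C₁.toReal with hc1Rdef
  set c2R := C₂.toReal with hc2Rdef
  have hHreal : ∀ t : ℝ, 0 < t → xR - M * t * xR ≤ c1R + M * c2R + (M / t) * c2R := by
    intro t ht
    have h := hmaster t ht
    have hrhs_top : b * C₁ + a * (ENNReal.ofReal (1+t) * X + ENNReal.ofReal (1+1/t) * C₂) ≠ ⊤ := by
      apply ENNReal.add_ne_top.mpr
      constructor
      · exact ENNReal.mul_ne_top ENNReal.ofReal_ne_top hC₁top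
      · apply ENNReal.mul_ne_top ENNReal.ofReal_ne_top
        apply ENNReal.add_ne_top.mpr
        exact ⟨ENNReal.mul_ne_top ENNReal.ofReal_ne_top hXtop,
          ENNReal.mul_ne_top ENNReal.ofReal_ne_top hC₂top⟩
    have h2 := ENNReal.toReal_mono hrhs_top h
    have hrhs : (b * C₁ + a * (ENNReal.ofReal (1+t) * X + ENNReal.ofReal (1+1/t) * C₂)).toReal
        = (1/(1+M)) * c1R + (M/(1+M)) * ((1+t)*xR + (1+1/t)*c2R) := by
      rw [ENNReal.toReal_add (ENNReal.mul_ne_top ENNReal.ofReal_ne_top hC₁top)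
        (ENNReal.mul_ne_top ENNReal.ofReal_ne_top (ENNReal.add_ne_top.mpr
          ⟨ENNReal.mul_ne_top ENNReal.ofReal_ne_top hXtop,
            ENNReal.mul_ne_top ENNReal.ofReal_ne_top hC₂top⟩))]
      rw [ENNReal.toReal_mul, ENNReal.toReal_mul,
        ENNReal.toReal_add (ENNReal.mul_ne_top ENNReal.ofReal_ne_top hXtop)
          (ENNReal.mul_ne_top ENNReal.ofReal_ne_top hC₂top),
        ENNReal.toReal_mul, ENNReal.toReal_mul]
      have hbR : b.toReal = 1/(1+M) := by
        rw [hbdef]; exact ENNReal.toReal_ofReal (by positivity)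
      have haR : a.toReal = M/(1+M) := by
        rw [hadef]; exact ENNReal.toReal_ofReal (by positivity)
      rw [hbR, haR, ENNReal.toReal_ofReal (by positivity : (0:ℝ) ≤ 1 + t),
        ENNReal.toReal_ofReal (by positivity : (0:ℝ) ≤ 1 + 1/t),
        ← hxRdef, ← hc1Rdef, ← hc2Rdef]
    rw [hrhs] at h2
    -- h2 : xR ≤ (1/(1+M)) * c1R + (M/(1+M)) * ((1+t)*xR + (1+1/t)*c2R)
    have h3 := mul_le_mul_of_nonneg_left h2 hM1.le
    have hexp : (1+M) * ((1/(1+M)) * c1R + (M/(1+M)) * ((1+t)*xR + (1+1/t)*c2R))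
        = c1R + (M*xR + M*t*xR) + (M*c2R + (M/t)*c2R) := by
      field_simp
      ring
    rw [hexp] at h3
    have hexp2 : (1+M) * xR = xR + M*xR := by ring
    rw [hexp2] at h3
    linarith
  have hxRS := real_master hM ENNReal.toReal_nonneg ENNReal.toReal_nonneg
    ENNReal.toReal_nonneg hHreal
  -- conclude
  have hW : W2 lam mu ≤ X :=
    iInf₂_le Γ ⟨hΓfst, hΓsnd⟩
  calc W2 lam mu ≤ X := hW
  _ = ENNReal.ofReal xR := (ENNReal.ofReal_toReal hXtop).symm
  _ ≤ ENNReal.ofReal ((Real.sqrt (1+M) + Real.sqrt M)^2 * (c1R + M * c2R)) :=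
      ENNReal.ofReal_le_ofReal hxRS
  _ = ENNReal.ofReal ((Real.sqrt (1+M) + Real.sqrt M)^2)
      * ENNReal.ofReal (c1R + M * c2R) := ENNReal.ofReal_mul (by positivity)
  _ = ENNReal.ofReal ((Real.sqrt (1+M) + Real.sqrt M)^2) * cost π := by
      congr 1
      have hc1 : ENNReal.ofReal c1R = C₁ := by
        rw [hc1Rdef]; exact ENNReal.ofReal_toReal hC₁top
      have hc2 : ENNReal.ofReal c2R = C₂ := by
        rw [hc2Rdef]; exact ENNReal.ofReal_toReal hC₂top
      rw [ENNReal.ofReal_add ENNReal.toReal_nonneg (by positivity),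
        ENNReal.ofReal_mul hM.le, hc1, hc2, ← hMe, hcost_split]

end WScaling

open WScaling

/-- The scaling inequality `W(λ, μ) ≤ (√(1+M) − √M)⁻¹ W(λ + Mμ, (1+M)μ)`. -/
theorem wasserstein_scaling {d : ℕ} (lam mu : Measure (Euc d))
    [IsFiniteMeasure lam] [IsFiniteMeasure mu]
    (hl : HasCompactSupp lam) (hm : HasCompactSupp mu)
    (hmass : lam univ = mu univ)
    (M : ℝ) (hM : 0 ≤ M) :
    (W2 lam mu) ^ (1/2 : ℝ)
      ≤ ENNReal.ofReal ((Real.sqrt (1 + M) - Real.sqrt M)⁻¹) *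
        (W2 (lam + ENNReal.ofReal M • mu) (ENNReal.ofReal (1 + M) • mu)) ^ (1/2 : ℝ) := by
  by_cases hM0 : M = 0
  · subst hM0
    simp only [ENNReal.ofReal_zero, zero_smul, add_zero, Real.sqrt_zero, sub_zero,
      Real.sqrt_one, inv_one, ENNReal.ofReal_one, one_mul]
    have h1 : (1:ℝ≥0∞) • mu = mu := one_smul _ _
    rw [h1]
  · have hMpos : 0 < M := lt_of_le_of_ne hM (Ne.symm hM0)
    have hM1 : (0:ℝ) < 1 + M := by linarith
    set u := Real.sqrt M with hu
    set v := Real.sqrt (1 + M) with hv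
    have hu0 : 0 < u := Real.sqrt_pos.mpr hMpos
    have hv0 : 0 < v := Real.sqrt_pos.mpr hM1
    have hu2 : u ^ 2 = M := Real.sq_sqrt hMpos.le
    have hv2 : v ^ 2 = 1 + M := Real.sq_sqrt hM1.le
    have he1 : (v - u) * (v + u) = 1 := by linear_combination hv2 - hu2
    have hcpos : 0 < v - u := by nlinarith
    have hcinv : (v - u)⁻¹ = v + u := inv_eq_of_mul_eq_one_right he1
    set S := (v + u) ^ 2 with hS
    have hS0 : ENNReal.ofReal S ≠ 0 := by
      rw [Ne, ENNReal.ofReal_eq_zero, not_le, hS]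
      positivity
    set W' := W2 (lam + ENNReal.ofReal M • mu) (ENNReal.ofReal (1 + M) • mu) with hW'
    have hSQ : W2 lam mu ≤ ENNReal.ofReal S * W' := by
      conv_rhs => rw [hW', W2]
      rw [ENNReal.mul_iInf_of_ne hS0 ENNReal.ofReal_ne_top]
      refine le_iInf fun π => ?_
      rw [ENNReal.mul_iInf_of_ne hS0 ENNReal.ofReal_ne_top]
      refine le_iInf fun hπ => ?_
      by_cases hcost : (∫⁻ p, ENNReal.ofReal (‖p.1 - p.2‖ ^ 2) ∂π) = ⊤
      · rw [hcost, ENNReal.mul_top hS0]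
        exact le_top
      · exact key lam mu hl hm hMpos π hπ hcost
    have hhalf : (0:ℝ) ≤ 1/2 := by norm_num
    calc (W2 lam mu) ^ (1/2:ℝ) ≤ (ENNReal.ofReal S * W') ^ (1/2:ℝ) :=
          ENNReal.rpow_le_rpow hSQ hhalf
    _ = (ENNReal.ofReal S) ^ (1/2:ℝ) * W' ^ (1/2:ℝ) :=
          ENNReal.mul_rpow_of_nonneg _ _ hhalf
    _ = ENNReal.ofReal ((v - u)⁻¹) * W' ^ (1/2:ℝ) := by
          congr 1
          have h2 : ENNReal.ofReal S = (ENNReal.ofReal (v + u)) ^ (2:ℕ) := by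
            rw [hS, ← ENNReal.ofReal_pow (by positivity)]
          rw [h2, ← ENNReal.rpow_natCast (ENNReal.ofReal (v + u)) 2, ← ENNReal.rpow_mul]
          norm_num
          rw [hcinv]

end
end
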